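/- arXiv:2301.13704 — 11 statements merged into one kernel-verified Lean document; each statement's English description precedes it below -/
import Mathlib

section
/- Suppose A is a unit of ZMod m with inverse A⁻¹ and B is nilpotent, say B^k = 0 for a natural number k. Then the equation B * X (n+1) = A * X n + F n (for all n ∈ ℕ) has exactly one solution X : ℕ → ZMod m, namely X n = - ∑_{s=0}^{k-1} (A⁻¹)^(s+1) * B^s * F (n+s) for all n ∈ ℕ. -/
theorem stmt_6 (m : ℕ) (hm : 2 ≤ m) (a b : ℤ) (f : ℕ → ℤ)
    (A B : ZMod m) (hA : A = (a : ZMod m)) (hB : B = (b : ZMod m))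
    (F : ℕ → ZMod m) (hF : ∀ n, F n = (f n : ZMod m))
    (Ainv : ZMod m) (hAinv : A * Ainv = 1)
    (k : ℕ) (hk : B ^ k = 0) :
    (∀ n : ℕ,
      B * (fun n => - ∑ s ∈ Finset.range k, Ainv ^ (s + 1) * B ^ s * F (n + s)) (n + 1) =
        A * (fun n => - ∑ s ∈ Finset.range k, Ainv ^ (s + 1) * B ^ s * F (n + s)) n + F n) ∧
    (∀ X : ℕ → ZMod m, (∀ n : ℕ, B * X (n + 1) = A * X n + F n) →
      X = fun n => - ∑ s ∈ Finset.range k, Ainv ^ (s + 1) * B ^ s * F (n + s)) := by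
  haveI : Fact (1 < m) := ⟨hm⟩
  obtain ⟨k', rfl⟩ : ∃ k', k = k' + 1 := by
    cases k with
    | zero => simp at hk
    | succ k' => exact ⟨k', rfl⟩
  constructor
  · intro n
    simp only
    have h1 : B * -(∑ s ∈ Finset.range (k'+1), Ainv ^ (s+1) * B ^ s * F (n+1+s))
        = -(∑ s ∈ Finset.range (k'+1), Ainv ^ (s+1) * B ^ (s+1) * F (n+1+s)) := by
      rw [mul_neg, Finset.mul_sum]
      congr 1
      exact Finset.sum_congr rfl fun s _ => by ring
    have h2 : A * -(∑ s ∈ Finset.range (k'+1), Ainv ^ (s+1) * B ^ s * F (n+s))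
        = -(∑ s ∈ Finset.range (k'+1), Ainv ^ s * B ^ s * F (n+s)) := by
      rw [mul_neg, Finset.mul_sum]
      congr 1
      refine Finset.sum_congr rfl fun s _ => ?_
      rw [← mul_assoc, ← mul_assoc, pow_succ', ← mul_assoc, hAinv, one_mul]
    rw [h1, h2, Finset.sum_range_succ, Finset.sum_range_succ' _ k', hk]
    simp only [mul_zero, zero_mul, add_zero, pow_zero, one_mul]
    have h3 : ∀ s : ℕ, n + 1 + s = n + (s + 1) := fun s => by omega
    simp only [h3]
    ring
  · intro X hX
    funext n
    have step : ∀ j, X j = Ainv * B * X (j+1) - Ainv * F j := by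
      intro j
      have h := hX j
      have hinv : Ainv * A = 1 := by rw [mul_comm]; exact hAinv
      linear_combination - Ainv * h - X j * hinv
    have main : ∀ j n, X n = Ainv ^ j * B ^ j * X (n+j)
        - ∑ s ∈ Finset.range j, Ainv ^ (s+1) * B ^ s * F (n+s) := by
      intro j
      induction j with
      | zero => intro n; simp
      | succ j ih =>
        intro n
        rw [ih n, step (n+j), Finset.sum_range_succ]
        ring_nf
    rw [main (k'+1) n, hk]
    ring
end

section
/- Assume d ≠ 1 and d ∣ f n for all n ∈ ℕ. A sequence X : ℕ → ZMod m with X n = (x n : ZMod m) for integers x n is a solution of B * X (n+1) = A * X n + F n (for all n) if and only if there exist a sequence x' : ℕ → ℤ such that ((x' n : ZMod m'))_{n} is a solution of (b/d : ZMod m') * X' (n+1) = (a/d : ZMod m') * X' n + (f n / d : ZMod m') for all n, and a sequence α : ℕ → ℕ with α n < d for all n, such that X n = ((x' n + α n * m' : ℤ) : ZMod m) for all n. Moreover, if one additionally requires 0 ≤ x' n < m' for all n, then the sequences x' and α are uniquely determined by the solution X. -/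
private lemma keycong (m d m' : ℕ) (hmdm : m = d * m') (hd0 : 0 < d)
    (a b fn : ℤ) (hda : (d:ℤ) ∣ a) (hdb : (d:ℤ) ∣ b) (hdf : (d:ℤ) ∣ fn)
    (x0 x1 : ℤ) :
    b * x1 ≡ a * x0 + fn [ZMOD (m:ℤ)] ↔
      (b / d) * x1 ≡ (a / d) * x0 + fn / d [ZMOD (m':ℤ)] := by
  obtain ⟨a', ha⟩ := hda
  obtain ⟨b', hb⟩ := hdb
  obtain ⟨f', hf⟩ := hdf
  have hdz : (d:ℤ) ≠ 0 := by exact_mod_cast hd0.ne'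
  subst ha hb hf
  rw [Int.mul_ediv_cancel_left _ hdz, Int.mul_ediv_cancel_left _ hdz,
    Int.mul_ediv_cancel_left _ hdz]
  rw [Int.modEq_iff_dvd, Int.modEq_iff_dvd]
  have hcast : (m:ℤ) = (d:ℤ) * (m':ℤ) := by exact_mod_cast congrArg (Nat.cast : ℕ → ℤ) hmdm
  rw [hcast]
  constructor
  · intro h
    have : (d:ℤ) * (m':ℤ) ∣ (d:ℤ) * ((a' * x0 + f') - b' * x1) := by
      convert h using 1; ring
    exact (mul_dvd_mul_iff_left hdz).mp this
  · intro h
    have : (d:ℤ) * (m':ℤ) ∣ (d:ℤ) * ((a' * x0 + f') - b' * x1) :=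
      mul_dvd_mul_left _ h
    convert this using 1; ring

theorem stmt_7 (m : ℕ) (hm : 2 ≤ m) (a b : ℤ) (f : ℕ → ℤ)
    (d : ℕ) (hdval : d = Int.gcd a (Int.gcd b (m : ℤ)))
    (m' : ℕ) (hm' : m' = m / d)
    (hd : d ≠ 1) (hdf : ∀ n : ℕ, (d : ℤ) ∣ f n)
    (x : ℕ → ℤ) :
    let A : ZMod m := (a : ZMod m)
    let B : ZMod m := (b : ZMod m)
    let F : ℕ → ZMod m := fun n => (f n : ZMod m)
    let X : ℕ → ZMod m := fun n => (x n : ZMod m)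
    -- the solutions of the original equation correspond to solutions of the reduced
    -- equation shifted by multiples of m'
    ((∀ n : ℕ, B * X (n + 1) = A * X n + F n) ↔
      (∃ (x' : ℕ → ℤ) (α : ℕ → ℕ),
        (∀ n : ℕ, ((b / (d : ℤ) : ℤ) : ZMod m') * ((x' (n + 1) : ℤ) : ZMod m') =
          ((a / (d : ℤ) : ℤ) : ZMod m') * ((x' n : ℤ) : ZMod m') +
          ((f n / (d : ℤ) : ℤ) : ZMod m')) ∧
        (∀ n : ℕ, α n < d) ∧
        (∀ n : ℕ, X n = ((x' n + (α n : ℤ) * (m' : ℤ) : ℤ) : ZMod m)))) ∧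
    -- uniqueness of the representation when the representatives x' are normalized
    (∀ (x' : ℕ → ℤ) (α : ℕ → ℕ) (x'' : ℕ → ℤ) (α'' : ℕ → ℕ),
      (∀ n : ℕ, ((b / (d : ℤ) : ℤ) : ZMod m') * ((x' (n + 1) : ℤ) : ZMod m') =
          ((a / (d : ℤ) : ℤ) : ZMod m') * ((x' n : ℤ) : ZMod m') +
          ((f n / (d : ℤ) : ℤ) : ZMod m')) →
      (∀ n : ℕ, α n < d) →
      (∀ n : ℕ, 0 ≤ x' n ∧ x' n < (m' : ℤ)) →
      (∀ n : ℕ, X n = ((x' n + (α n : ℤ) * (m' : ℤ) : ℤ) : ZMod m)) →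
      (∀ n : ℕ, ((b / (d : ℤ) : ℤ) : ZMod m') * ((x'' (n + 1) : ℤ) : ZMod m') =
          ((a / (d : ℤ) : ℤ) : ZMod m') * ((x'' n : ℤ) : ZMod m') +
          ((f n / (d : ℤ) : ℤ) : ZMod m')) →
      (∀ n : ℕ, α'' n < d) →
      (∀ n : ℕ, 0 ≤ x'' n ∧ x'' n < (m' : ℤ)) →
      (∀ n : ℕ, X n = ((x'' n + (α'' n : ℤ) * (m' : ℤ) : ℤ) : ZMod m)) →
      x' = x'' ∧ α = α'') := by
  intro A B F X
  -- basic divisibility facts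
  have hmz : (m:ℤ) ≠ 0 := by exact_mod_cast (by omega : m ≠ 0)
  have hgbm : 0 < Int.gcd b (m:ℤ) := Int.gcd_pos_iff.mpr (Or.inr hmz)
  have hd0 : 0 < d := by
    rw [hdval]
    exact Int.gcd_pos_iff.mpr (Or.inr (by exact_mod_cast hgbm.ne'))
  have hdz : (d:ℤ) ≠ 0 := by exact_mod_cast hd0.ne'
  have hda : (d:ℤ) ∣ a := hdval ▸ Int.gcd_dvd_left _ _
  have hdg : (d:ℤ) ∣ (Int.gcd b (m:ℤ) : ℤ) := hdval ▸ Int.gcd_dvd_right _ _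
  have hdb : (d:ℤ) ∣ b := hdg.trans (Int.gcd_dvd_left _ _)
  have hdmz : (d:ℤ) ∣ (m:ℤ) := hdg.trans (Int.gcd_dvd_right _ _)
  have hdm : d ∣ m := by exact_mod_cast hdmz
  have hmdm : m = d * m' := by rw [hm']; exact (Nat.mul_div_cancel' hdm).symm
  have hm'0 : 0 < m' := by
    rcases Nat.eq_zero_or_pos m' with h | h
    · rw [h, mul_zero] at hmdm; omega
    · exact h
  have hm'z : (m':ℤ) ≠ 0 := by exact_mod_cast hm'0.ne'
  have hm'pos : (0:ℤ) < (m':ℤ) := by exact_mod_cast hm'0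
  have hm'dvdm : (m':ℤ) ∣ (m:ℤ) := ⟨d, by exact_mod_cast (by rw [hmdm]; ring : m = m' * d)⟩
  -- reformulate equations as integer congruences
  have heq : ∀ n, (B * X (n + 1) = A * X n + F n) ↔
      b * x (n+1) ≡ a * x n + f n [ZMOD (m:ℤ)] := by
    intro n
    show (b : ZMod m) * ((x (n+1) : ℤ) : ZMod m) = (a : ZMod m) * ((x n : ℤ) : ZMod m) + ((f n : ℤ) : ZMod m) ↔ _
    rw [← Int.cast_mul, ← Int.cast_mul, ← Int.cast_add, ZMod.intCast_eq_intCast_iff]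
  have heq' : ∀ (y1 y0 : ℤ) (n : ℕ),
      (((b / (d : ℤ) : ℤ) : ZMod m') * ((y1 : ℤ) : ZMod m') =
        ((a / (d : ℤ) : ℤ) : ZMod m') * ((y0 : ℤ) : ZMod m') +
        ((f n / (d : ℤ) : ℤ) : ZMod m')) ↔
      (b / d) * y1 ≡ (a / d) * y0 + f n / d [ZMOD (m':ℤ)] := by
    intro y1 y0 n
    rw [← Int.cast_mul, ← Int.cast_mul, ← Int.cast_add, ZMod.intCast_eq_intCast_iff]
  have hX : ∀ (y0 : ℤ) (α0 : ℕ) (n : ℕ),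
      (X n = ((y0 + (α0 : ℤ) * (m' : ℤ) : ℤ) : ZMod m)) ↔
      x n ≡ y0 + (α0 : ℤ) * (m':ℤ) [ZMOD (m:ℤ)] := by
    intro y0 α0 n
    show ((x n : ℤ) : ZMod m) = _ ↔ _
    rw [ZMod.intCast_eq_intCast_iff]
  constructor
  · -- the equivalence
    constructor
    · intro hsol
      refine ⟨fun n => x n % (m':ℤ), fun n => ((x n / (m':ℤ)) % (d:ℤ)).toNat, ?_, ?_, ?_⟩
      · intro n
        beta_reduce
        rw [heq']
        have hcong : ∀ k, x k % (m':ℤ) ≡ x k [ZMOD (m':ℤ)] := fun k =>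
          Int.emod_emod_of_dvd _ dvd_rfl
        have := (keycong m d m' hmdm hd0 a b (f n) hda hdb (hdf n) (x n) (x (n+1))).mp
          ((heq n).mp (hsol n))
        calc (b/d) * (x (n+1) % (m':ℤ)) ≡ (b/d) * x (n+1) [ZMOD (m':ℤ)] :=
              (hcong (n+1)).mul_left _
          _ ≡ (a/d) * x n + f n / d [ZMOD (m':ℤ)] := this
          _ ≡ (a/d) * (x n % (m':ℤ)) + f n / d [ZMOD (m':ℤ)] :=
              Int.ModEq.add_right _ (((hcong n).mul_left _).symm)
      · intro n
        have h1 : 0 ≤ (x n / (m':ℤ)) % (d:ℤ) := Int.emod_nonneg _ hdz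
        have h2 : (x n / (m':ℤ)) % (d:ℤ) < (d:ℤ) := Int.emod_lt_of_pos _ (by exact_mod_cast hd0)
        beta_reduce
        omega
      · intro n
        beta_reduce
        rw [hX]
        have ht : (((x n / (m':ℤ)) % (d:ℤ)).toNat : ℤ) = (x n / (m':ℤ)) % (d:ℤ) :=
          Int.toNat_of_nonneg (Int.emod_nonneg _ hdz)
        rw [Int.modEq_iff_dvd]
        refine ⟨-(x n / (m':ℤ) / (d:ℤ)), ?_⟩
        have h1 := Int.mul_ediv_add_emod (x n) (m':ℤ)
        have h2 := Int.mul_ediv_add_emod (x n / (m':ℤ)) (d:ℤ)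
        have hcast : (m:ℤ) = (d:ℤ) * (m':ℤ) := by exact_mod_cast congrArg (Nat.cast : ℕ → ℤ) hmdm
        rw [ht, hcast]
        linear_combination h1 + (m':ℤ) * h2
    · rintro ⟨x', α, hred, hα, hrep⟩
      intro n
      rw [heq]
      rw [keycong m d m' hmdm hd0 a b (f n) hda hdb (hdf n) (x n) (x (n+1))]
      have hcong : ∀ k, x k ≡ x' k [ZMOD (m':ℤ)] := by
        intro k
        have := ((hX (x' k) (α k) k).mp (hrep k)).of_dvd hm'dvdm
        calc x k ≡ x' k + (α k : ℤ) * (m':ℤ) [ZMOD (m':ℤ)] := this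
          _ ≡ x' k + 0 [ZMOD (m':ℤ)] :=
              Int.ModEq.add_left _ (Int.modEq_zero_iff_dvd.mpr
                (dvd_mul_left (m':ℤ) ((α k : ℤ))))
          _ = x' k := by ring
      have hr := (heq' (x' (n+1)) (x' n) n).mp (hred n)
      calc (b/d) * x (n+1) ≡ (b/d) * x' (n+1) [ZMOD (m':ℤ)] := (hcong (n+1)).mul_left _
        _ ≡ (a/d) * x' n + f n / d [ZMOD (m':ℤ)] := hr
        _ ≡ (a/d) * x n + f n / d [ZMOD (m':ℤ)] :=
            Int.ModEq.add_right _ ((hcong n).mul_left _).symm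
  · -- uniqueness
    intro x' α x'' α'' _ hα' hb' hr' _ hα'' hb'' hr''
    have key : ∀ n, x' n = x'' n ∧ α n = α'' n := by
      intro n
      have h1 := (hX (x' n) (α n) n).mp (hr' n)
      have h2 := (hX (x'' n) (α'' n) n).mp (hr'' n)
      have hc : x' n + (α n : ℤ) * (m':ℤ) ≡ x'' n + (α'' n : ℤ) * (m':ℤ) [ZMOD (m:ℤ)] :=
        h1.symm.trans h2
      have hcast : (m:ℤ) = (d:ℤ) * (m':ℤ) := by exact_mod_cast congrArg (Nat.cast : ℕ → ℤ) hmdm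
      have hb1 := hb' n
      have hb2 := hb'' n
      have hαd1 : ((α n : ℤ)) ≤ (d:ℤ) - 1 := by have := hα' n; omega
      have hαd2 : ((α'' n : ℤ)) ≤ (d:ℤ) - 1 := by have := hα'' n; omega
      have hbound1 : 0 ≤ x' n + (α n : ℤ) * (m':ℤ) ∧ x' n + (α n : ℤ) * (m':ℤ) < (m:ℤ) := by
        constructor
        · have : (0:ℤ) ≤ (α n : ℤ) * (m':ℤ) := mul_nonneg (by positivity) (le_of_lt hm'pos)
          linarith [hb1.1]
        · rw [hcast]
          nlinarith [hb1.2, hm'pos]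
      have hbound2 : 0 ≤ x'' n + (α'' n : ℤ) * (m':ℤ) ∧ x'' n + (α'' n : ℤ) * (m':ℤ) < (m:ℤ) := by
        constructor
        · have : (0:ℤ) ≤ (α'' n : ℤ) * (m':ℤ) := mul_nonneg (by positivity) (le_of_lt hm'pos)
          linarith [hb2.1]
        · rw [hcast]
          nlinarith [hb2.2, hm'pos]
      have heqv : x' n + (α n : ℤ) * (m':ℤ) = x'' n + (α'' n : ℤ) * (m':ℤ) := by
        have := hc
        unfold Int.ModEq at this
        rwa [Int.emod_eq_of_lt hbound1.1 hbound1.2, Int.emod_eq_of_lt hbound2.1 hbound2.2] at this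
      have hx : x' n = x'' n := by
        have e1 : (x' n + (α n : ℤ) * (m':ℤ)) % (m':ℤ) = x' n :=
          by rw [Int.add_mul_emod_self_right]; exact Int.emod_eq_of_lt hb1.1 hb1.2
        have e2 : (x'' n + (α'' n : ℤ) * (m':ℤ)) % (m':ℤ) = x'' n :=
          by rw [Int.add_mul_emod_self_right]; exact Int.emod_eq_of_lt hb2.1 hb2.2
        rw [← e1, ← e2, heqv]
      refine ⟨hx, ?_⟩
      have : (α n : ℤ) * (m':ℤ) = (α'' n : ℤ) * (m':ℤ) := by
        rw [hx] at heqv; linarith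
      have := mul_right_cancel₀ hm'z this
      exact_mod_cast this
    exact ⟨funext fun n => (key n).1, funext fun n => (key n).2⟩
end

section
/- The initial problem B * X (n+1) = A * X n + F n (for all n ∈ ℕ) together with X 0 = Y₀ has exactly one solution X : ℕ → ZMod m if and only if d = 1 and either m₂ = 1, or m₂ ≠ 1 and (y₀ : ZMod m₂) = - ∑_{s=0}^{k-1} ((a : ZMod m₂)⁻¹)^(s+1) * (b : ZMod m₂)^s * (f s : ZMod m₂), where k is any natural number with (b : ZMod m₂)^k = 0. -/
section aux
variable {R : Type*} [CommRing R]

theorem my_sol_unique_nilpotent {A B : R} (hA : IsUnit A) {k : ℕ} (hB : B ^ k = 0)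
    {F : ℕ → R} {X X' : ℕ → R}
    (hX : ∀ n, B * X (n + 1) = A * X n + F n)
    (hX' : ∀ n, B * X' (n + 1) = A * X' n + F n) : X = X' := by
  funext n
  set D : ℕ → R := fun n => X n - X' n with hD
  have key : ∀ j n, A ^ j * D n = B ^ j * D (n + j) := by
    intro j
    induction j with
    | zero => simp
    | succ j ih =>
      intro n
      have h1 : B * D (n + 1) = A * D n := by
        simp only [hD, mul_sub, hX n, hX' n]; ring
      have harg : n + 1 + j = n + (j + 1) := by omega
      calc A ^ (j+1) * D n = A ^ j * (A * D n) := by ring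
        _ = A ^ j * (B * D (n + 1)) := by rw [h1]
        _ = B * (A ^ j * D (n + 1)) := by ring
        _ = B * (B ^ j * D (n + 1 + j)) := by rw [ih]
        _ = B ^ (j+1) * D (n + (j + 1)) := by rw [harg, pow_succ]; ring
  have h0 : A ^ k * D n = 0 := by rw [key k n, hB, zero_mul]
  have h1 : D n = 0 := (hA.pow k).mul_right_eq_zero.mp h0
  exact sub_eq_zero.mp h1

theorem my_sol_exists_nilpotent {A B : R} (hA : IsUnit A) {k : ℕ} (hB : B ^ k = 0)
    (F : ℕ → R) (X : ℕ → R)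
    (hXdef : ∀ n, X n = -∑ s ∈ Finset.range k,
        (Ring.inverse A) ^ (s + 1) * B ^ s * F (n + s)) :
    ∀ n, B * X (n + 1) = A * X n + F n := by
  intro n
  rcases k with _ | k
  · have h01 : (0 : R) = 1 := by simpa using hB.symm
    haveI := subsingleton_of_zero_eq_one h01
    exact Subsingleton.elim _ _
  · rw [hXdef, hXdef, mul_neg, mul_neg, Finset.mul_sum, Finset.mul_sum]
    have hL : ∀ s, B * ((Ring.inverse A) ^ (s + 1) * B ^ s * F (n + 1 + s))
        = (Ring.inverse A) ^ (s + 1) * B ^ (s + 1) * F (n + (s + 1)) := by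
      intro s
      have : n + 1 + s = n + (s + 1) := by omega
      rw [this, pow_succ]; ring
    have hR : ∀ s, A * ((Ring.inverse A) ^ (s + 1) * B ^ s * F (n + s))
        = (Ring.inverse A) ^ s * B ^ s * F (n + s) := by
      intro s
      rw [pow_succ']
      calc A * (Ring.inverse A * (Ring.inverse A) ^ s * B ^ s * F (n + s))
          = (A * Ring.inverse A) * ((Ring.inverse A) ^ s * B ^ s * F (n + s)) := by ring
        _ = (Ring.inverse A) ^ s * B ^ s * F (n + s) := by
            rw [Ring.mul_inverse_cancel A hA, one_mul]
    rw [Finset.sum_congr rfl fun s _ => hL s, Finset.sum_congr rfl fun s _ => hR s]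
    rw [Finset.sum_range_succ, Finset.sum_range_succ']
    have hz : (Ring.inverse A) ^ (k + 1) * B ^ (k + 1) * F (n + (k + 1)) = 0 := by
      rw [hB, mul_zero, zero_mul]
    rw [hz]
    simp only [pow_zero, one_mul, add_zero, Nat.add_zero]
    ring

theorem my_sol0_nilpotent {A B : R} (hA : IsUnit A) {k : ℕ} (hB : B ^ k = 0)
    {F : ℕ → R} {X : ℕ → R} (hX : ∀ n, B * X (n + 1) = A * X n + F n) :
    X 0 = -∑ s ∈ Finset.range k, (Ring.inverse A) ^ (s + 1) * B ^ s * F s := by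
  set Xe : ℕ → R := fun n =>
    -∑ s ∈ Finset.range k, (Ring.inverse A) ^ (s + 1) * B ^ s * F (n + s) with hXe
  have h1 := my_sol_exists_nilpotent hA hB F Xe (fun n => rfl)
  have h2 := my_sol_unique_nilpotent hA hB hX h1
  rw [h2]
  simp [hXe]

theorem my_sol_unit {B : R} (hB : IsUnit B) (A : R) (F : ℕ → R) (Y : R) :
    ∃! X : ℕ → R, X 0 = Y ∧ ∀ n, B * X (n + 1) = A * X n + F n := by
  set X : ℕ → R := fun n => Nat.rec Y (fun n x => Ring.inverse B * (A * x + F n)) n with hX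
  refine ⟨X, ⟨rfl, ?_⟩, ?_⟩
  · intro n
    show B * (Ring.inverse B * (A * X n + F n)) = A * X n + F n
    rw [Ring.mul_inverse_cancel_left _ _ hB]
  · rintro X' ⟨h0, hrec⟩
    funext n
    induction n with
    | zero => exact h0
    | succ n ih =>
      have h1 : B * X' (n + 1) = B * X (n + 1) := by
        rw [hrec n, ih]
        show A * X n + F n = B * (Ring.inverse B * (A * X n + F n))
        rw [Ring.mul_inverse_cancel_left _ _ hB]
      exact hB.mul_left_cancel h1

theorem my_existsUnique_prod {α β : Type*} {P : α → Prop} {Q : β → Prop} :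
    (∃! p : α × β, P p.1 ∧ Q p.2) ↔ (∃! a, P a) ∧ (∃! b, Q b) := by
  constructor
  · rintro ⟨⟨a, b⟩, ⟨hP, hQ⟩, hu⟩
    exact ⟨⟨a, hP, fun a' h => congrArg Prod.fst (hu (a', b) ⟨h, hQ⟩)⟩,
           ⟨b, hQ, fun b' h => congrArg Prod.snd (hu (a, b') ⟨hP, h⟩)⟩⟩
  · rintro ⟨⟨a, ha, hua⟩, ⟨b, hb, hub⟩⟩
    exact ⟨(a, b), ⟨ha, hb⟩, fun p ⟨h1, h2⟩ => Prod.ext (hua p.1 h1) (hub p.2 h2)⟩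

theorem my_existsUnique_equiv {α β : Sort*} (E : α ≃ β) {p : α → Prop} :
    (∃! a, p a) ↔ ∃! b, p (E.symm b) := by
  constructor
  · rintro ⟨a, ha, hu⟩
    refine ⟨E a, by simpa using ha, fun b hb => ?_⟩
    have := hu _ hb
    rw [← this, E.apply_symm_apply]
  · rintro ⟨b, hb, hu⟩
    refine ⟨E.symm b, hb, fun a ha => ?_⟩
    have := hu (E a) (by simpa using ha)
    simpa using congrArg E.symm this

theorem my_transport {R S T : Type*} [CommRing R] [CommRing S] [CommRing T]
    (e : R ≃+* S × T) (A B Y : R) (F : ℕ → R) :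
    (∃! X : ℕ → R, X 0 = Y ∧ ∀ n, B * X (n + 1) = A * X n + F n) ↔
      ((∃! X : ℕ → S, X 0 = (e Y).1 ∧
          ∀ n, (e B).1 * X (n + 1) = (e A).1 * X n + (e (F n)).1) ∧
       (∃! X : ℕ → T, X 0 = (e Y).2 ∧
          ∀ n, (e B).2 * X (n + 1) = (e A).2 * X n + (e (F n)).2)) := by
  rw [← my_existsUnique_prod]
  let E : (ℕ → R) ≃ (ℕ → S) × (ℕ → T) :=
    (Equiv.arrowCongr (Equiv.refl ℕ) e.toEquiv).trans (Equiv.arrowProdEquivProdArrow _ _ _)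
  rw [my_existsUnique_equiv E]
  apply existsUnique_congr
  intro q
  have hE : ∀ n : ℕ, E.symm q n = e.symm (q.1 n, q.2 n) := fun n => rfl
  constructor
  · rintro ⟨h0, hrec⟩
    have h0' : (q.1 0, q.2 0) = e Y := by
      have := congrArg e h0
      rw [hE] at this; rw [← this, e.apply_symm_apply]
    have hrec' : ∀ n, (e B * (q.1 (n+1), q.2 (n+1)) : S × T)
        = e A * (q.1 n, q.2 n) + e (F n) := by
      intro n
      have := congrArg e (hrec n)
      simp only [map_mul, map_add, hE, e.apply_symm_apply] at this
      exact this
    constructor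
    · exact ⟨congrArg Prod.fst h0', fun n => congrArg Prod.fst (hrec' n)⟩
    · exact ⟨congrArg Prod.snd h0', fun n => congrArg Prod.snd (hrec' n)⟩
  · rintro ⟨⟨h01, hr1⟩, ⟨h02, hr2⟩⟩
    constructor
    · rw [hE]
      rw [show ((q.1 0, q.2 0) : S × T) = e Y from Prod.ext h01 h02, e.symm_apply_apply]
    · intro n
      have : (e (B * E.symm q (n+1)) : S × T) = e (A * E.symm q n + F n) := by
        simp only [map_mul, map_add, hE, e.apply_symm_apply]
        exact Prod.ext (by simpa using hr1 n) (by simpa using hr2 n)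
      exact e.injective this

theorem my_isUnit_int_cast {n : ℕ} (hn : n ≠ 0) {x : ℤ}
    (h : ∀ p : ℕ, p.Prime → p ∣ n → ¬ (p : ℤ) ∣ x) : IsUnit ((x : ℤ) : ZMod n) := by
  have hcop : Nat.Coprime x.natAbs n := by
    by_contra hc
    have hg0 : Nat.gcd x.natAbs n ≠ 0 := fun h0 => hn (Nat.eq_zero_of_gcd_eq_zero_right h0)
    have hp := Nat.minFac_prime hc
    have hpg := Nat.minFac_dvd (Nat.gcd x.natAbs n)
    refine h _ hp (hpg.trans (Nat.gcd_dvd_right _ _)) ?_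
    have h1 : ((Nat.gcd x.natAbs n).minFac : ℤ) ∣ (x.natAbs : ℤ) :=
      Int.natCast_dvd_natCast.mpr (hpg.trans (Nat.gcd_dvd_left _ _))
    exact h1.trans (Int.natAbs_dvd.mpr dvd_rfl)
  have hu := (ZMod.isUnit_iff_coprime x.natAbs n).mpr hcop
  rcases Int.natAbs_eq x with hx | hx
  · rw [hx, Int.cast_natCast]; exact hu
  · rw [hx, Int.cast_neg, Int.cast_natCast]; exact hu.neg
end aux


theorem my_prime_dvd_filtered_prod {m : ℕ} (hm : m ≠ 0) (pred : ℕ → Prop) [DecidablePred pred]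
    {p : ℕ} (hp : p.Prime)
    (h : p ∣ ∏ q ∈ m.primeFactors.filter pred, q ^ m.factorization q) :
    pred p ∧ p ∣ m := by
  obtain ⟨q, hq, hpq⟩ := (Prime.dvd_finset_prod_iff hp.prime _).mp h
  rw [Finset.mem_filter, Nat.mem_primeFactors] at hq
  obtain ⟨⟨hqp, hqm, _⟩, hqpred⟩ := hq
  obtain rfl : p = q := (Nat.prime_dvd_prime_iff_eq hp hqp).mp (hp.dvd_of_dvd_pow hpq)
  exact ⟨hqpred, hqm⟩

theorem stmt_8 (m : ℕ) (hm : 2 ≤ m) (a b y₀ : ℤ) (f : ℕ → ℤ)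
    (d : ℕ) (hdval : d = Int.gcd a (Int.gcd b (m : ℤ)))
    (m₂ : ℕ)
    (hm₂ : m₂ = ∏ p ∈ m.primeFactors.filter (fun p : ℕ => (p : ℤ) ∣ b),
      p ^ (m.factorization p)) :
    let A : ZMod m := (a : ZMod m)
    let B : ZMod m := (b : ZMod m)
    let F : ℕ → ZMod m := fun n => (f n : ZMod m)
    let Y₀ : ZMod m := (y₀ : ZMod m)
    ((∃! X : ℕ → ZMod m, X 0 = Y₀ ∧ ∀ n : ℕ, B * X (n + 1) = A * X n + F n) ↔
      (d = 1 ∧ (m₂ = 1 ∨ (m₂ ≠ 1 ∧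
        ∀ k : ℕ, ((b : ZMod m₂)) ^ k = 0 →
          (y₀ : ZMod m₂) = - ∑ s ∈ Finset.range k,
            (Ring.inverse ((a : ZMod m₂))) ^ (s + 1) * ((b : ZMod m₂)) ^ s *
              ((f s : ZMod m₂)))))) := by
  show ((∃! X : ℕ → ZMod m, X 0 = ((y₀ : ℤ) : ZMod m) ∧
      ∀ n : ℕ, ((b : ℤ) : ZMod m) * X (n + 1) = ((a : ℤ) : ZMod m) * X n + ((f n : ℤ) : ZMod m)) ↔ _)
  have hm0 : m ≠ 0 := by omega
  haveI : NeZero m := ⟨hm0⟩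
  have hmfull : ∏ p ∈ m.primeFactors, p ^ m.factorization p = m := by
    rw [← Nat.support_factorization]
    exact Nat.factorization_prod_pow_eq_self hm0
  have hdvd : m₂ ∣ m := by
    have h := Finset.prod_dvd_prod_of_subset
      (m.primeFactors.filter (fun p : ℕ => (p : ℤ) ∣ b)) m.primeFactors
      (fun p => p ^ m.factorization p) (Finset.filter_subset _ _)
    rw [hmfull] at h
    rw [hm₂]; exact h
  have hm₂0 : m₂ ≠ 0 := fun h => hm0 (Nat.eq_zero_of_zero_dvd (h ▸ hdvd))
  haveI : NeZero m₂ := ⟨hm₂0⟩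
  have hd0 : d ≠ 0 := by
    rw [hdval]
    intro h
    have h2 := Int.gcd_eq_zero_iff.mp h
    have h4 : Int.gcd b (m : ℤ) = 0 := by exact_mod_cast h2.2
    have h3 := Int.gcd_eq_zero_iff.mp h4
    simp only [Int.natCast_eq_zero] at h3
    exact hm0 h3.2
  -- the unit of a mod m₂ when d = 1
  have hAunit : d = 1 → IsUnit ((a : ℤ) : ZMod m₂) := by
    intro hd1
    apply my_isUnit_int_cast hm₂0
    intro p hp hpm₂ hpa
    obtain ⟨hpb, hpm⟩ := my_prime_dvd_filtered_prod hm0 _ hp (hm₂ ▸ hpm₂)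
    have h1 : (p : ℤ) ∣ (d : ℤ) := by
      rw [hdval]
      exact Int.dvd_coe_gcd hpa (Int.dvd_coe_gcd hpb (Int.natCast_dvd_natCast.mpr hpm))
    rw [hd1] at h1
    have : p ∣ 1 := by exact_mod_cast h1
    exact hp.ne_one (Nat.dvd_one.mp this)
  -- nilpotency of b mod m₂
  have hnil : ∃ K : ℕ, ((b : ℤ) : ZMod m₂) ^ K = 0 := by
    refine ⟨∑ p ∈ m.primeFactors.filter (fun p : ℕ => (p : ℤ) ∣ b), m.factorization p, ?_⟩
    rw [← Int.cast_pow, ZMod.intCast_zmod_eq_zero_iff_dvd]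
    have h1 : (m₂ : ℤ) = ∏ p ∈ m.primeFactors.filter (fun p : ℕ => (p : ℤ) ∣ b),
        (p : ℤ) ^ m.factorization p := by rw [hm₂]; push_cast; ring
    rw [h1, ← Finset.prod_pow_eq_pow_sum]
    apply Finset.prod_dvd_prod_of_dvd
    intro p hpmem
    rw [Finset.mem_filter] at hpmem
    exact pow_dvd_pow_of_dvd hpmem.2 _
  constructor
  · intro h
    have hd1 : d = 1 := by
      by_contra hd1
      have hp : (d.minFac).Prime := Nat.minFac_prime hd1
      set p := d.minFac with hpdef
      have hpd : p ∣ d := Nat.minFac_dvd d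
      have hda : (d : ℤ) ∣ a := hdval ▸ Int.gcd_dvd_left a (Int.gcd b (m : ℤ))
      have hdbm : (d : ℤ) ∣ (Int.gcd b (m : ℤ) : ℤ) := hdval ▸ Int.gcd_dvd_right a (Int.gcd b (m : ℤ))
      have hpa : (p : ℤ) ∣ a := (Int.natCast_dvd_natCast.mpr hpd).trans hda
      have hpb : (p : ℤ) ∣ b :=
        ((Int.natCast_dvd_natCast.mpr hpd).trans hdbm).trans (Int.gcd_dvd_left _ _)
      have hpm' : (p : ℤ) ∣ (m : ℤ) :=
        ((Int.natCast_dvd_natCast.mpr hpd).trans hdbm).trans (Int.gcd_dvd_right _ _)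
      have hpm : p ∣ m := Int.natCast_dvd_natCast.mp hpm'
      obtain ⟨X, hX, hXu⟩ := h
      set c : ZMod m := (((m / p : ℕ) : ℤ) : ZMod m) with hc
      set δ : ℕ → ZMod m := fun n => if n = 1 then c else 0 with hδ
      have hmp : ((p : ℤ)) * ((m / p : ℕ) : ℤ) = (m : ℤ) := by
        exact_mod_cast congrArg (Nat.cast : ℕ → ℤ) (Nat.mul_div_cancel' hpm)
      have hBc : ((b : ℤ) : ZMod m) * c = 0 := by
        rw [hc, ← Int.cast_mul, ZMod.intCast_zmod_eq_zero_iff_dvd]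
        obtain ⟨b', hb'⟩ := hpb
        exact ⟨b', by rw [hb', ← hmp]; ring⟩
      have hAc : ((a : ℤ) : ZMod m) * c = 0 := by
        rw [hc, ← Int.cast_mul, ZMod.intCast_zmod_eq_zero_iff_dvd]
        obtain ⟨a', ha'⟩ := hpa
        exact ⟨a', by rw [ha', ← hmp]; ring⟩
      have hsol : (fun n => X n + δ n) 0 = ((y₀ : ℤ) : ZMod m) ∧
          ∀ n, ((b : ℤ) : ZMod m) * ((fun n => X n + δ n) (n + 1))
            = ((a : ℤ) : ZMod m) * ((fun n => X n + δ n) n) + ((f n : ℤ) : ZMod m) := by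
        constructor
        · show X 0 + δ 0 = _
          simp [hδ, hX.1]
        · intro n
          show ((b : ℤ) : ZMod m) * (X (n + 1) + δ (n + 1)) = _
          rw [mul_add, hX.2 n, mul_add]
          have hBA : ((b : ℤ) : ZMod m) * δ (n + 1) = ((a : ℤ) : ZMod m) * δ n := by
            rcases n with _ | n
            · simpa [hδ] using hBc
            · rcases n with _ | n
              · simpa [hδ] using hAc.symm
              · simp [hδ]
          rw [hBA]; ring
      have heq := hXu (fun n => X n + δ n) (by exact hsol)
      have h1 : X 1 + δ 1 = X 1 := congrFun heq 1
      have hc0 : c = 0 := by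
        have h2 : X 1 + c = X 1 := by simpa [hδ] using h1
        exact left_eq_add.mp h2.symm
      rw [hc, ZMod.intCast_zmod_eq_zero_iff_dvd] at hc0
      have hdm : m ∣ m / p := Int.natCast_dvd_natCast.mp hc0
      have hlt : m / p < m := Nat.div_lt_self (by omega) hp.one_lt
      have hpos : 0 < m / p := Nat.div_pos (Nat.le_of_dvd (by omega) hpm) hp.pos
      exact absurd (Nat.le_of_dvd hpos hdm) (by omega)
    refine ⟨hd1, ?_⟩
    by_cases hm₂1 : m₂ = 1
    · exact Or.inl hm₂1
    · refine Or.inr ⟨hm₂1, fun k hk => ?_⟩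
      obtain ⟨X, ⟨hX0, hXr⟩, _⟩ := h
      set φ := ZMod.castHom hdvd (ZMod m₂) with hφ
      set Y : ℕ → ZMod m₂ := fun n => φ (X n) with hY
      have hYr : ∀ n, ((b : ℤ) : ZMod m₂) * Y (n + 1)
          = ((a : ℤ) : ZMod m₂) * Y n + ((f n : ℤ) : ZMod m₂) := by
        intro n
        have h2 := congrArg φ (hXr n)
        simpa only [hY, map_mul, map_add, map_intCast] using h2
      have h0 := my_sol0_nilpotent (hAunit hd1) hk hYr
      have hφ0 : Y 0 = ((y₀ : ℤ) : ZMod m₂) := by rw [hY]; simp only []; rw [hX0, map_intCast]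
      rw [hφ0] at h0
      exact h0
  · rintro ⟨hd1, hcase⟩
    rcases hcase with hm₂1 | ⟨hm₂1, hcond⟩
    · -- b is a unit mod m
      have hBum : IsUnit ((b : ℤ) : ZMod m) := by
        apply my_isUnit_int_cast hm0
        intro p hp hpm hpb
        have hmem : p ∈ m.primeFactors.filter (fun p : ℕ => (p : ℤ) ∣ b) := by
          rw [Finset.mem_filter, Nat.mem_primeFactors]
          exact ⟨⟨hp, hpm, hm0⟩, hpb⟩
        have h1 : p ^ m.factorization p ∣ m₂ := by
          rw [hm₂]; exact Finset.dvd_prod_of_mem _ hmem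
        have hpos : m.factorization p ≠ 0 :=
          (Nat.Prime.factorization_pos_of_dvd hp hm0 hpm).ne'
        have h2 : p ∣ m₂ := (dvd_pow_self p hpos).trans h1
        rw [hm₂1] at h2
        exact hp.ne_one (Nat.dvd_one.mp h2)
      exact my_sol_unit hBum _ _ _
    · -- CRT split
      set m₁ : ℕ := ∏ p ∈ m.primeFactors.filter (fun p : ℕ => ¬ (p : ℤ) ∣ b),
        p ^ m.factorization p with hm₁def
      have hmul : m₂ * m₁ = m := by
        rw [hm₂, hm₁def]
        exact (Finset.prod_filter_mul_prod_filter_not _ _ _).trans hmfull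
      have hm₁0 : m₁ ≠ 0 := by
        intro h; rw [h, mul_zero] at hmul; exact hm0 hmul.symm
      have hcop : Nat.Coprime m₂ m₁ := by
        by_contra hc
        have hp := Nat.minFac_prime hc
        have h2 := (Nat.minFac_dvd _).trans (Nat.gcd_dvd_left m₂ m₁)
        have h1 := (Nat.minFac_dvd _).trans (Nat.gcd_dvd_right m₂ m₁)
        have h2' : (Nat.gcd m₂ m₁).minFac ∣ ∏ p ∈ m.primeFactors.filter
            (fun p : ℕ => (p : ℤ) ∣ b), p ^ m.factorization p := by rw [← hm₂]; exact h2
        have h1' : (Nat.gcd m₂ m₁).minFac ∣ ∏ p ∈ m.primeFactors.filter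
            (fun p : ℕ => ¬ (p : ℤ) ∣ b), p ^ m.factorization p := by rw [← hm₁def]; exact h1
        have hb1 := (my_prime_dvd_filtered_prod hm0 _ hp h2').1
        have hb2 := (my_prime_dvd_filtered_prod hm0 _ hp h1').1
        exact hb2 hb1
      have e := ZMod.chineseRemainder hcop
      rw [hmul] at e
      rw [my_transport e]
      have he : ∀ x : ℤ, e ((x : ZMod m)) = ((x : ZMod m₂), (x : ZMod m₁)) := by
        intro x
        rw [map_intCast]
        exact Prod.ext (Prod.fst_intCast x) (Prod.snd_intCast x)
      simp only [he]
      constructor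
      · -- m₂ side
        obtain ⟨K, hK⟩ := hnil
        have hy := hcond K hK
        have hAu := hAunit hd1
        set Xe : ℕ → ZMod m₂ := fun n => -∑ s ∈ Finset.range K,
          (Ring.inverse ((a : ℤ) : ZMod m₂)) ^ (s + 1) * ((b : ℤ) : ZMod m₂) ^ s
            * ((f (n + s) : ℤ) : ZMod m₂) with hXe
        have hXesol := my_sol_exists_nilpotent hAu hK
          (fun n => ((f n : ℤ) : ZMod m₂)) Xe (fun n => rfl)
        refine ⟨Xe, ⟨?_, hXesol⟩, ?_⟩
        · rw [hXe]
          show -∑ s ∈ Finset.range K, _ = _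
          rw [hy]
          simp [zero_add]
        · rintro X' ⟨_, hrec⟩
          exact my_sol_unique_nilpotent hAu hK hrec hXesol
      · -- m₁ side
        have hBu1 : IsUnit ((b : ℤ) : ZMod m₁) := by
          apply my_isUnit_int_cast hm₁0
          intro p hp hpm₁
          exact (my_prime_dvd_filtered_prod hm0 _ hp (hm₁def ▸ hpm₁)).1
        exact my_sol_unit hBu1 _ _ _
end

section
/- The initial problem B * X (n+1) = A * X n + F n (for all n ∈ ℕ) together with X 0 = Y₀ has infinitely many solutions X : ℕ → ZMod m if and only if d ≠ 1, d ∣ f n for all n ∈ ℕ, and either m'₂ = 1, or m'₂ ≠ 1 and (y₀ : ZMod m'₂) = - ∑_{s=0}^{k-1} (((a/d) : ZMod m'₂)⁻¹)^(s+1) * ((b/d) : ZMod m'₂)^s * ((f s / d) : ZMod m'₂), where k is any natural number with ((b/d) : ZMod m'₂)^k = 0. -/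
lemma natCast_dvd_iff' (n : ℕ) (z : ℤ) : (n:ℤ) ∣ z ↔ n ∣ z.natAbs := by
  rw [← Int.natAbs_dvd_natAbs, Int.natAbs_natCast]

lemma prod_pp_ne_zero (S : Finset ℕ) (hS : ∀ p ∈ S, p.Prime) (g : ℕ → ℕ) : (∏ p ∈ S, p^(g p)) ≠ 0 := by
  rw [Finset.prod_ne_zero_iff]
  intro p hp
  exact pow_ne_zero _ (hS p hp).pos.ne'

lemma prod_pp_factorization (S : Finset ℕ) (hS : ∀ p ∈ S, p.Prime) (g : ℕ → ℕ) (q : ℕ) :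
    (∏ p ∈ S, p^(g p)).factorization q = if q ∈ S then g q else 0 := by
  rw [Nat.factorization_prod (fun p hp => pow_ne_zero _ (hS p hp).pos.ne')]
  rw [Finsupp.finset_sum_apply]
  have : ∀ p ∈ S, (p^(g p)).factorization q = if p = q then g p else 0 := by
    intro p hp
    rw [(hS p hp).factorization_pow, Finsupp.single_apply]
  rw [Finset.sum_congr rfl this, Finset.sum_ite_eq' S q g]

lemma prime_dvd_prod_pp (S : Finset ℕ) (hS : ∀ p ∈ S, p.Prime) (g : ℕ → ℕ) (q : ℕ) (hq : q.Prime)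
    (hdvd : q ∣ ∏ p ∈ S, p^(g p)) : q ∈ S ∧ 1 ≤ g q := by
  have h1 := (hq.dvd_iff_one_le_factorization (prod_pp_ne_zero S hS g)).mp hdvd
  rw [prod_pp_factorization S hS g q] at h1
  by_cases h : q ∈ S
  · exact ⟨h, by simpa [h] using h1⟩
  · simp [h] at h1

section NT

variable (m d : ℕ) (S : Finset ℕ)

-- main hypotheses
variable (hm0 : m ≠ 0) (hdm : d ∣ m) (hS : ∀ p ∈ S, p.Prime ∧ p ∣ m / d)

include hm0 hdm hS

lemma hSp : ∀ p ∈ S, p.Prime := fun p hp => (hS p hp).1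

omit hdm in
lemma hd0 : d ∣ m → d ≠ 0 := fun hdm h0 => hm0 (by simpa [h0] using hdm)

lemma M1_dvd_m : (∏ p ∈ S, p^(m.factorization p)) ∣ m := by
  rw [← Nat.factorization_le_iff_dvd (prod_pp_ne_zero S (hSp m d S hm0 hdm hS) _) hm0]
  rw [Finsupp.le_def]
  intro q
  rw [prod_pp_factorization S (hSp m d S hm0 hdm hS) _ q]
  split <;> simp

lemma m2_dvd_m' : (∏ p ∈ S, p^((m/d).factorization p)) ∣ m / d := by
  have hm'0 : m / d ≠ 0 := Nat.div_ne_zero_iff_of_dvd hdm |>.mpr ⟨hm0, hd0 m d S hm0 hS hdm⟩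
  rw [← Nat.factorization_le_iff_dvd (prod_pp_ne_zero S (hSp m d S hm0 hdm hS) _) hm'0]
  rw [Finsupp.le_def]
  intro q
  rw [prod_pp_factorization S (hSp m d S hm0 hdm hS) _ q]
  split <;> simp

lemma not_dvd_M2 (q : ℕ) (hq : q ∈ S) : ¬ q ∣ (m / ∏ p ∈ S, p^(m.factorization p)) := by
  have hprime := (hS q hq).1
  have hM1 := M1_dvd_m m d S hm0 hdm hS
  have hM10 := prod_pp_ne_zero S (hSp m d S hm0 hdm hS) (m.factorization ·)
  have hM20 : m / (∏ p ∈ S, p^(m.factorization p)) ≠ 0 :=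
    Nat.div_ne_zero_iff_of_dvd hM1 |>.mpr ⟨hm0, hM10⟩
  rw [hprime.dvd_iff_one_le_factorization hM20, Nat.factorization_div hM1]
  have : (∏ p ∈ S, p^(m.factorization p)).factorization q = m.factorization q := by
    rw [prod_pp_factorization S (hSp m d S hm0 hdm hS) _ q, if_pos hq]
  simp [Finsupp.tsub_apply, this]

lemma coprime_M2 (g : ℕ → ℕ) :
    Nat.Coprime (∏ p ∈ S, p^(g p)) (m / ∏ p ∈ S, p^(m.factorization p)) := by
  apply Nat.Coprime.prod_left
  intro p hp
  exact Nat.Coprime.pow_left _ (((hS p hp).1.coprime_iff_not_dvd).mpr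
    (not_dvd_M2 m d S hm0 hdm hS p hp))

end NT
set_option linter.unusedSectionVars false

section NT2

variable (m d : ℕ) (S : Finset ℕ)
variable (hm0 : m ≠ 0) (hdm : d ∣ m) (hS : ∀ p ∈ S, p.Prime ∧ p ∣ m / d)
include hm0 hdm hS

lemma KLnat : (Nat.gcd (∏ p ∈ S, p^(m.factorization p)) d)
      * (∏ p ∈ S, p^((m/d).factorization p)) = (∏ p ∈ S, p^(m.factorization p))
    ∧ Nat.Coprime (∏ p ∈ S, p^((m/d).factorization p))
      (d / Nat.gcd (∏ p ∈ S, p^(m.factorization p)) d) := by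
  have hprime := hSp m d S hm0 hdm hS
  have hd0' : d ≠ 0 := hd0 m d S hm0 hS hdm
  have hm'0 : m / d ≠ 0 := Nat.div_ne_zero_iff_of_dvd hdm |>.mpr ⟨hm0, hd0'⟩
  set M₁ := ∏ p ∈ S, p^(m.factorization p) with hM₁
  set m₂ := ∏ p ∈ S, p^((m/d).factorization p) with hm₂
  have hM10 : M₁ ≠ 0 := prod_pp_ne_zero S hprime _
  have hm20 : m₂ ≠ 0 := prod_pp_ne_zero S hprime _
  have hg0 : Nat.gcd M₁ d ≠ 0 := Nat.gcd_ne_zero_left hM10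
  have hfd : ∀ q, d.factorization q ≤ m.factorization q :=
    fun q => Finsupp.le_def.mp ((Nat.factorization_le_iff_dvd hd0' hm0).mpr hdm) q
  have hfm' : ∀ q, (m/d).factorization q = m.factorization q - d.factorization q := by
    intro q; rw [Nat.factorization_div hdm]; simp [Finsupp.tsub_apply]
  have hgf : ∀ q, (Nat.gcd M₁ d).factorization q
      = min (M₁.factorization q) (d.factorization q) := by
    intro q
    rw [Nat.factorization_gcd hM10 hd0']
    simp [Finsupp.inf_apply]
  have key : ∀ q, (Nat.gcd M₁ d * m₂).factorization q = M₁.factorization q := by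
    intro q
    rw [Nat.factorization_mul hg0 hm20]
    rw [Finsupp.add_apply, hgf q, prod_pp_factorization S hprime _ q,
      prod_pp_factorization S hprime _ q]
    by_cases hq : q ∈ S
    · rw [if_pos hq, if_pos hq, hfm' q]
      have := hfd q
      omega
    · rw [if_neg hq, if_neg hq]
      simp
  constructor
  · exact Nat.eq_of_factorization_eq (by positivity) hM10 key
  · -- coprimality
    by_contra hcop
    obtain ⟨p, hp, hpd⟩ := Nat.exists_prime_and_dvd hcop
    have hpm2 : p ∣ m₂ := hpd.trans (Nat.gcd_dvd_left _ _)
    have hpdg : p ∣ d / Nat.gcd M₁ d := hpd.trans (Nat.gcd_dvd_right _ _)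
    have hpS := (prime_dvd_prod_pp S hprime _ p hp hpm2).1
    have hgd : Nat.gcd M₁ d ∣ d := Nat.gcd_dvd_right _ _
    have hq0 : (d / Nat.gcd M₁ d) ≠ 0 := Nat.div_ne_zero_iff_of_dvd hgd |>.mpr ⟨hd0', hg0⟩
    have h1 := (hp.dvd_iff_one_le_factorization hq0).mp hpdg
    rw [Nat.factorization_div hgd] at h1
    rw [Finsupp.tsub_apply] at h1
    rw [hgf p] at h1
    have : M₁.factorization p = m.factorization p := by
      rw [prod_pp_factorization S hprime _ p, if_pos hpS]
    rw [this] at h1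
    have := hfd p
    omega

lemma KL (w : ℤ) : ((∏ p ∈ S, p^(m.factorization p) : ℕ) : ℤ) ∣ (d:ℤ) * w
    ↔ ((∏ p ∈ S, p^((m/d).factorization p) : ℕ) : ℤ) ∣ w := by
  obtain ⟨heq, hcop⟩ := KLnat m d S hm0 hdm hS
  have hd0' : d ≠ 0 := hd0 m d S hm0 hS hdm
  set M₁ := ∏ p ∈ S, p^(m.factorization p) with hM₁
  set m₂ := ∏ p ∈ S, p^((m/d).factorization p) with hm₂
  set g := Nat.gcd M₁ d with hg
  have hg0 : g ≠ 0 := Nat.gcd_ne_zero_right hd0'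
  have hgd : g ∣ d := Nat.gcd_dvd_right _ _
  have hdeq : d = g * (d / g) := (Nat.mul_div_cancel' hgd).symm
  have hcopZ : IsCoprime (m₂ : ℤ) ((d / g : ℕ) : ℤ) := Nat.isCoprime_iff_coprime.mpr hcop
  constructor
  · intro h
    rw [← heq, hdeq, Nat.cast_mul, Nat.cast_mul, mul_assoc] at h
    have h2 : (m₂ : ℤ) ∣ ((d / g : ℕ) : ℤ) * w := by
      exact (mul_dvd_mul_iff_left (a := (g:ℤ)) (by exact_mod_cast hg0)).mp h
    exact hcopZ.dvd_of_dvd_mul_left h2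
  · intro h
    rw [← heq, hdeq, Nat.cast_mul, Nat.cast_mul, mul_assoc]
    exact mul_dvd_mul_left _ (Dvd.dvd.mul_left h _)

end NT2
section NT3

variable (m d : ℕ) (S : Finset ℕ) (b : ℤ)
variable (hm0 : m ≠ 0) (hdm : d ∣ m) (hS : ∀ p ∈ S, p.Prime ∧ p ∣ m / d)
  (hdb : (d:ℤ) ∣ b)
  (hSc : ∀ p : ℕ, p.Prime → p ∣ m / d → (d:ℤ)*(p:ℤ) ∣ b → p ∈ S)
include hm0 hdm hS hdb hSc

lemma gcd_b_M2_dvd_d :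
    (Int.gcd b ((m / ∏ p ∈ S, p^(m.factorization p) : ℕ) : ℤ) : ℤ) ∣ (d : ℤ) := by
  have hprime := hSp m d S hm0 hdm hS
  have hd0' : d ≠ 0 := hd0 m d S hm0 hS hdm
  have hm'0 : m / d ≠ 0 := Nat.div_ne_zero_iff_of_dvd hdm |>.mpr ⟨hm0, hd0'⟩
  set M₁ := ∏ p ∈ S, p^(m.factorization p) with hM₁
  have hM10 : M₁ ≠ 0 := prod_pp_ne_zero S hprime _
  have hM1m := M1_dvd_m m d S hm0 hdm hS
  set M₂ := m / M₁ with hM₂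
  have hM20 : M₂ ≠ 0 := Nat.div_ne_zero_iff_of_dvd hM1m |>.mpr ⟨hm0, hM10⟩
  have hfd : ∀ q, d.factorization q ≤ m.factorization q :=
    fun q => Finsupp.le_def.mp ((Nat.factorization_le_iff_dvd hd0' hm0).mpr hdm) q
  have hfm' : ∀ q, (m/d).factorization q = m.factorization q - d.factorization q := by
    intro q; rw [Nat.factorization_div hdm]; simp [Finsupp.tsub_apply]
  have hfM2 : ∀ q, M₂.factorization q
      = m.factorization q - M₁.factorization q := by
    intro q; rw [Nat.factorization_div hM1m]; simp [Finsupp.tsub_apply]; rfl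
  have hvM2S : ∀ q ∈ S, M₂.factorization q = 0 := by
    intro q hqS
    rw [hfM2 q, prod_pp_factorization S hprime _ q, if_pos hqS]
    omega
  have key2 : ∀ q : ℕ, ¬ q ∣ m / d → M₂.factorization q ≤ d.factorization q := by
    intro q hqm'
    have h1 : (m/d).factorization q = 0 :=
      Nat.factorization_eq_zero_of_not_dvd hqm'
    have h2 : M₂.factorization q ≤ m.factorization q := by rw [hfM2 q]; omega
    have := hfm' q
    have := hfd q
    omega
  -- key pointwise bound for primes not handled trivially
  have key : ∀ q : ℕ, q.Prime → b ≠ 0 → min (b.natAbs.factorization q) (M₂.factorization q)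
      ≤ d.factorization q := by
    intro q hq hb0
    by_cases hqS : q ∈ S
    · have := hvM2S q hqS
      omega
    · by_cases hqm' : q ∣ m / d
      · -- then ¬ ((d:ℤ)*q ∣ b), so v_q b ≤ v_q d
        have hnb : ¬ ((d:ℤ)*(q:ℤ) ∣ b) := fun hcon => hqS (hSc q hq hqm' hcon)
        have hbn0 : b.natAbs ≠ 0 := fun h => hb0 (Int.natAbs_eq_zero.mp h)
        have hvb : b.natAbs.factorization q ≤ d.factorization q := by
          by_contra hlt
          push_neg at hlt
          apply hnb
          have : ((d*q : ℕ) : ℤ) ∣ b := by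
            rw [natCast_dvd_iff']
            rw [← Nat.factorization_le_iff_dvd (Nat.mul_ne_zero hd0' hq.pos.ne') hbn0]
            rw [Finsupp.le_def]
            intro r
            rw [Nat.factorization_mul hd0' hq.pos.ne', Finsupp.add_apply,
              hq.factorization, Finsupp.single_apply]
            have hdbn : d ∣ b.natAbs := (natCast_dvd_iff' d b).mp hdb
            have hr := Finsupp.le_def.mp
              ((Nat.factorization_le_iff_dvd hd0' hbn0).mpr hdbn) r
            by_cases hrq : q = r
            · subst hrq; rw [if_pos rfl]; omega
            · simp [hrq]; omega
          simpa using this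
        omega
      · have := key2 q hqm'
        omega
  -- conclude
  have hgcd : Int.gcd b (M₂ : ℤ) ∣ d := by
    have hg : Int.gcd b (M₂ : ℤ) = Nat.gcd b.natAbs M₂ := by
      rw [Int.gcd]; simp
    rw [hg]
    by_cases hb0 : b = 0
    · subst hb0
      simp only [Int.natAbs_zero, Nat.gcd_zero_left]
      rw [← Nat.factorization_le_iff_dvd hM20 hd0', Finsupp.le_def]
      intro q
      by_cases hqS : q ∈ S
      · have := hvM2S q hqS
        omega
      · by_cases hqm' : q ∣ m / d
        · by_cases hq : q.Prime
          · exact absurd (hSc q hq hqm' (dvd_zero _)) hqS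
          · rw [Nat.factorization_eq_zero_of_not_prime _ hq]
            omega
        · exact key2 q hqm'
    · have hbn0 : b.natAbs ≠ 0 := fun h => hb0 (Int.natAbs_eq_zero.mp h)
      have hgne : Nat.gcd b.natAbs M₂ ≠ 0 := Nat.gcd_ne_zero_right hM20
      rw [← Nat.factorization_le_iff_dvd hgne hd0', Finsupp.le_def]
      intro q
      by_cases hq : q.Prime
      · rw [Nat.factorization_gcd hbn0 hM20]
        have := key q hq hb0
        simpa [Finsupp.inf_apply] using this
      · rw [Nat.factorization_eq_zero_of_not_prime _ hq]
        omega
  exact_mod_cast Int.natCast_dvd_natCast.mpr hgcd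

end NT3
section NT4

variable (m d : ℕ) (S : Finset ℕ) (b' : ℤ)
variable (hS : ∀ p ∈ S, p.Prime) (hb' : ∀ p ∈ S, (p:ℤ) ∣ b')
include hS hb'

lemma m2_dvd_pow :
    ((∏ p ∈ S, p^((m/d).factorization p) : ℕ) : ℤ)
      ∣ b' ^ (∏ p ∈ S, p^((m/d).factorization p)) := by
  set m₂ := ∏ p ∈ S, p^((m/d).factorization p) with hm₂
  have hm20 : m₂ ≠ 0 := prod_pp_ne_zero S hS _
  by_cases hb0 : b' = 0
  · rw [hb0, zero_pow hm20]; exact dvd_zero _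
  · have hbn0 : b'.natAbs ≠ 0 := fun h => hb0 (Int.natAbs_eq_zero.mp h)
    rw [natCast_dvd_iff', Int.natAbs_pow]
    rw [← Nat.factorization_le_iff_dvd hm20 (pow_ne_zero _ hbn0), Finsupp.le_def]
    intro q
    rw [Nat.factorization_pow, Finsupp.smul_apply, prod_pp_factorization S hS _ q]
    by_cases hqS : q ∈ S
    · rw [if_pos hqS]
      have hq := hS q hqS
      have h1 : 1 ≤ b'.natAbs.factorization q := by
        rw [← hq.dvd_iff_one_le_factorization hbn0]
        exact (natCast_dvd_iff' q b').mp (hb' q hqS)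
      have h2 : (m/d).factorization q < m₂ := by
        calc (m/d).factorization q = m₂.factorization q := by
              rw [prod_pp_factorization S hS _ q, if_pos hqS]
          _ < m₂ := Nat.factorization_lt _ hm20
      have : m₂ • b'.natAbs.factorization q = m₂ * b'.natAbs.factorization q := rfl
      rw [this]
      nlinarith
    · rw [if_neg hqS]
      omega

end NT4

lemma aux_back {R : Type*} [CommRing R] (a b : R) (ha : IsUnit a) (f : ℕ → R)
    (x : ℕ → R) (hx : ∀ n, b * x (n+1) = a * x n + f n) :
    ∀ k, x 0 = (Ring.inverse a * b)^k * x k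
      - ∑ s ∈ Finset.range k, (Ring.inverse a)^(s+1) * b^s * f s := by
  have h2 : Ring.inverse a * a = 1 := Ring.inverse_mul_cancel _ ha
  intro k
  induction k with
  | zero => simp
  | succ k ih =>
    have hxk : x k = Ring.inverse a * b * x (k+1) - Ring.inverse a * f k := by
      linear_combination (-Ring.inverse a) * hx k + (-(x k)) * h2
    rw [Finset.sum_range_succ]
    rw [ih, hxk]
    ring

lemma aux_c {R : Type*} [CommRing R] (a b : R) (ha : IsUnit a) (K : ℕ) (hK : b^(K+1) = 0)
    (f : ℕ → R) :
    ∀ n, b * (-∑ s ∈ Finset.range (K+1), (Ring.inverse a)^(s+1) * b^s * f ((n+1)+s))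
      = a * (-∑ s ∈ Finset.range (K+1), (Ring.inverse a)^(s+1) * b^s * f (n+s)) + f n := by
  have h2 : a * Ring.inverse a = 1 := Ring.mul_inverse_cancel _ ha
  intro n
  have lhs : b * (-∑ s ∈ Finset.range (K+1), (Ring.inverse a)^(s+1) * b^s * f ((n+1)+s))
      = -∑ s ∈ Finset.range K, (Ring.inverse a)^(s+1) * b^(s+1) * f ((n+1)+s) := by
    rw [mul_neg, Finset.mul_sum, Finset.sum_range_succ]
    have : b * ((Ring.inverse a)^(K+1) * b^K * f ((n+1)+K)) = 0 := by
      have : b * b ^ K = 0 := by rw [← pow_succ']; exact hK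
      calc b * ((Ring.inverse a)^(K+1) * b^K * f ((n+1)+K))
          = (b * b^K) * ((Ring.inverse a)^(K+1) * f ((n+1)+K)) := by ring
        _ = 0 := by rw [this, zero_mul]
    rw [this, add_zero]
    congr 1
    apply Finset.sum_congr rfl
    intro s _
    ring
  have rhs : a * (-∑ s ∈ Finset.range (K+1), (Ring.inverse a)^(s+1) * b^s * f (n+s)) + f n
      = -∑ s ∈ Finset.range K, (Ring.inverse a)^(s+1) * b^(s+1) * f ((n+1)+s) := by
    rw [mul_neg, Finset.mul_sum, Finset.sum_range_succ']
    have h0 : a * ((Ring.inverse a)^(0+1) * b^0 * f (n+0)) = f n := by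
      rw [pow_one, pow_zero]
      calc a * (Ring.inverse a * 1 * f (n+0)) = (a * Ring.inverse a) * f (n + 0) := by ring
        _ = f n := by rw [h2, one_mul, add_zero]
    rw [h0]
    rw [neg_add, add_assoc, neg_add_cancel, add_zero]
    congr 1
    apply Finset.sum_congr rfl
    intro s _
    have hfe : n + (s+1) = (n+1) + s := by omega
    rw [hfe]
    calc a * ((Ring.inverse a)^(s+1+1) * b^(s+1) * f ((n+1)+s))
        = (a * Ring.inverse a) * ((Ring.inverse a)^(s+1) * b^(s+1) * f ((n+1)+s)) := by ring
      _ = (Ring.inverse a)^(s+1) * b^(s+1) * f ((n+1)+s) := by rw [h2, one_mul]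
  rw [lhs, rhs]
set_option linter.unusedSectionVars false in
theorem stmt_9 (m : ℕ) (hm : 2 ≤ m) (a b y₀ : ℤ) (f : ℕ → ℤ)
    (d : ℕ) (hdval : d = Int.gcd a (Int.gcd b (m : ℤ)))
    (m' : ℕ) (hm' : m' = m / d)
    (m'₂ : ℕ)
    (hm'₂ : m'₂ = ∏ p ∈ m'.primeFactors.filter (fun p : ℕ => (d : ℤ) * (p : ℤ) ∣ b),
      p ^ (m'.factorization p)) :
    let A : ZMod m := (a : ZMod m)
    let B : ZMod m := (b : ZMod m)
    let F : ℕ → ZMod m := fun n => (f n : ZMod m)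
    let Y₀ : ZMod m := (y₀ : ZMod m)
    ({X : ℕ → ZMod m | X 0 = Y₀ ∧ ∀ n : ℕ, B * X (n + 1) = A * X n + F n}.Infinite ↔
      (d ≠ 1 ∧ (∀ n : ℕ, (d : ℤ) ∣ f n) ∧ (m'₂ = 1 ∨ (m'₂ ≠ 1 ∧
        ∀ k : ℕ, ((b / (d : ℤ) : ℤ) : ZMod m'₂) ^ k = 0 →
          (y₀ : ZMod m'₂) = - ∑ s ∈ Finset.range k,
            (Ring.inverse ((a / (d : ℤ) : ℤ) : ZMod m'₂)) ^ (s + 1) *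
              ((b / (d : ℤ) : ℤ) : ZMod m'₂) ^ s *
              ((f s / (d : ℤ) : ℤ) : ZMod m'₂))))) := by
  intro A B F Y₀
  have hm0 : m ≠ 0 := by omega
  haveI : NeZero m := ⟨hm0⟩
  -- basic divisibilities
  have hda : (d:ℤ) ∣ a := by rw [hdval]; exact Int.gcd_dvd_left _ _
  have hdG : (d:ℤ) ∣ ((Int.gcd b (m:ℤ) : ℕ) : ℤ) := by rw [hdval]; exact Int.gcd_dvd_right _ _
  have hdb : (d:ℤ) ∣ b := hdG.trans (Int.gcd_dvd_left _ _)
  have hdmZ : (d:ℤ) ∣ (m:ℤ) := hdG.trans (Int.gcd_dvd_right _ _)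
  have hdmN : d ∣ m := Int.natCast_dvd_natCast.mp hdmZ
  have hd0 : d ≠ 0 := by rintro rfl; exact hm0 (Nat.eq_zero_of_zero_dvd hdmN)
  have hdZ0 : (d:ℤ) ≠ 0 := by exact_mod_cast hd0
  have hm'0 : m' ≠ 0 := by
    rw [hm']; exact (Nat.div_ne_zero_iff_of_dvd hdmN).mpr ⟨hm0, hd0⟩
  have hmdm' : d * m' = m := by rw [hm']; exact Nat.mul_div_cancel' hdmN
  -- the prime set
  set T := m'.primeFactors.filter (fun p : ℕ => (d : ℤ) * (p : ℤ) ∣ b) with hTdef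
  have hTS : ∀ p ∈ T, p.Prime ∧ p ∣ m / d := by
    intro p hp
    rw [hTdef, Finset.mem_filter, Nat.mem_primeFactors] at hp
    exact ⟨hp.1.1, hm' ▸ hp.1.2.1⟩
  have hTSp : ∀ p ∈ T, p.Prime := fun p hp => (hTS p hp).1
  have hTb : ∀ p ∈ T, (d:ℤ) * (p:ℤ) ∣ b := by
    intro p hp
    rw [hTdef, Finset.mem_filter] at hp
    exact hp.2
  have hTc : ∀ p : ℕ, p.Prime → p ∣ m / d → (d:ℤ)*(p:ℤ) ∣ b → p ∈ T := by
    intro p hp hpm' hpb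
    rw [hTdef, Finset.mem_filter, Nat.mem_primeFactors]
    exact ⟨⟨hp, hm' ▸ hpm', hm'0⟩, hpb⟩
  have hm'₂T : m'₂ = ∏ p ∈ T, p ^ ((m/d).factorization p) := by
    rw [hm'₂, hm']
  have hm'₂0 : m'₂ ≠ 0 := by rw [hm'₂T]; exact prod_pp_ne_zero T hTSp _
  haveI : NeZero m'₂ := ⟨hm'₂0⟩
  have hm'₂m' : m'₂ ∣ m' := by
    rw [hm'₂T, hm']; exact m2_dvd_m' m d T hm0 hdmN hTS
  have hm'₂m : m'₂ ∣ m := hm'₂m'.trans (hm' ▸ Nat.div_dvd_of_dvd hdmN)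
  -- exact quotients
  set a' : ℤ := a / d with ha'def
  set b' : ℤ := b / d with hb'def
  have ha' : (d:ℤ) * a' = a := Int.mul_ediv_cancel' hda
  have hb' : (d:ℤ) * b' = b := Int.mul_ediv_cancel' hdb
  -- every prime of T divides b'
  have hTb' : ∀ p ∈ T, (p:ℤ) ∣ b' := by
    intro p hp
    have h := hTb p hp
    rw [← hb'] at h
    exact (mul_dvd_mul_iff_left (a := (d:ℤ)) hdZ0).mp h
  -- a' is a unit mod m'₂
  have hgcd_a' : Int.gcd a' (m'₂:ℤ) = 1 := by
    by_contra hne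
    obtain ⟨p, hp, hpd⟩ := Nat.exists_prime_and_dvd hne
    have hpa' : (p:ℤ) ∣ a' :=
      (Int.natCast_dvd_natCast.mpr hpd).trans (Int.gcd_dvd_left _ _)
    have hpm2 : p ∣ m'₂ := Int.natCast_dvd_natCast.mp
      ((Int.natCast_dvd_natCast.mpr hpd).trans (Int.gcd_dvd_right _ _))
    have hpT : p ∈ T := (prime_dvd_prod_pp T hTSp _ p hp (hm'₂T ▸ hpm2)).1
    have h1 : (d:ℤ)*(p:ℤ) ∣ a := by rw [← ha']; exact mul_dvd_mul_left _ hpa'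
    have h2 : (d:ℤ)*(p:ℤ) ∣ b := hTb p hpT
    have h3 : (d:ℤ)*(p:ℤ) ∣ (m:ℤ) := by
      have hpm' : p ∣ m / d := (hTS p hpT).2
      have hnat : d * p ∣ m := by
        rw [← hmdm']
        exact Nat.mul_dvd_mul_left d (by rw [hm']; exact hpm')
      exact_mod_cast Int.natCast_dvd_natCast.mpr hnat
    have h4 : (d:ℤ)*(p:ℤ) ∣ ((Int.gcd a ((Int.gcd b (m:ℤ) : ℕ) : ℤ) : ℕ) : ℤ) :=
      Int.dvd_coe_gcd h1 (Int.dvd_coe_gcd h2 h3)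
    rw [← hdval] at h4
    have h5 : d * p ∣ d * 1 := by
      rw [mul_one]
      exact_mod_cast h4
    have h6 : p ∣ 1 := (Nat.mul_dvd_mul_iff_left (Nat.pos_of_ne_zero hd0)).mp h5
    exact hp.one_lt.ne' (Nat.dvd_one.mp h6)
  have hUnit : IsUnit ((a' : ZMod m'₂)) := by
    have hab := Int.gcd_eq_gcd_ab a' (m'₂:ℤ)
    rw [hgcd_a'] at hab
    have h1 : ((a' * a'.gcdA (m'₂:ℤ) + (m'₂:ℤ) * a'.gcdB (m'₂:ℤ) : ℤ) : ZMod m'₂)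
        = ((1:ℤ) : ZMod m'₂) := by rw [← hab]; norm_num
    push_cast at h1
    rw [ZMod.natCast_self, zero_mul, add_zero] at h1
    exact IsUnit.of_mul_eq_one _ h1
  -- nilpotency of b' mod m'₂
  have hnilZ : (m'₂:ℤ) ∣ b' ^ m'₂ := by
    have := m2_dvd_pow m d T b' hTSp hTb'
    rwa [← hm'₂T] at this
  have hnil : ((b' : ZMod m'₂))^(m'₂) = 0 := by
    have := (ZMod.intCast_zmod_eq_zero_iff_dvd (b'^m'₂) m'₂).mpr hnilZ
    push_cast at this
    exact this
  constructor
  · -- FORWARD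
    intro hInf
    obtain ⟨X, hX0, hXrec⟩ := hInf.nonempty
    set x : ℕ → ℤ := fun n => ((X n).val : ℤ) with hxdef
    have hxX : ∀ n, ((x n : ℤ) : ZMod m) = X n := by
      intro n
      simp only [hxdef, Int.cast_natCast, ZMod.natCast_val, ZMod.cast_id,
        ZMod.intCast_zmod_cast]
    have hmod : ∀ n, (m:ℤ) ∣ b * x (n+1) - (a * x n + f n) := by
      intro n
      rw [← ZMod.intCast_zmod_eq_zero_iff_dvd]
      push_cast
      rw [hxX, hxX]
      rw [show ((b:ZMod m)) * X (n+1) = B * X (n+1) from rfl]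
      rw [hXrec n]
      ring
    have hdf : ∀ n, (d:ℤ) ∣ f n := by
      intro n
      have h1 : (d:ℤ) ∣ b * x (n+1) - (a * x n + f n) := hdmZ.trans (hmod n)
      have h2 : f n = b * x (n+1) - a * x n - (b * x (n+1) - (a * x n + f n)) := by ring
      rw [h2]
      exact dvd_sub (dvd_sub (hdb.mul_right _) (hda.mul_right _)) h1
    refine ⟨?_, hdf, ?_⟩
    · -- d ≠ 1
      intro hd1
      refine absurd hInf (Set.not_infinite.mpr (Set.Subsingleton.finite ?_))
      intro X1 hX1 X2 hX2
      obtain ⟨hX10, hX1rec⟩ := hX1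
      obtain ⟨hX20, hX2rec⟩ := hX2
      set G : ℤ := ((Int.gcd b (m:ℤ) : ℕ) : ℤ) with hGdef
      have h1 : (1:ℤ) = a * a.gcdA G + G * a.gcdB G := by
        have h := Int.gcd_eq_gcd_ab a G
        rw [← hdval, hd1] at h
        exact_mod_cast h
      have h2 : G = b * b.gcdA (m:ℤ) + (m:ℤ) * b.gcdB (m:ℤ) := Int.gcd_eq_gcd_ab b (m:ℤ)
      obtain ⟨u, v, hbez⟩ : ∃ u v : ZMod m, (1 : ZMod m) = A * u + B * v := by
        refine ⟨((a.gcdA G : ℤ) : ZMod m), ((b.gcdA (m:ℤ) * a.gcdB G : ℤ) : ZMod m), ?_⟩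
        have h3 : (1:ℤ) = a * a.gcdA G + b * (b.gcdA (m:ℤ) * a.gcdB G)
            + (m:ℤ) * (b.gcdB (m:ℤ) * a.gcdB G) := by rw [h1, h2]; ring
        calc (1 : ZMod m) = ((1:ℤ) : ZMod m) := by norm_num
          _ = _ := by
              rw [h3]
              push_cast
              rw [ZMod.natCast_self]
              ring
      set Z : ℕ → ZMod m := fun n => X1 n - X2 n with hZdef
      have hZ0 : Z 0 = 0 := by simp only [hZdef]; rw [hX10, hX20, sub_self]
      have hZrec : ∀ n, B * Z (n+1) = A * Z n := by
        intro n
        simp only [hZdef]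
        rw [mul_sub, mul_sub, hX1rec n, hX2rec n]
        ring
      have hpow : ∀ k n, ∃ w, Z n = B^k * w := by
        intro k
        induction k with
        | zero => intro n; exact ⟨Z n, by rw [pow_zero, one_mul]⟩
        | succ k ih =>
          intro n
          obtain ⟨w1, hw1⟩ := ih (n+1)
          obtain ⟨w2, hw2⟩ := ih n
          refine ⟨u * w1 + v * w2, ?_⟩
          calc Z n = (A * u + B * v) * Z n := by rw [← hbez, one_mul]
            _ = u * (A * Z n) + B * (v * Z n) := by ring
            _ = u * (B * Z (n+1)) + B * (v * Z n) := by rw [hZrec n]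
            _ = B * (u * Z (n+1)) + B * (v * Z n) := by ring
            _ = B * (u * (B^k * w1)) + B * (v * (B^k * w2)) := by rw [hw1, hw2]
            _ = B^(k+1) * (u * w1 + v * w2) := by ring
      obtain ⟨i, j, hij, hBij⟩ : ∃ i j : ℕ, i < j ∧ B^i = B^j := by
        obtain ⟨i, j, hne, heq⟩ := Finite.exists_ne_map_eq_of_infinite (fun k : ℕ => B^k)
        rcases hne.lt_or_gt with h | h
        · exact ⟨i, j, h, heq⟩
        · exact ⟨j, i, h, heq.symm⟩
      have hinj : ∀ z1 z2 : ZMod m, (∃ w, z1 = B^i * w) → (∃ w, z2 = B^i * w) →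
          B * z1 = B * z2 → z1 = z2 := by
        set SS : Set (ZMod m) := {z | ∃ w, z = B^i * w} with hSSdef
        have hmap : ∀ z ∈ SS, B * z ∈ SS := by
          rintro z ⟨w, rfl⟩
          exact ⟨B * w, by ring⟩
        set φ : SS → SS := fun z => ⟨B * z.1, hmap z.1 z.2⟩ with hφdef
        have hsurj : Function.Surjective φ := by
          rintro ⟨z, w, rfl⟩
          refine ⟨⟨B^(j-1) * w, ⟨B^(j-1-i) * w, ?_⟩⟩, ?_⟩
          · rw [← mul_assoc, ← pow_add]
            congr 2
            omega
          · simp only [hφdef, Subtype.mk.injEq]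
            rw [← mul_assoc, ← pow_succ']
            rw [hBij]
            congr 2
            omega
        have hinj' := Finite.injective_iff_surjective.mpr hsurj
        intro z1 z2 hz1 hz2 hBz
        have heq := hinj' (a₁ := ⟨z1, hz1⟩) (a₂ := ⟨z2, hz2⟩)
          (by simp only [hφdef, Subtype.mk.injEq]; exact hBz)
        exact congrArg Subtype.val heq
      have hZall : ∀ n, Z n = 0 := by
        intro n
        induction n with
        | zero => exact hZ0
        | succ n ih =>
          refine hinj (Z (n+1)) 0 (hpow i (n+1)) ⟨0, by rw [mul_zero]⟩ ?_
          rw [hZrec n, ih, mul_zero, mul_zero]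
      funext n
      have := hZall n
      simp only [hZdef] at this
      exact sub_eq_zero.mp this
    · -- the m'₂ condition
      by_cases h1 : m'₂ = 1
      · exact Or.inl h1
      refine Or.inr ⟨h1, ?_⟩
      intro k hk
      have hf' : ∀ n, (d:ℤ) * (f n / d) = f n := fun n => Int.mul_ediv_cancel' (hdf n)
      have hmodm'₂ : ∀ n, ((b' : ZMod m'₂)) * ((x (n+1) : ℤ) : ZMod m'₂)
          = ((a' : ZMod m'₂)) * ((x n : ℤ) : ZMod m'₂) + ((f n / (d:ℤ) : ℤ) : ZMod m'₂) := by
        intro n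
        have heq : b * x (n+1) - (a * x n + f n)
            = (d:ℤ) * (b' * x (n+1) - (a' * x n + f n / d)) := by
          linear_combination (-(x (n+1))) * hb' + (x n) * ha' + hf' n
        have h2 : (m:ℤ) ∣ (d:ℤ) * (b' * x (n+1) - (a' * x n + f n / d)) := by
          rw [← heq]; exact hmod n
        have h3 : (m':ℤ) ∣ (b' * x (n+1) - (a' * x n + f n / d)) := by
          have hmeq : (m:ℤ) = (d:ℤ) * (m':ℤ) := by exact_mod_cast hmdm'.symm
          rw [hmeq] at h2
          exact (mul_dvd_mul_iff_left hdZ0).mp h2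
        have h4 : ((m'₂:ℕ):ℤ) ∣ (b' * x (n+1) - (a' * x n + f n / d)) :=
          (Int.natCast_dvd_natCast.mpr hm'₂m').trans h3
        have h5 := (ZMod.intCast_zmod_eq_zero_iff_dvd _ m'₂).mpr h4
        push_cast at h5
        linear_combination h5
      have hx0 : ((x 0 : ℤ) : ZMod m'₂) = (y₀ : ZMod m'₂) := by
        have hx0m : ((x 0 : ℤ) : ZMod m) = (y₀ : ZMod m) := by rw [hxX 0, hX0]
        have := (ZMod.intCast_eq_intCast_iff _ _ _).mp hx0m
        exact (ZMod.intCast_eq_intCast_iff _ _ _).mpr (this.of_dvd (Int.natCast_dvd_natCast.mpr hm'₂m))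
      have hback := aux_back ((a' : ZMod m'₂)) ((b' : ZMod m'₂)) hUnit
        (fun s => ((f s / (d:ℤ) : ℤ) : ZMod m'₂)) (fun n => ((x n : ℤ) : ZMod m'₂)) hmodm'₂ k
      rw [mul_pow, hk, mul_zero, zero_mul, zero_sub] at hback
      rw [← hx0]
      exact hback
  · -- BACKWARD
    rintro ⟨hd1, hdf, hcond⟩
    have hf' : ∀ n, (d:ℤ) * (f n / d) = f n := fun n => Int.mul_ediv_cancel' (hdf n)
    set M₁ := ∏ p ∈ T, p ^ (m.factorization p) with hM₁def
    have hM₁m : M₁ ∣ m := M1_dvd_m m d T hm0 hdmN hTS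
    set M₂ := m / M₁ with hM₂def
    have hM₁M₂ : M₁ * M₂ = m := Nat.mul_div_cancel' hM₁m
    have hM₁0 : M₁ ≠ 0 := prod_pp_ne_zero T hTSp _
    have hM₂0 : M₂ ≠ 0 := by
      rw [hM₂def]
      exact (Nat.div_ne_zero_iff_of_dvd hM₁m).mpr ⟨hm0, hM₁0⟩
    have hcopM : Nat.Coprime M₁ M₂ := coprime_M2 m d T hm0 hdmN hTS _
    have hcopm'₂M₂ : Nat.Coprime m'₂ M₂ := by
      rw [hm'₂T]; exact coprime_M2 m d T hm0 hdmN hTS _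
    have hKL : ∀ w : ℤ, (M₁:ℤ) ∣ (d:ℤ)*w ↔ (m'₂:ℤ) ∣ w := by
      intro w
      rw [hm'₂T]
      exact KL m d T hm0 hdmN hTS w
    have hgbM₂ : (Int.gcd b (M₂:ℤ) : ℤ) ∣ (d:ℤ) :=
      gcd_b_M2_dvd_d m d T b hm0 hdmN hTS hdb hTc
    -- the candidate sequence mod m'₂
    set c : ℕ → ZMod m'₂ := fun n => -∑ s ∈ Finset.range m'₂,
      (Ring.inverse ((a' : ZMod m'₂)))^(s+1) * ((b' : ZMod m'₂))^s
        * ((f (n+s) / (d:ℤ) : ℤ) : ZMod m'₂) with hcdef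
    obtain ⟨K, hKeq⟩ : ∃ K, m'₂ = K + 1 := ⟨m'₂ - 1, by omega⟩
    have hcrec : ∀ n, ((b' : ZMod m'₂)) * c (n+1) = ((a' : ZMod m'₂)) * c n
        + ((f n / (d:ℤ) : ℤ) : ZMod m'₂) := by
      intro n
      have h := aux_c ((a' : ZMod m'₂)) ((b' : ZMod m'₂)) hUnit K
        (by rw [← hKeq]; exact hnil) (fun s => ((f s / (d:ℤ) : ℤ) : ZMod m'₂)) n
      simp only [hcdef, hKeq]
      simpa using h
    have hc0 : c 0 = (y₀ : ZMod m'₂) := by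
      rcases hcond with h1 | ⟨h1, hcond⟩
      · have hsub : Subsingleton (ZMod m'₂) := by rw [h1]; infer_instance
        exact @Subsingleton.elim _ hsub _ _
      · have h := hcond m'₂ hnil
        simp only [hcdef, zero_add]
        exact h.symm
    -- one step of the construction
    have hstep : ∀ (u : ℤ) (n : ℕ), ∃ z : ℤ,
        z ≡ ((c (n+1)).val : ℤ) [ZMOD (m'₂:ℤ)] ∧ b * z ≡ a * u + f n [ZMOD (M₂:ℤ)] := by
      intro u n
      have hdvd : (Int.gcd b (M₂:ℤ) : ℤ) ∣ a * u + f n :=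
        hgbM₂.trans (dvd_add (hda.mul_right u) (hdf n))
      obtain ⟨t, ht⟩ := hdvd
      set z₂ : ℤ := b.gcdA (M₂:ℤ) * t with hz₂def
      have hbz : b * z₂ ≡ a * u + f n [ZMOD (M₂:ℤ)] := by
        rw [Int.modEq_iff_dvd]
        refine ⟨b.gcdB (M₂:ℤ) * t, ?_⟩
        have hg := Int.gcd_eq_gcd_ab b (M₂:ℤ)
        rw [ht, hz₂def, hg]
        ring
      have hbezc : (1:ℤ) = (m'₂:ℤ) * ((m'₂:ℤ).gcdA (M₂:ℤ)) + (M₂:ℤ) * ((m'₂:ℤ).gcdB (M₂:ℤ)) := by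
        have hg := Int.gcd_eq_gcd_ab (m'₂:ℤ) (M₂:ℤ)
        have : Int.gcd (m'₂:ℤ) (M₂:ℤ) = 1 := by
          rw [Int.gcd_natCast_natCast]
          exact hcopm'₂M₂
        rw [this] at hg
        exact_mod_cast hg
      set α : ℤ := (m'₂:ℤ).gcdA (M₂:ℤ) with hαdef
      set β : ℤ := (m'₂:ℤ).gcdB (M₂:ℤ) with hβdef
      set γ : ℤ := ((c (n+1)).val : ℤ) with hγdef
      refine ⟨γ * (β * (M₂:ℤ)) + z₂ * (α * (m'₂:ℤ)), ?_, ?_⟩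
      · rw [Int.modEq_iff_dvd]
        refine ⟨γ * α - z₂ * α, ?_⟩
        linear_combination γ * hbezc
      · have hz : γ * (β * (M₂:ℤ)) + z₂ * (α * (m'₂:ℤ)) ≡ z₂ [ZMOD (M₂:ℤ)] := by
          rw [Int.modEq_iff_dvd]
          refine ⟨z₂ * β - γ * β, ?_⟩
          linear_combination z₂ * hbezc
        exact ((hz.mul_left b).trans hbz)
    -- the integer solution
    set x : ℕ → ℤ := fun n => Nat.rec y₀ (fun n xn => Classical.choose (hstep xn n)) n with hxdef
    have hx0 : x 0 = y₀ := rfl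
    have hxspec : ∀ n, x (n+1) ≡ ((c (n+1)).val : ℤ) [ZMOD (m'₂:ℤ)]
        ∧ b * x (n+1) ≡ a * x n + f n [ZMOD (M₂:ℤ)] :=
      fun n => Classical.choose_spec (hstep (x n) n)
    have hxc : ∀ n, ((x n : ℤ) : ZMod m'₂) = c n := by
      intro n
      cases n with
      | zero =>
        rw [hx0]
        exact hc0.symm
      | succ n =>
        have h := (ZMod.intCast_eq_intCast_iff _ _ _).mpr (hxspec n).1
        rw [h, Int.cast_natCast, ZMod.natCast_val, ZMod.cast_id]
    have hM₁eq : ∀ n, b * x (n+1) ≡ a * x n + f n [ZMOD (M₁:ℤ)] := by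
      intro n
      rw [Int.modEq_iff_dvd]
      have heq : (a * x n + f n) - b * x (n+1)
          = (d:ℤ) * ((a' * x n + f n / d) - b' * x (n+1)) := by
        linear_combination (x (n+1)) * hb' + (-(x n)) * ha' + (-1 : ℤ) * hf' n
      rw [heq, hKL]
      rw [← ZMod.intCast_zmod_eq_zero_iff_dvd]
      push_cast
      rw [hxc (n+1), hxc n]
      linear_combination -(hcrec n)
    have hmeq : ∀ n, b * x (n+1) ≡ a * x n + f n [ZMOD (m:ℤ)] := by
      intro n
      have h := (Int.modEq_and_modEq_iff_modEq_mul (by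
        simpa using hcopM)).mp ⟨hM₁eq n, (hxspec n).2⟩
      have : ((M₁:ℤ) * (M₂:ℤ)) = (m:ℤ) := by exact_mod_cast congrArg (Nat.cast : ℕ → ℤ) hM₁M₂
      rwa [this] at h
    -- the family of solutions
    obtain ⟨p, hp, hpd⟩ := Nat.exists_prime_and_dvd hd1
    have hpm : p ∣ m := hpd.trans hdmN
    have hpa : (p:ℤ) ∣ a := (Int.natCast_dvd_natCast.mpr hpd).trans hda
    have hpb : (p:ℤ) ∣ b := (Int.natCast_dvd_natCast.mpr hpd).trans hdb
    set t : ZMod m := ((m/p : ℕ) : ZMod m) with htdef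
    have hpt : ((p:ℕ) : ZMod m) * t = 0 := by
      rw [htdef, ← Nat.cast_mul, Nat.mul_div_cancel' hpm, ZMod.natCast_self]
    have hBt : B * t = 0 := by
      obtain ⟨b₃, hb₃⟩ := hpb
      show ((b : ℤ) : ZMod m) * t = 0
      rw [hb₃]
      push_cast
      rw [mul_assoc, mul_comm ((b₃ : ZMod m)) t, ← mul_assoc, hpt, zero_mul]
    have hAt : A * t = 0 := by
      obtain ⟨a₃, ha₃⟩ := hpa
      show ((a : ℤ) : ZMod m) * t = 0
      rw [ha₃]
      push_cast
      rw [mul_assoc, mul_comm ((a₃ : ZMod m)) t, ← mul_assoc, hpt, zero_mul]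
    have ht0 : t ≠ 0 := by
      rw [htdef, Ne, ZMod.natCast_eq_zero_iff]
      intro hcon
      have h1 : m / p < m := Nat.div_lt_self (by omega) hp.one_lt
      have h2 : m / p ≠ 0 := by
        have : p ≤ m := Nat.le_of_dvd (by omega) hpm
        have := Nat.div_pos this hp.pos
        omega
      have := Nat.le_of_dvd (Nat.pos_of_ne_zero h2) hcon
      omega
    -- base solution
    have hXsmem : ∀ N : ℕ,
        (fun n => ((x n : ℤ) : ZMod m) + (if N < n then t else 0))
          ∈ {X : ℕ → ZMod m | X 0 = Y₀ ∧ ∀ n : ℕ, B * X (n + 1) = A * X n + F n} := by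
      intro N
      constructor
      · show ((x 0 : ℤ) : ZMod m) + (if N < 0 then t else 0) = Y₀
        rw [hx0]
        simp; rfl
      · intro n
        have hbase : B * ((x (n+1) : ℤ) : ZMod m) = A * ((x n : ℤ) : ZMod m) + F n := by
          have h := (ZMod.intCast_eq_intCast_iff _ _ _).mpr (hmeq n)
          push_cast at h
          exact h
        show B * (((x (n+1) : ℤ) : ZMod m) + (if N < n+1 then t else 0))
            = A * (((x n : ℤ) : ZMod m) + (if N < n then t else 0)) + F n
        by_cases h1 : N < n
        · rw [if_pos h1, if_pos (by omega : N < n+1)]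
          rw [mul_add, mul_add, hBt, hAt, hbase]
          ring
        · by_cases h2 : N < n + 1
          · rw [if_pos h2, if_neg h1, add_zero, mul_add, hBt, hbase]
            ring
          · rw [if_neg h1, if_neg h2, add_zero, add_zero]
            exact hbase
    have hinj : Function.Injective
        (fun N : ℕ => (fun n => ((x n : ℤ) : ZMod m) + (if N < n then t else 0))) := by
      intro N N' hNN
      by_contra hne
      have key : ∀ N N' : ℕ, N < N' →
          (fun n => ((x n : ℤ) : ZMod m) + (if N < n then t else 0))
            = (fun n => ((x n : ℤ) : ZMod m) + (if N' < n then t else 0)) → False := by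
        intro N N' hlt heq
        have := congrFun heq (N+1)
        rw [if_pos (by omega), if_neg (by omega)] at this
        exact ht0 (by simpa using add_left_cancel this)
      rcases Nat.lt_or_ge N N' with h | h
      · exact key N N' h hNN
      · exact key N' N (by omega) hNN.symm
    exact Set.infinite_of_injective_forall_mem hinj hXsmem
end

section
/- The initial problem B * X (n+1) = A * X n + F n (for all n ∈ ℕ) together with X 0 = Y₀ has no solution X : ℕ → ZMod m if and only if either d ∤ f n for some n ∈ ℕ, or d ∣ f n for all n, m'₂ ≠ 1, and (y₀ : ZMod m'₂) ≠ - ∑_{s=0}^{k-1} (((a/d) : ZMod m'₂)⁻¹)^(s+1) * ((b/d) : ZMod m'₂)^s * ((f s / d) : ZMod m'₂), where k is any natural number with ((b/d) : ZMod m'₂)^k = 0. -/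
def SolInt (N : ℕ) (α β y : ℤ) (φ : ℕ → ℤ) : Prop :=
  ∃ x : ℕ → ℤ, x 0 ≡ y [ZMOD (N : ℤ)] ∧ ∀ n : ℕ, β * x (n + 1) ≡ α * x n + φ n [ZMOD (N : ℤ)]

lemma solInt_iff_zmod (N : ℕ) (α β y : ℤ) (φ : ℕ → ℤ) :
    (∃ X : ℕ → ZMod N, X 0 = (y : ZMod N) ∧
      ∀ n : ℕ, (β : ZMod N) * X (n + 1) = (α : ZMod N) * X n + (φ n : ZMod N)) ↔
    SolInt N α β y φ := by
  constructor
  · rintro ⟨X, hX0, hX⟩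
    choose x hx using fun n => ZMod.intCast_surjective (n := N) (X n)
    refine ⟨x, ?_, fun n => ?_⟩
    · rw [← ZMod.intCast_eq_intCast_iff, hx, hX0]
    · rw [← ZMod.intCast_eq_intCast_iff]
      push_cast
      rw [hx, hx, hX n]
  · rintro ⟨x, hx0, hx⟩
    refine ⟨fun n => ((x n : ℤ) : ZMod N), ?_, fun n => ?_⟩
    · rw [ZMod.intCast_eq_intCast_iff]; exact hx0
    · have := (ZMod.intCast_eq_intCast_iff _ _ N).mpr (hx n)
      push_cast at this
      exact this

lemma solInt_descale (N : ℕ) (dn : ℕ) (hd : dn ≠ 0) (α β y : ℤ) (ψ : ℕ → ℤ) :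
    SolInt (dn * N) ((dn : ℤ) * α) ((dn : ℤ) * β) y (fun n => (dn : ℤ) * ψ n) ↔
    SolInt N α β y ψ := by
  have hdz : (dn : ℤ) ≠ 0 := by exact_mod_cast hd
  have hdvd : (N : ℤ) ∣ ((dn * N : ℕ) : ℤ) := by push_cast; exact ⟨dn, by ring⟩
  constructor
  · rintro ⟨x, hx0, hx⟩
    refine ⟨x, hx0.of_dvd hdvd, fun n => ?_⟩
    have h := hx n
    rw [Int.modEq_iff_dvd] at h ⊢
    push_cast at h
    have : ((dn : ℤ) * (N : ℤ)) ∣ (dn : ℤ) * ((α * x n + ψ n) - β * x (n + 1)) := by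
      convert h using 1; ring
    exact (mul_dvd_mul_iff_left hdz).mp this
  · rintro ⟨x, hx0, hx⟩
    refine ⟨fun n => if n = 0 then y else x n, by simp [Int.ModEq.refl], fun n => ?_⟩
    have key : β * x (n + 1) ≡ α * (if n = 0 then y else x n) + ψ n [ZMOD (N : ℤ)] := by
      by_cases hn : n = 0
      · simp only [hn, if_pos]
        exact (hx 0).trans (Int.ModEq.add_right _ (Int.ModEq.mul_left _ hx0))
      · simp only [hn, if_neg, reduceIte]
        exact hx n
    simp only [Nat.succ_ne_zero, reduceIte]
    rw [Int.modEq_iff_dvd] at key ⊢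
    push_cast
    have : ((dn : ℤ) * (N : ℤ)) ∣ (dn : ℤ) *
        ((α * (if n = 0 then y else x n) + ψ n) - β * x (n + 1)) :=
      mul_dvd_mul_left _ key
    convert this using 1; ring

lemma solInt_crt (M N : ℕ) (h : Nat.Coprime M N) (α β y : ℤ) (φ : ℕ → ℤ) :
    SolInt (M * N) α β y φ ↔ SolInt M α β y φ ∧ SolInt N α β y φ := by
  have hco : IsCoprime (M : ℤ) (N : ℤ) := Nat.isCoprime_iff_coprime.mpr h
  have hdM : (M : ℤ) ∣ ((M * N : ℕ) : ℤ) := by push_cast; exact ⟨N, by ring⟩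
  have hdN : (N : ℤ) ∣ ((M * N : ℕ) : ℤ) := by push_cast; exact ⟨M, by ring⟩
  constructor
  · rintro ⟨x, hx0, hx⟩
    exact ⟨⟨x, hx0.of_dvd hdM, fun n => (hx n).of_dvd hdM⟩,
      ⟨x, hx0.of_dvd hdN, fun n => (hx n).of_dvd hdN⟩⟩
  · rintro ⟨⟨x₁, hx₁0, hx₁⟩, ⟨x₂, hx₂0, hx₂⟩⟩
    obtain ⟨u, v, huv⟩ := id hco
    set x : ℕ → ℤ := fun n => x₁ n * v * N + x₂ n * u * M with hxdef
    have hmodM : ∀ n, x n ≡ x₁ n [ZMOD (M : ℤ)] := by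
      intro n
      rw [Int.modEq_iff_dvd]
      have : x₁ n - x n = (x₁ n * u - x₂ n * u) * M := by
        have hv : v * N = 1 - u * M := by linarith [huv]
        simp only [hxdef]; rw [mul_assoc, hv]; ring
      rw [this]; exact ⟨_, mul_comm _ _⟩
    have hmodN : ∀ n, x n ≡ x₂ n [ZMOD (N : ℤ)] := by
      intro n
      rw [Int.modEq_iff_dvd]
      have : x₂ n - x n = (x₂ n * v - x₁ n * v) * N := by
        have hu : u * M = 1 - v * N := by linarith [huv]
        simp only [hxdef]; rw [mul_assoc (x₂ n), hu]; ring
      rw [this]; exact ⟨_, mul_comm _ _⟩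
    have comb : ∀ s t : ℤ, s ≡ t [ZMOD (M : ℤ)] → s ≡ t [ZMOD (N : ℤ)] →
        s ≡ t [ZMOD ((M * N : ℕ) : ℤ)] := by
      intro s t h1 h2
      rw [Int.modEq_iff_dvd] at h1 h2 ⊢
      push_cast
      exact hco.mul_dvd h1 h2
    refine ⟨x, comb _ _ ((hmodM 0).trans hx₁0) ((hmodN 0).trans hx₂0), fun n => ?_⟩
    refine comb _ _ ?_ ?_
    · exact ((hmodM (n+1)).mul_left β).trans ((hx₁ n).trans
        (Int.ModEq.add_right _ ((hmodM n).symm.mul_left α)))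
    · exact ((hmodN (n+1)).mul_left β).trans ((hx₂ n).trans
        (Int.ModEq.add_right _ ((hmodN n).symm.mul_left α)))

lemma solInt_unit (N : ℕ) (α β y : ℤ) (φ : ℕ → ℤ) (h : IsCoprime (N : ℤ) β) :
    SolInt N α β y φ := by
  obtain ⟨u, v, huv⟩ := h
  set x : ℕ → ℤ := fun n => Nat.rec y (fun k xk => v * (α * xk + φ k)) n with hxdef
  refine ⟨x, Int.ModEq.refl _, fun n => ?_⟩
  have hx : x (n + 1) = v * (α * x n + φ n) := rfl
  rw [hx, Int.modEq_iff_dvd]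
  have : (α * x n + φ n) - β * (v * (α * x n + φ n)) = (u * (α * x n + φ n)) * N := by
    have hb : β * v = 1 - u * N := by linarith [huv]
    rw [← mul_assoc, hb]; ring
  rw [this]
  exact ⟨_, mul_comm _ _⟩

lemma core_sum_indep {R : Type*} [CommRing R] (A B : R) (G : ℕ → R) {k k' : ℕ}
    (hkk' : k ≤ k') (hk : B ^ k = 0) :
    ∑ s ∈ Finset.range k', (Ring.inverse A) ^ (s + 1) * B ^ s * G s
      = ∑ s ∈ Finset.range k, (Ring.inverse A) ^ (s + 1) * B ^ s * G s := by
  rw [← Finset.sum_range_add_sum_Ico _ hkk']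
  have : ∑ s ∈ Finset.Ico k k', (Ring.inverse A) ^ (s + 1) * B ^ s * G s = 0 := by
    apply Finset.sum_eq_zero
    intro s hs
    have hks : k ≤ s := (Finset.mem_Ico.mp hs).1
    have : B ^ s = 0 := by
      rw [← Nat.sub_add_cancel hks, pow_add, hk, mul_zero]
    rw [this, mul_zero, zero_mul]
  rw [this, add_zero]

lemma core_iff {R : Type*} [CommRing R] (A B Y : R) (G : ℕ → R) (hA : IsUnit A) (k : ℕ)
    (hk : B ^ (k + 1) = 0) :
    (∃ χ : ℕ → R, χ 0 = Y ∧ ∀ n : ℕ, B * χ (n + 1) = A * χ n + G n) ↔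
      Y = -∑ s ∈ Finset.range (k + 1), (Ring.inverse A) ^ (s + 1) * B ^ s * G s := by
  set IA := Ring.inverse A with hIA
  have hIAA : IA * A = 1 := Ring.inverse_mul_cancel A hA
  have hAIA : A * IA = 1 := Ring.mul_inverse_cancel A hA
  constructor
  · rintro ⟨χ, hχ0, hχ⟩
    have step : ∀ n, χ n = IA * B * χ (n + 1) - IA * G n := by
      intro n
      have h1 := congrArg (fun t => IA * t) (hχ n)
      simp only [mul_add, ← mul_assoc, hIAA, one_mul] at h1
      linear_combination -h1
    have claim : ∀ j : ℕ, χ 0 = (IA * B) ^ j * χ j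
        - ∑ s ∈ Finset.range j, IA ^ (s + 1) * B ^ s * G s := by
      intro j
      induction j with
      | zero => simp
      | succ j ih =>
        rw [ih, step j, Finset.sum_range_succ]
        ring
    have hc := claim (k + 1)
    rw [mul_pow, hk, mul_zero, zero_mul, zero_sub] at hc
    rw [← hχ0, hc]
  · rintro hY
    refine ⟨fun n => -∑ s ∈ Finset.range (k + 1), IA ^ (s + 1) * B ^ s * G (n + s),
      ?_, fun n => ?_⟩
    · rw [hY]; simp
    · have hL : B * (-∑ s ∈ Finset.range (k + 1), IA ^ (s + 1) * B ^ s * G (n + 1 + s))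
          = -∑ s ∈ Finset.range k, IA ^ (s + 1) * B ^ (s + 1) * G (n + 1 + s) := by
        rw [mul_neg, Finset.mul_sum, neg_inj]
        rw [Finset.sum_congr rfl (fun s _ => show B * (IA ^ (s+1) * B ^ s * G (n+1+s))
          = IA ^ (s+1) * B ^ (s+1) * G (n+1+s) by ring)]
        rw [Finset.sum_range_succ, hk, mul_zero, zero_mul, add_zero]
      have hR : A * (-∑ s ∈ Finset.range (k + 1), IA ^ (s + 1) * B ^ s * G (n + s)) + G n
          = -∑ s ∈ Finset.range k, IA ^ (s + 1) * B ^ (s + 1) * G (n + 1 + s) := by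
        rw [mul_neg, Finset.mul_sum]
        rw [Finset.sum_congr rfl (fun s _ => show A * (IA ^ (s+1) * B ^ s * G (n+s))
          = IA ^ s * B ^ s * G (n + s) by
            rw [pow_succ IA s]; linear_combination (IA ^ s * B ^ s * G (n+s)) * hAIA)]
        rw [Finset.sum_range_succ']
        rw [Finset.sum_congr rfl (fun s _ => show IA ^ (s+1) * B ^ (s+1) * G (n + (s+1))
          = IA ^ (s+1) * B ^ (s+1) * G (n + 1 + s) by rw [show n + (s+1) = n + 1 + s by omega])]
        simp only [pow_zero, one_mul, Nat.add_zero]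
        ring
      rw [hL, hR]

theorem stmt_10 (m : ℕ) (hm : 2 ≤ m) (a b y₀ : ℤ) (f : ℕ → ℤ)
    (d : ℕ) (hdval : d = Int.gcd a (Int.gcd b (m : ℤ)))
    (m' : ℕ) (hm' : m' = m / d)
    (m'₂ : ℕ)
    (hm'₂ : m'₂ = ∏ p ∈ m'.primeFactors.filter (fun p : ℕ => (d : ℤ) * (p : ℤ) ∣ b),
      p ^ (m'.factorization p)) :
    let A : ZMod m := (a : ZMod m)
    let B : ZMod m := (b : ZMod m)
    let F : ℕ → ZMod m := fun n => (f n : ZMod m)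
    let Y₀ : ZMod m := (y₀ : ZMod m)
    ((¬ ∃ X : ℕ → ZMod m, X 0 = Y₀ ∧ ∀ n : ℕ, B * X (n + 1) = A * X n + F n) ↔
      ((∃ n : ℕ, ¬ (d : ℤ) ∣ f n) ∨
        ((∀ n : ℕ, (d : ℤ) ∣ f n) ∧ m'₂ ≠ 1 ∧
          ∀ k : ℕ, ((b / (d : ℤ) : ℤ) : ZMod m'₂) ^ k = 0 →
            (y₀ : ZMod m'₂) ≠ - ∑ s ∈ Finset.range k,
              (Ring.inverse ((a / (d : ℤ) : ℤ) : ZMod m'₂)) ^ (s + 1) *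
                ((b / (d : ℤ) : ℤ) : ZMod m'₂) ^ s *
                ((f s / (d : ℤ) : ℤ) : ZMod m'₂)))) := by
  intro A B F Y₀
  have hm0 : m ≠ 0 := by omega
  have hda : (d : ℤ) ∣ a := by rw [hdval]; exact Int.gcd_dvd_left _ _
  have hdbm : (d : ℤ) ∣ ((Int.gcd b (m : ℤ) : ℕ) : ℤ) := by rw [hdval]; exact Int.gcd_dvd_right _ _
  have hdb : (d : ℤ) ∣ b := hdbm.trans (Int.gcd_dvd_left _ _)
  have hdmz : (d : ℤ) ∣ (m : ℤ) := hdbm.trans (Int.gcd_dvd_right _ _)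
  have hdm : d ∣ m := Int.natCast_dvd_natCast.mp hdmz
  have hd0 : d ≠ 0 := by
    rintro rfl
    exact hm0 (Nat.eq_zero_of_zero_dvd hdm)
  have hdz0 : (d : ℤ) ≠ 0 := by exact_mod_cast hd0
  have hmm' : m = d * m' := by rw [hm', Nat.mul_div_cancel' hdm]
  have hm'0 : m' ≠ 0 := by
    intro h
    exact hm0 (by rw [hmm', h, mul_zero])
  have haa' : a = (d : ℤ) * (a / (d : ℤ)) := (Int.mul_ediv_cancel' hda).symm
  have hbb' : b = (d : ℤ) * (b / (d : ℤ)) := (Int.mul_ediv_cancel' hdb).symm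
  set m'₁ := ∏ p ∈ m'.primeFactors.filter (fun p : ℕ => ¬ ((d : ℤ) * (p : ℤ) ∣ b)),
    p ^ (m'.factorization p) with hm'₁
  have hprodall : ∏ p ∈ m'.primeFactors, p ^ (m'.factorization p) = m' := by
    rw [← Nat.support_factorization]
    exact Nat.factorization_prod_pow_eq_self hm'0
  have hsplit : m'₂ * m'₁ = m' := by
    rw [hm'₂, hm'₁, Finset.prod_filter_mul_prod_filter_not, hprodall]
  have hm'₂0 : m'₂ ≠ 0 := fun h => hm'0 (by rw [← hsplit, h, zero_mul])
  haveI : NeZero m'₂ := ⟨hm'₂0⟩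
  have hmem₂ : ∀ p : ℕ, p.Prime → p ∣ m'₂ → p ∈ m'.primeFactors ∧ (d : ℤ) * p ∣ b := by
    intro p pp hp
    rw [hm'₂] at hp
    obtain ⟨q, hq, hpq⟩ := pp.prime.exists_mem_finset_dvd hp
    have hq' := Finset.mem_filter.mp hq
    have hpq' : p = q := (Nat.prime_dvd_prime_iff_eq pp
      (Nat.prime_of_mem_primeFactors hq'.1)).mp (pp.dvd_of_dvd_pow hpq)
    subst hpq'
    exact ⟨hq'.1, hq'.2⟩
  have hmem₁ : ∀ p : ℕ, p.Prime → p ∣ m'₁ → p ∈ m'.primeFactors ∧ ¬ ((d : ℤ) * p ∣ b) := by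
    intro p pp hp
    rw [hm'₁] at hp
    obtain ⟨q, hq, hpq⟩ := pp.prime.exists_mem_finset_dvd hp
    have hq' := Finset.mem_filter.mp hq
    have hpq' : p = q := (Nat.prime_dvd_prime_iff_eq pp
      (Nat.prime_of_mem_primeFactors hq'.1)).mp (pp.dvd_of_dvd_pow hpq)
    subst hpq'
    exact ⟨hq'.1, hq'.2⟩
  have hcop12 : Nat.Coprime m'₂ m'₁ := by
    by_contra h
    obtain ⟨p, pp, hpd⟩ := Nat.exists_prime_and_dvd h
    exact (hmem₁ p pp (hpd.trans (Nat.gcd_dvd_right _ _))).2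
      (hmem₂ p pp (hpd.trans (Nat.gcd_dvd_left _ _))).2
  have hcop1b : IsCoprime (m'₁ : ℤ) (b / (d : ℤ)) := by
    rw [Int.isCoprime_iff_gcd_eq_one]
    by_contra h
    obtain ⟨p, pp, hpd⟩ := Nat.exists_prime_and_dvd h
    have hgcd : Int.gcd (m'₁ : ℤ) (b / (d : ℤ)) = Nat.gcd m'₁ (b / (d : ℤ)).natAbs := by
      simp [Int.gcd]
    rw [hgcd] at hpd
    have h1 : p ∣ m'₁ := hpd.trans (Nat.gcd_dvd_left _ _)
    have h2 : (p : ℤ) ∣ b / (d : ℤ) := Int.natCast_dvd.mpr (hpd.trans (Nat.gcd_dvd_right _ _))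
    refine (hmem₁ p pp h1).2 ?_
    calc (d : ℤ) * p ∣ (d : ℤ) * (b / (d : ℤ)) := mul_dvd_mul_left _ h2
    _ = b := hbb'.symm
  have hcopa : Nat.Coprime (a / (d : ℤ)).natAbs m'₂ := by
    by_contra h
    obtain ⟨p, pp, hpd⟩ := Nat.exists_prime_and_dvd h
    have h1 : (p : ℤ) ∣ a / (d : ℤ) := Int.natCast_dvd.mpr (hpd.trans (Nat.gcd_dvd_left _ _))
    have h2 : p ∣ m'₂ := hpd.trans (Nat.gcd_dvd_right _ _)
    obtain ⟨hpf, hpb⟩ := hmem₂ p pp h2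
    have hpm' : (p : ℤ) ∣ (m' : ℤ) := Int.natCast_dvd_natCast.mpr (Nat.dvd_of_mem_primeFactors hpf)
    have hda2 : (d : ℤ) * p ∣ a := by
      calc (d : ℤ) * p ∣ (d : ℤ) * (a / (d : ℤ)) := mul_dvd_mul_left _ h1
      _ = a := haa'.symm
    have hdm2 : (d : ℤ) * p ∣ (m : ℤ) := by
      have hmz : (m : ℤ) = (d : ℤ) * (m' : ℤ) := by exact_mod_cast hmm'
      rw [hmz]
      exact mul_dvd_mul_left _ hpm'
    have hdd : (d : ℤ) * p ∣ (d : ℤ) := by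
      conv_rhs => rw [hdval]
      exact Int.dvd_coe_gcd hda2 (Int.dvd_coe_gcd hpb hdm2)
    have hnat : d * p ∣ d := by exact_mod_cast hdd
    have hle := Nat.le_of_dvd (Nat.pos_of_ne_zero hd0) hnat
    have := pp.two_le
    have := Nat.pos_of_ne_zero hd0
    nlinarith
  have hAunit : IsUnit ((a / (d : ℤ) : ℤ) : ZMod m'₂) := by
    rcases Int.natAbs_eq (a / (d : ℤ)) with h | h
    · rw [h, Int.cast_natCast]
      exact (ZMod.isUnit_iff_coprime _ _).mpr hcopa
    · rw [h, Int.cast_neg, Int.cast_natCast]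
      exact ((ZMod.isUnit_iff_coprime _ _).mpr hcopa).neg
  have hnil : ∃ k : ℕ, ((b / (d : ℤ) : ℤ) : ZMod m'₂) ^ (k + 1) = 0 := by
    set c := (b / (d : ℤ)).natAbs with hc
    set K := ∑ p ∈ m'.primeFactors.filter (fun p : ℕ => (d : ℤ) * (p : ℤ) ∣ b),
      m'.factorization p with hK
    have hdvd : m'₂ ∣ c ^ (K + 1) := by
      have h1 : m'₂ ∣ c ^ K := by
        rw [hm'₂, hK, ← Finset.prod_pow_eq_pow_sum]
        apply Finset.prod_dvd_prod_of_dvd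
        intro p hp
        have hp' := Finset.mem_filter.mp hp
        have hpb : (p : ℤ) ∣ b / (d : ℤ) := by
          have hb2 : (d : ℤ) * (p : ℤ) ∣ (d : ℤ) * (b / (d : ℤ)) := by
            rw [← hbb']; exact hp'.2
          exact (mul_dvd_mul_iff_left hdz0).mp hb2
        exact pow_dvd_pow_of_dvd (Int.natCast_dvd.mp hpb) _
      exact h1.trans (pow_dvd_pow c (Nat.le_succ K))
    refine ⟨K, ?_⟩
    have hz : ((c : ℕ) : ZMod m'₂) ^ (K + 1) = 0 := by
      rw [← Nat.cast_pow, ZMod.natCast_eq_zero_iff]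
      exact hdvd
    rcases Int.natAbs_eq (b / (d : ℤ)) with h | h
    · rw [h, Int.cast_natCast]; exact hz
    · rw [h, Int.cast_neg, Int.cast_natCast, neg_pow, hz, mul_zero]
  by_cases hf : ∀ n : ℕ, (d : ℤ) ∣ f n
  · have hfg : f = fun n => (d : ℤ) * (f n / (d : ℤ)) :=
      funext fun n => (Int.mul_ediv_cancel' (hf n)).symm
    obtain ⟨k0, hk0⟩ := hnil
    have key : (∃ X : ℕ → ZMod m, X 0 = Y₀ ∧ ∀ n : ℕ, B * X (n + 1) = A * X n + F n) ↔
        ((y₀ : ZMod m'₂) = -∑ s ∈ Finset.range (k0 + 1),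
          (Ring.inverse ((a / (d : ℤ) : ℤ) : ZMod m'₂)) ^ (s + 1) *
            ((b / (d : ℤ) : ℤ) : ZMod m'₂) ^ s * ((f s / (d : ℤ) : ℤ) : ZMod m'₂)) := by
      have h1 : (∃ X : ℕ → ZMod m, X 0 = Y₀ ∧ ∀ n : ℕ, B * X (n + 1) = A * X n + F n) ↔
          SolInt m a b y₀ f := solInt_iff_zmod m a b y₀ f
      have h2 : SolInt m a b y₀ f ↔
          SolInt m' (a / (d : ℤ)) (b / (d : ℤ)) y₀ (fun n => f n / (d : ℤ)) := by
        conv_lhs => rw [hmm', haa', hbb', hfg]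
        exact solInt_descale m' d hd0 _ _ y₀ _
      have h3 : SolInt m' (a / (d : ℤ)) (b / (d : ℤ)) y₀ (fun n => f n / (d : ℤ)) ↔
          SolInt m'₂ (a / (d : ℤ)) (b / (d : ℤ)) y₀ (fun n => f n / (d : ℤ)) ∧
          SolInt m'₁ (a / (d : ℤ)) (b / (d : ℤ)) y₀ (fun n => f n / (d : ℤ)) := by
        conv_lhs => rw [← hsplit]
        exact solInt_crt m'₂ m'₁ hcop12 _ _ _ _
      have h4 : SolInt m'₁ (a / (d : ℤ)) (b / (d : ℤ)) y₀ (fun n => f n / (d : ℤ)) :=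
        solInt_unit _ _ _ _ _ hcop1b
      have h5 : SolInt m'₂ (a / (d : ℤ)) (b / (d : ℤ)) y₀ (fun n => f n / (d : ℤ)) ↔
          (∃ χ : ℕ → ZMod m'₂, χ 0 = ((y₀ : ℤ) : ZMod m'₂) ∧
            ∀ n : ℕ, ((b / (d : ℤ) : ℤ) : ZMod m'₂) * χ (n + 1) =
              ((a / (d : ℤ) : ℤ) : ZMod m'₂) * χ n + ((f n / (d : ℤ) : ℤ) : ZMod m'₂)) :=
        (solInt_iff_zmod m'₂ _ _ _ _).symm
      have h6 := core_iff ((a / (d : ℤ) : ℤ) : ZMod m'₂) ((b / (d : ℤ) : ℤ) : ZMod m'₂)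
        ((y₀ : ℤ) : ZMod m'₂) (fun n => ((f n / (d : ℤ) : ℤ) : ZMod m'₂)) hAunit k0 hk0
      exact h1.trans (h2.trans (h3.trans ((and_iff_left h4).trans (h5.trans h6))))
    rw [key]
    constructor
    · intro hP
      right
      refine ⟨hf, ?_, ?_⟩
      · intro h1
        exact hP (by subst h1; exact Subsingleton.elim _ _)
      · intro k hk hEq
        apply hP
        rcases le_total k (k0 + 1) with h | h
        · have hs := core_sum_indep ((a / (d : ℤ) : ℤ) : ZMod m'₂)
            ((b / (d : ℤ) : ℤ) : ZMod m'₂) (fun s => ((f s / (d : ℤ) : ℤ) : ZMod m'₂)) h hk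
          rw [hEq, hs]
        · have hs := core_sum_indep ((a / (d : ℤ) : ℤ) : ZMod m'₂)
            ((b / (d : ℤ) : ℤ) : ZMod m'₂) (fun s => ((f s / (d : ℤ) : ℤ) : ZMod m'₂)) h hk0
          rw [hEq, hs]
    · rintro (⟨n, hn⟩ | ⟨-, -, hall⟩)
      · exact absurd (hf n) hn
      · exact hall (k0 + 1) hk0
  · push_neg at hf
    have hno : ¬ (∃ X : ℕ → ZMod m, X 0 = Y₀ ∧ ∀ n : ℕ, B * X (n + 1) = A * X n + F n) := by
      intro hX
      obtain ⟨x, hx0, hx⟩ := (solInt_iff_zmod m a b y₀ f).mp hX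
      obtain ⟨n, hn⟩ := hf
      apply hn
      have hmod := hx n
      rw [Int.modEq_iff_dvd] at hmod
      have hdd : (d : ℤ) ∣ (a * x n + f n) - b * x (n + 1) := hdmz.trans hmod
      have hrw : f n = ((a * x n + f n) - b * x (n + 1)) - a * x n + b * x (n + 1) := by ring
      rw [hrw]
      exact dvd_add (dvd_sub hdd (hda.mul_right _)) (hdb.mul_right _)
    exact iff_of_true hno (Or.inl hf)
end

section
/- If d = 1, then the set of sequences X : ℕ → ZMod m satisfying B * X (n+1) = A * X n + F n for all n ∈ ℕ is finite and has exactly m₁ elements. -/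
section Aux

variable {N : ℕ}

/-- solution in the case `B` is a unit, with prescribed initial value. -/
private noncomputable def usol (A B : ZMod N) (F : ℕ → ZMod N) (hB : IsUnit B) (x : ZMod N) : ℕ → ZMod N
  | 0 => x
  | n + 1 => ↑hB.unit⁻¹ * (A * usol A B F hB x n + F n)
  termination_by structural n => n

private lemma usol_spec (A B : ZMod N) (F : ℕ → ZMod N) (hB : IsUnit B) (x : ZMod N) :
    ∀ n, B * usol A B F hB x (n + 1) = A * usol A B F hB x n + F n := by
  intro n
  show B * (↑hB.unit⁻¹ * _) = _
  rw [← mul_assoc, IsUnit.mul_val_inv, one_mul]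

private lemma usol_unique (A B : ZMod N) (F : ℕ → ZMod N) (hB : IsUnit B)
    (X : ℕ → ZMod N) (hX : ∀ n, B * X (n + 1) = A * X n + F n) :
    X = usol A B F hB (X 0) := by
  funext n
  induction n with
  | zero => rfl
  | succ n ih =>
    show X (n + 1) = ↑hB.unit⁻¹ * (A * usol A B F hB (X 0) n + F n)
    rw [← ih, ← hX n, ← mul_assoc, IsUnit.val_inv_mul, one_mul]

/-- solution in the case `A` is a unit and `B` is nilpotent. -/
private noncomputable def nsol (A B : ZMod N) (F : ℕ → ZMod N) (hA : IsUnit A) (K : ℕ) :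
    ℕ → ZMod N :=
  fun n => -∑ i ∈ Finset.range K, (↑hA.unit⁻¹ * B) ^ i * (↑hA.unit⁻¹ * F (n + i))

private lemma nsol_spec (A B : ZMod N) (F : ℕ → ZMod N) (hA : IsUnit A) (K : ℕ)
    (hK : B ^ K = 0) :
    ∀ n, B * nsol A B F hA K (n + 1) = A * nsol A B F hA K n + F n := by
  intro n
  set c : ZMod N := ↑hA.unit⁻¹ with hc
  have hAc : A * c = 1 := hA.mul_val_inv
  have hgK : (c * B) ^ K = 0 := by rw [mul_pow, hK, mul_zero]
  have key : nsol A B F hA K n = (c * B) * nsol A B F hA K (n + 1) - c * F n := by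
    show -∑ i ∈ Finset.range K, (c * B) ^ i * (c * F (n + i))
        = (c * B) * -(∑ i ∈ Finset.range K, (c * B) ^ i * (c * F (n + 1 + i))) - c * F n
    have h1 : ∀ i, (c * B) * ((c * B) ^ i * (c * F (n + 1 + i)))
        = (c * B) ^ (i + 1) * (c * F (n + (i + 1))) := by
      intro i
      have e1 : n + 1 + i = n + (i + 1) := by omega
      rw [e1]
      ring
    rw [mul_neg, Finset.mul_sum]
    simp only [h1]
    have h2 : ∑ i ∈ Finset.range K, (c * B) ^ (i + 1) * (c * F (n + (i + 1)))
        = ∑ i ∈ Finset.range (K + 1), (c * B) ^ i * (c * F (n + i))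
          - (c * B) ^ 0 * (c * F (n + 0)) := by
      rw [Finset.sum_range_succ']
      ring
    rw [h2, Finset.sum_range_succ, hgK, zero_mul, add_zero]
    simp only [pow_zero, one_mul, add_zero]
    ring
  have goal : B * nsol A B F hA K (n + 1) = A * nsol A B F hA K n + F n := by
    linear_combination (-A) * key + (F n - B * nsol A B F hA K (n + 1)) * hAc
  exact goal

private lemma nsol_unique {A B : ZMod N} {F : ℕ → ZMod N} (hA : IsUnit A) {K : ℕ}
    (hK : B ^ K = 0) (X Y : ℕ → ZMod N)
    (hX : ∀ n, B * X (n + 1) = A * X n + F n)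
    (hY : ∀ n, B * Y (n + 1) = A * Y n + F n) : X = Y := by
  set c : ZMod N := ↑hA.unit⁻¹ with hc
  have hAc : A * c = 1 := hA.mul_val_inv
  have step : ∀ n, X n - Y n = (c * B) * (X (n + 1) - Y (n + 1)) := by
    intro n
    have h1 := hX n
    have h2 := hY n
    linear_combination (-c) * h1 + c * h2 + (Y n - X n) * hAc
  have key : ∀ k n, X n - Y n = (c * B) ^ k * (X (n + k) - Y (n + k)) := by
    intro k
    induction k with
    | zero => intro n; simp
    | succ k ih =>
      intro n
      have e1 : n + (k + 1) = n + k + 1 := rfl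
      rw [e1]
      have h1 := ih n
      have h2 := step (n + k)
      linear_combination h1 + (c * B) ^ k * h2
  funext n
  have := key K n
  rw [mul_pow, hK, mul_zero, zero_mul] at this
  exact sub_eq_zero.mp this

private lemma prod_dvd_nat {s : Finset ℕ} {f : ℕ → ℕ} {n : ℕ}
    (hc : ∀ i ∈ s, ∀ j ∈ s, i ≠ j → Nat.Coprime (f i) (f j))
    (hd : ∀ i ∈ s, f i ∣ n) : ∏ i ∈ s, f i ∣ n := by
  classical
  induction s using Finset.induction with
  | empty => simp
  | @insert a s ha ih =>
    rw [Finset.prod_insert ha]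
    refine Nat.Coprime.mul_dvd_of_dvd_of_dvd ?_ (hd a (Finset.mem_insert_self a s)) ?_
    · apply Nat.Coprime.prod_right
      intro j hj
      exact hc a (Finset.mem_insert_self a s) j (Finset.mem_insert_of_mem hj)
        (fun h => ha (h ▸ hj))
    · exact ih (fun i hi j hj hij => hc i (Finset.mem_insert_of_mem hi)
        j (Finset.mem_insert_of_mem hj) hij) (fun i hi => hd i (Finset.mem_insert_of_mem hi))

end Aux

theorem stmt_11 (m : ℕ) (hm : 2 ≤ m) (a b : ℤ) (f : ℕ → ℤ)
    (d : ℕ) (hdval : d = Int.gcd a (Int.gcd b (m : ℤ)))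
    (m₁ : ℕ)
    (hm₁ : m₁ = ∏ p ∈ m.primeFactors.filter (fun p : ℕ => ¬ ((p : ℤ) ∣ b)),
      p ^ (m.factorization p))
    (hd : d = 1) :
    let A : ZMod m := (a : ZMod m)
    let B : ZMod m := (b : ZMod m)
    let F : ℕ → ZMod m := fun n => (f n : ZMod m)
    let S : Set (ℕ → ZMod m) := {X | ∀ n : ℕ, B * X (n + 1) = A * X n + F n}
    S.Finite ∧ S.ncard = m₁ := by
  intro A B F S
  have hm0 : m ≠ 0 := by omega
  set m₂ : ℕ := ∏ p ∈ m.primeFactors.filter (fun p : ℕ => (p : ℤ) ∣ b),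
      p ^ (m.factorization p) with hm₂
  -- m = m₁ * m₂
  have hm12 : m₁ * m₂ = m := by
    rw [hm₁, hm₂, Finset.prod_filter_not_mul_prod_filter]
    exact Nat.factorization_prod_pow_eq_self hm0
  have hpairwise : ∀ p ∈ m.primeFactors, ∀ q ∈ m.primeFactors, p ≠ q →
      Nat.Coprime (p ^ m.factorization p) (q ^ m.factorization q) := by
    intro p hp q hq hpq
    exact Nat.Coprime.pow _ _
      ((Nat.coprime_primes (Nat.prime_of_mem_primeFactors hp)
        (Nat.prime_of_mem_primeFactors hq)).mpr hpq)
  have hcop : Nat.Coprime m₁ m₂ := by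
    rw [hm₁, hm₂]
    apply Nat.Coprime.prod_left
    intro p hp
    apply Nat.Coprime.prod_right
    intro q hq
    simp only [Finset.mem_filter] at hp hq
    refine hpairwise p hp.1 q hq.1 ?_
    rintro rfl
    exact hp.2 hq.2
  haveI : NeZero m := ⟨hm0⟩
  have hm₁0 : m₁ ≠ 0 := fun h => hm0 (by rw [← hm12, h, zero_mul])
  have hm₂0 : m₂ ≠ 0 := fun h => hm0 (by rw [← hm12, h, mul_zero])
  haveI : NeZero m₁ := ⟨hm₁0⟩
  haveI : NeZero m₂ := ⟨hm₂0⟩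
  -- b is a unit mod m₁
  have hb1 : IsUnit ((b : ℤ) : ZMod m₁) := by
    have hco : Nat.Coprime b.natAbs m₁ := by
      rw [hm₁]
      apply Nat.Coprime.prod_right
      intro p hp
      simp only [Finset.mem_filter] at hp
      have hpb : ¬ p ∣ b.natAbs := fun h => hp.2 (Int.natCast_dvd.mpr h)
      exact (Nat.Coprime.pow_right _
        (((Nat.prime_of_mem_primeFactors hp.1).coprime_iff_not_dvd).mpr hpb).symm)
    have hu : IsUnit ((b.natAbs : ℕ) : ZMod m₁) := (ZMod.isUnit_iff_coprime _ _).mpr hco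
    rcases Int.natAbs_eq b with h | h
    · rw [h, Int.cast_natCast]; exact hu
    · rw [h, Int.cast_neg, Int.cast_natCast]; exact hu.neg
  -- a is a unit mod m₂
  have ha2 : IsUnit ((a : ℤ) : ZMod m₂) := by
    have hco : Nat.Coprime a.natAbs m₂ := by
      rw [hm₂]
      apply Nat.Coprime.prod_right
      intro p hp
      simp only [Finset.mem_filter] at hp
      have hpp := Nat.prime_of_mem_primeFactors hp.1
      have hpa : ¬ p ∣ a.natAbs := by
        intro hpa
        have h1 : (p : ℤ) ∣ a := Int.natCast_dvd.mpr hpa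
        have h2 : (p : ℤ) ∣ (Int.gcd b (m : ℤ) : ℤ) :=
          Int.dvd_coe_gcd hp.2 (Int.natCast_dvd_natCast.mpr (Nat.dvd_of_mem_primeFactors hp.1))
        have h3 : (p : ℤ) ∣ (Int.gcd a (Int.gcd b (m : ℤ) : ℤ) : ℤ) := Int.dvd_coe_gcd h1 h2
        rw [← hdval, hd] at h3
        exact hpp.one_lt.ne' (Nat.eq_one_of_dvd_one (Int.natCast_dvd_natCast.mp (by exact_mod_cast h3)))
      exact (Nat.Coprime.pow_right _ ((hpp.coprime_iff_not_dvd).mpr hpa).symm)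
    have hu : IsUnit ((a.natAbs : ℕ) : ZMod m₂) := (ZMod.isUnit_iff_coprime _ _).mpr hco
    rcases Int.natAbs_eq a with h | h
    · rw [h, Int.cast_natCast]; exact hu
    · rw [h, Int.cast_neg, Int.cast_natCast]; exact hu.neg
  -- b is nilpotent mod m₂
  have hb2 : ((b : ℤ) : ZMod m₂) ^ m = 0 := by
    have hdvd : m₂ ∣ b.natAbs ^ m := by
      rw [hm₂]
      apply prod_dvd_nat
      · intro i hi j hj hij
        simp only [Finset.mem_filter] at hi hj
        exact hpairwise i hi.1 j hj.1 hij
      · intro p hp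
        simp only [Finset.mem_filter] at hp
        have h1 : p ∣ b.natAbs := Int.natCast_dvd.mp hp.2
        calc p ^ m.factorization p ∣ p ^ m :=
              pow_dvd_pow p (le_of_lt (Nat.factorization_lt p hm0))
          _ ∣ b.natAbs ^ m := pow_dvd_pow_of_dvd h1 m
    have : ((m₂ : ℤ)) ∣ b ^ m := by
      rw [Int.natCast_dvd, Int.natAbs_pow]
      exact hdvd
    calc ((b : ℤ) : ZMod m₂) ^ m = ((b ^ m : ℤ) : ZMod m₂) := by push_cast; ring
      _ = 0 := (ZMod.intCast_zmod_eq_zero_iff_dvd _ _).mpr this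
  -- CRT
  have e : ZMod m ≃+* ZMod m₁ × ZMod m₂ := by
    rw [← hm12]; exact ZMod.chineseRemainder hcop
  have he : ∀ z : ℤ, e ((z : ℤ) : ZMod m) = (((z : ℤ) : ZMod m₁), ((z : ℤ) : ZMod m₂)) := by
    intro z
    rw [map_intCast]
    rfl
  set F₁ : ℕ → ZMod m₁ := fun n => ((f n : ℤ) : ZMod m₁) with hF₁
  set F₂ : ℕ → ZMod m₂ := fun n => ((f n : ℤ) : ZMod m₂) with hF₂
  set X₂ : ℕ → ZMod m₂ := nsol ((a : ℤ) : ZMod m₂) ((b : ℤ) : ZMod m₂) F₂ ha2 m with hX₂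
  set Φ : ZMod m₁ → (ℕ → ZMod m) :=
    fun x n => e.symm (usol ((a : ℤ) : ZMod m₁) ((b : ℤ) : ZMod m₁) F₁ hb1 x n, X₂ n) with hΦ
  have hΦapp : ∀ x n, e (Φ x n) =
      (usol ((a : ℤ) : ZMod m₁) ((b : ℤ) : ZMod m₁) F₁ hb1 x n, X₂ n) := by
    intro x n
    rw [hΦ]
    exact e.apply_symm_apply _
  have hrange : S = Set.range Φ := by
    ext X
    constructor
    · intro hX
      have hXmem : ∀ n : ℕ, B * X (n + 1) = A * X n + F n := hX
      set Y : ℕ → ZMod m₁ := fun n => (e (X n)).1 with hY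
      set Z : ℕ → ZMod m₂ := fun n => (e (X n)).2 with hZ
      have hcomp : ∀ n : ℕ,
          (((b : ℤ) : ZMod m₁) * Y (n + 1) = ((a : ℤ) : ZMod m₁) * Y n + F₁ n) ∧
          (((b : ℤ) : ZMod m₂) * Z (n + 1) = ((a : ℤ) : ZMod m₂) * Z n + F₂ n) := by
        intro n
        have h := congrArg e (hXmem n)
        rw [map_mul, map_add, map_mul, he b, he a, he (f n)] at h
        constructor
        · simpa using congrArg Prod.fst h
        · simpa using congrArg Prod.snd h
      have hYsol := usol_unique ((a : ℤ) : ZMod m₁) ((b : ℤ) : ZMod m₁) F₁ hb1 Y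
        (fun n => (hcomp n).1)
      have hZsol : Z = X₂ := nsol_unique ha2 hb2 Z X₂ (fun n => (hcomp n).2)
        (nsol_spec _ _ _ _ _ hb2)
      refine ⟨Y 0, ?_⟩
      funext n
      apply e.injective
      rw [hΦapp]
      have h2 : e (X n) = (Y n, Z n) := rfl
      rw [h2, Prod.mk.injEq]
      exact ⟨(congrFun hYsol n).symm, (congrFun hZsol n).symm⟩
    · rintro ⟨x, rfl⟩
      intro n
      apply e.injective
      have hBm : B = ((b : ℤ) : ZMod m) := rfl
      have hAm : A = ((a : ℤ) : ZMod m) := rfl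
      have hFm : F n = ((f n : ℤ) : ZMod m) := rfl
      rw [hBm, hAm, hFm, map_mul, map_add, map_mul, he b, he a, he (f n), hΦapp, hΦapp]
      ext
      · exact usol_spec _ _ _ _ _ n
      · exact nsol_spec _ _ _ _ _ hb2 n
  have hΦinj : Function.Injective Φ := by
    intro x y hxy
    have h := congrArg (fun X : ℕ → ZMod m => (e (X 0)).1) hxy
    simpa [hΦapp, usol] using h
  constructor
  · rw [hrange]; exact Set.finite_range Φ
  · rw [hrange, ← Set.image_univ, Set.ncard_image_of_injective _ hΦinj, Set.ncard_univ,
      Nat.card_zmod]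
end

section
/- The set of sequences X : ℕ → ZMod m satisfying B * X (n+1) = A * X n + F n for all n ∈ ℕ is finite and nonempty if and only if d = 1. -/
lemma aux_pow_idem {M : Type*} [Monoid M] [Finite M] (B : M) :
    ∃ N, 1 ≤ N ∧ B ^ (2 * N) = B ^ N := by
  obtain ⟨i, j, hne, hij⟩ := Finite.exists_ne_map_eq_of_infinite (fun k : ℕ => B ^ k)
  have key : ∀ i j : ℕ, i < j → B ^ i = B ^ j → ∃ N, 1 ≤ N ∧ B ^ (2 * N) = B ^ N := by
    intro i j hlt h
    set p := j - i with hp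
    have hp1 : 1 ≤ p := by omega
    have hstep : ∀ n, i ≤ n → B ^ n = B ^ (n + p) := by
      intro n hn
      have : B ^ n = B ^ i * B ^ (n - i) := by rw [← pow_add]; congr 1; omega
      rw [this, h, ← pow_add]
      congr 1; omega
    have hper : ∀ t n, i ≤ n → B ^ (n + t * p) = B ^ n := by
      intro t
      induction t with
      | zero => simp
      | succ t ih =>
        intro n hn
        have h1 : n + (t + 1) * p = (n + p) + t * p := by ring
        rw [h1, ih (n + p) (by omega), ← hstep n hn]
    refine ⟨(i + 1) * p, by nlinarith, ?_⟩
    have h2 : 2 * ((i + 1) * p) = (i + 1) * p + (i + 1) * p := by ring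
    rw [h2, hper (i + 1) ((i + 1) * p) (by nlinarith)]
  rcases lt_or_gt_of_ne hne with h | h
  · exact key i j h hij
  · exact key j i h hij.symm

section
variable {R : Type*} [CommRing R] (A B x y : R) (N : ℕ)

lemma aux_c_exists (hxy : x * A + y * B = 1) (hN1 : 1 ≤ N) (hN : B ^ (2 * N) = B ^ N) :
    ∃ c : R, c * (A * (1 - B ^ N)) = 1 - B ^ N := by
  have he : B ^ N * B ^ N = B ^ N := by
    rw [← pow_add, show N + N = 2 * N by ring, hN]
  have hBe : B ^ N * (1 - B ^ N) = 0 := by linear_combination -he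
  have h1e : (1 - B ^ N) * (1 - B ^ N) = 1 - B ^ N := by linear_combination he
  have h1epow : ∀ k, 1 ≤ k → (1 - B ^ N) ^ k = 1 - B ^ N := by
    intro k hk
    induction k with
    | zero => omega
    | succ k ih =>
      rcases Nat.eq_or_lt_of_le hk with h | h
      · simp [← h]
      · rw [pow_succ, ih (by omega), h1e]
  set t := y * B * (1 - B ^ N) with ht_def
  have htN : t ^ N = 0 := by
    rw [ht_def, mul_pow, mul_pow, h1epow N hN1, mul_assoc, hBe, mul_zero]
  set s := ∑ k ∈ Finset.range N, t ^ k with hs_def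
  have hgs := geom_sum_mul t N
  rw [htN, ← hs_def] at hgs
  have hs : s * (1 - t) = 1 := by linear_combination -hgs
  refine ⟨x * s, ?_⟩
  calc x * s * (A * (1 - B ^ N)) = s * ((x * A) * (1 - B ^ N)) := by ring
    _ = s * ((1 - t) * (1 - B ^ N)) := by
        rw [ht_def]; linear_combination (s * (1 - B ^ N)) * hxy + (s * y * B) * h1e
    _ = (s * (1 - t)) * (1 - B ^ N) := by ring
    _ = 1 - B ^ N := by rw [hs, one_mul]
end

section
variable {R : Type*} [CommRing R] (A B c : R) (N : ℕ)

lemma aux_unique (hc : c * (A * (1 - B ^ N)) = 1 - B ^ N) (hN1 : 1 ≤ N)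
    (hN : B ^ (2 * N) = B ^ N) (δ : ℕ → R)
    (hrec : ∀ n, B * δ (n + 1) = A * δ n) (h0 : δ 0 = 0) : ∀ n, δ n = 0 := by
  have he : B ^ N * B ^ N = B ^ N := by
    rw [← pow_add, show N + N = 2 * N by ring, hN]
  have hBe : B ^ N * (1 - B ^ N) = 0 := by linear_combination -he
  have hstep : ∀ n, (1 - B ^ N) * δ n = (c * B) * ((1 - B ^ N) * δ (n + 1)) := by
    intro n
    calc (1 - B ^ N) * δ n = (c * (A * (1 - B ^ N))) * δ n := by rw [hc]
      _ = c * ((1 - B ^ N) * (A * δ n)) := by ring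
      _ = c * ((1 - B ^ N) * (B * δ (n + 1))) := by rw [hrec n]
      _ = (c * B) * ((1 - B ^ N) * δ (n + 1)) := by ring
  have hiter : ∀ k n, (1 - B ^ N) * δ n = (c * B) ^ k * ((1 - B ^ N) * δ (n + k)) := by
    intro k
    induction k with
    | zero => intro n; simp
    | succ k ih =>
      intro n
      rw [hstep n, ih (n + 1), show n + 1 + k = n + (k + 1) by omega]
      ring
  have hvanish : ∀ n, (1 - B ^ N) * δ n = 0 := by
    intro n
    rw [hiter N n, mul_pow]
    calc c ^ N * B ^ N * ((1 - B ^ N) * δ (n + N))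
        = c ^ N * (B ^ N * (1 - B ^ N)) * δ (n + N) := by ring
      _ = 0 := by rw [hBe]; ring
  intro n
  induction n with
  | zero => exact h0
  | succ n ih =>
    have hB2 : B ^ (2 * N - 1) * B = B ^ N := by
      rw [← pow_succ, show 2 * N - 1 + 1 = 2 * N by omega, hN]
    calc δ (n + 1) = B ^ N * δ (n + 1) + (1 - B ^ N) * δ (n + 1) := by ring
      _ = B ^ (2 * N - 1) * (B * δ (n + 1)) + 0 := by rw [hvanish, ← mul_assoc, hB2]
      _ = B ^ (2 * N - 1) * (A * δ n) := by rw [hrec n]; ring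
      _ = 0 := by rw [ih]; ring
end

section
variable {R : Type*} [CommRing R] (A B c : R) (N : ℕ)

lemma aux_exists (hc : c * (A * (1 - B ^ N)) = 1 - B ^ N) (hN1 : 1 ≤ N)
    (hN : B ^ (2 * N) = B ^ N) (F : ℕ → R) :
    ∃ X : ℕ → R, ∀ n, B * X (n + 1) = A * X n + F n := by
  have he : B ^ N * B ^ N = B ^ N := by
    rw [← pow_add, show N + N = 2 * N by ring, hN]
  have hBe : B ^ N * (1 - B ^ N) = 0 := by linear_combination -he
  -- the "unit part" solution, defined by forward recursion
  let V : ℕ → R := fun n => Nat.rec 0 (fun k v => B ^ (2 * N - 1) * (A * v + B ^ N * F k)) n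
  have hVsucc : ∀ n, V (n + 1) = B ^ (2 * N - 1) * (A * V n + B ^ N * F n) := fun n => rfl
  have heV : ∀ n, B ^ N * V n = V n := by
    intro n
    induction n with
    | zero => simp [V]
    | succ n ih =>
      rw [hVsucc, ← mul_assoc, ← pow_add,
        show N + (2 * N - 1) = (N - 1) + 2 * N by omega, pow_add, hN, ← pow_add,
        show N - 1 + N = 2 * N - 1 by omega]
  have hV : ∀ n, B * V (n + 1) = A * V n + B ^ N * F n := by
    intro n
    rw [hVsucc, ← mul_assoc, ← pow_succ', show 2 * N - 1 + 1 = 2 * N by omega, hN]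
    calc B ^ N * (A * V n + B ^ N * F n) = A * (B ^ N * V n) + (B ^ N * B ^ N) * F n := by ring
      _ = A * V n + B ^ N * F n := by rw [heV, he]
  -- the "nilpotent part" solution, given by a closed formula
  let W : ℕ → R := fun n => -∑ k ∈ Finset.range N, c ^ (k + 1) * B ^ k * ((1 - B ^ N) * F (n + k))
  have hW : ∀ n, B * W (n + 1) = A * W n + (1 - B ^ N) * F n := by
    intro n
    set g : ℕ → R := fun k => c ^ k * B ^ k * ((1 - B ^ N) * F (n + k)) with hg
    have hgN : g N = 0 := by
      simp only [hg]
      calc c ^ N * B ^ N * ((1 - B ^ N) * F (n + N))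
          = c ^ N * (B ^ N * (1 - B ^ N)) * F (n + N) := by ring
        _ = 0 := by rw [hBe]; ring
    have hg0 : g 0 = (1 - B ^ N) * F n := by simp [hg]
    have hBW : B * W (n + 1) = -∑ k ∈ Finset.range N, g (k + 1) := by
      simp only [W, hg, mul_neg, Finset.mul_sum, neg_inj]
      apply Finset.sum_congr rfl
      intro k _
      rw [show n + 1 + k = n + (k + 1) by omega]
      ring
    have hAW : A * W n = -∑ k ∈ Finset.range N, g k := by
      simp only [W, hg, mul_neg, Finset.mul_sum, neg_inj]
      apply Finset.sum_congr rfl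
      intro k _
      calc A * (c ^ (k + 1) * B ^ k * ((1 - B ^ N) * F (n + k)))
          = (c * (A * (1 - B ^ N))) * (c ^ k * B ^ k * F (n + k)) := by ring
        _ = c ^ k * B ^ k * ((1 - B ^ N) * F (n + k)) := by rw [hc]; ring
    have htel : ∑ k ∈ Finset.range N, (g (k + 1) - g k) = g N - g 0 :=
      Finset.sum_range_sub g N
    rw [hBW, hAW]
    have : ∑ k ∈ Finset.range N, g (k + 1) - ∑ k ∈ Finset.range N, g k = g N - g 0 := by
      rw [← Finset.sum_sub_distrib, htel]
    rw [hgN, hg0] at this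
    linear_combination -this
  refine ⟨fun n => V n + W n, fun n => ?_⟩
  calc B * (V (n + 1) + W (n + 1)) = B * V (n + 1) + B * W (n + 1) := by ring
    _ = (A * V n + B ^ N * F n) + (A * W n + (1 - B ^ N) * F n) := by rw [hV, hW]
    _ = A * (V n + W n) + F n := by ring
end

lemma aux_bezout (m : ℕ) (a b : ℤ) (h : Int.gcd a (Int.gcd b (m : ℤ)) = 1) :
    ∃ x y : ZMod m, x * (a : ZMod m) + y * (b : ZMod m) = 1 := by
  have h1 := Int.gcd_eq_gcd_ab a ((Int.gcd b (m : ℤ) : ℤ))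
  have h2 := Int.gcd_eq_gcd_ab b (m : ℤ)
  rw [h] at h1
  set p := Int.gcdA a ((Int.gcd b (m : ℤ) : ℤ))
  set s := Int.gcdB a ((Int.gcd b (m : ℤ) : ℤ))
  set q := Int.gcdA b (m : ℤ)
  set r := Int.gcdB b (m : ℤ)
  have key : (1 : ℤ) = a * p + (b * q + (m : ℤ) * r) * s := by
    rw [← h2]; exact_mod_cast h1
  have key2 := congrArg (fun z : ℤ => (z : ZMod m)) key
  push_cast at key2
  rw [ZMod.natCast_self] at key2
  exact ⟨p, q * s, by linear_combination -key2⟩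

theorem stmt_12 (m : ℕ) (hm : 2 ≤ m) (a b : ℤ) (f : ℕ → ℤ)
    (d : ℕ) (hdval : d = Int.gcd a (Int.gcd b (m : ℤ))) :
    let A : ZMod m := (a : ZMod m)
    let B : ZMod m := (b : ZMod m)
    let F : ℕ → ZMod m := fun n => (f n : ZMod m)
    let S : Set (ℕ → ZMod m) := {X | ∀ n : ℕ, B * X (n + 1) = A * X n + F n}
    ((S.Finite ∧ S.Nonempty) ↔ d = 1) := by
  intro A B F S
  haveI : NeZero m := ⟨by omega⟩
  constructor
  · rintro ⟨hfin, X, hX⟩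
    by_contra hd1
    have hda : (d : ℤ) ∣ a := hdval ▸ Int.gcd_dvd_left a _
    have hdg : (d : ℤ) ∣ ((Int.gcd b (m : ℤ) : ℕ) : ℤ) := hdval ▸ Int.gcd_dvd_right a _
    have hdb : (d : ℤ) ∣ b := hdg.trans (Int.gcd_dvd_left _ _)
    have hdmZ : (d : ℤ) ∣ (m : ℤ) := hdg.trans (Int.gcd_dvd_right _ _)
    have hdm : d ∣ m := Int.natCast_dvd_natCast.mp hdmZ
    have hd0 : d ≠ 0 := by
      rintro rfl
      rw [zero_dvd_iff] at hdm
      omega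
    have hd2 : 2 ≤ d := by omega
    have hdm' : d * (m / d) = m := Nat.mul_div_cancel' hdm
    set c0 : ZMod m := ((m / d : ℕ) : ZMod m) with hc0def
    have hc0 : c0 ≠ 0 := by
      rw [hc0def, Ne, ZMod.natCast_eq_zero_iff]
      intro hdvd
      have h1 : m / d < m := Nat.div_lt_self (by omega) (by omega)
      have h2 : 0 < m / d := Nat.div_pos (Nat.le_of_dvd (by omega) hdm) (by omega)
      have := Nat.le_of_dvd h2 hdvd
      omega
    have key : ∀ z : ℤ, (d : ℤ) ∣ z → (z : ZMod m) * c0 = 0 := by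
      rintro z ⟨w, hw⟩
      have hzm : (z * ((m / d : ℕ) : ℤ) : ℤ) = w * (m : ℤ) := by
        rw [hw]
        rw [show (w : ℤ) * (m : ℤ) = w * ((d * (m / d) : ℕ) : ℤ) by rw [hdm']]
        push_cast
        ring
      have h3 := congrArg (fun z : ℤ => (z : ZMod m)) hzm
      simp only [Int.cast_mul, Int.cast_natCast, ZMod.natCast_self, mul_zero] at h3
      exact h3
    have hAc : A * c0 = 0 := key a hda
    have hBc : B * c0 = 0 := key b hdb
    set φ : ℕ → (ℕ → ZMod m) := fun n₀ k => X k + if k = n₀ then c0 else 0 with hφ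
    have hmem : ∀ n₀, φ n₀ ∈ S := by
      intro n₀ n
      show B * (X (n + 1) + if n + 1 = n₀ then c0 else 0)
          = A * (X n + if n = n₀ then c0 else 0) + F n
      simp only [mul_add, mul_ite, mul_zero, hAc, hBc, ite_self, add_zero]
      exact hX n
    have hinj : Function.Injective φ := by
      intro i j hij
      by_contra hne
      have h1 := congrFun hij i
      simp only [hφ, ite_true, if_neg hne, add_right_inj, add_zero] at h1
      exact hc0 (by rwa [add_eq_left] at h1)
    exact Set.infinite_of_injective_forall_mem hinj hmem hfin
  · intro hd1
    rw [hdval] at hd1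
    obtain ⟨x, y, hxy⟩ := aux_bezout m a b hd1
    obtain ⟨N, hN1, hN⟩ := aux_pow_idem (B : ZMod m)
    obtain ⟨c, hc⟩ := aux_c_exists A B x y N hxy hN1 hN
    constructor
    · haveI : Finite ↥S := by
        apply Finite.of_injective (fun X : ↥S => (X : ℕ → ZMod m) 0)
        rintro ⟨X, hX⟩ ⟨Y, hY⟩ hXY
        have hzero := aux_unique A B c N hc hN1 hN (fun n => X n - Y n) ?_ ?_
        · exact Subtype.ext (funext fun n => sub_eq_zero.mp (hzero n))
        · intro n
          have h1 : B * X (n + 1) = A * X n + F n := hX n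
          have h2 : B * Y (n + 1) = A * Y n + F n := hY n
          linear_combination h1 - h2
        · simpa using sub_eq_zero.mpr hXY
      exact Set.toFinite S
    · obtain ⟨X, hX⟩ := aux_exists A B c N hc hN1 hN F
      exact ⟨X, hX⟩
end

section
/- The set of sequences X : ℕ → ZMod m satisfying B * X (n+1) = A * X n + F n for all n ∈ ℕ is infinite if and only if d ≠ 1 and d ∣ f n for all n ∈ ℕ. -/
section Stmt13Aux

variable {R : Type*} [CommRing R]

def Yaux13 (u β : R) (φ : ℕ → R) : ℕ → ℕ → R
  | 0, _ => 0
  | (j+1), n => u * (β * Yaux13 u β φ j (n+1) - φ n)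

lemma Yaux13_succ (u β : R) (φ : ℕ → R) (j n : ℕ) :
    Yaux13 u β φ (j+1) n = u * (β * Yaux13 u β φ j (n+1) - φ n) := rfl

lemma Yaux13_diff (u β : R) (φ : ℕ → R) (j : ℕ) :
    ∀ n, ∃ c, Yaux13 u β φ (j+1) n - Yaux13 u β φ j n = β ^ j * c := by
  induction j with
  | zero => intro n; exact ⟨Yaux13 u β φ 1 n, by simp [Yaux13]⟩
  | succ j ih =>
      intro n
      obtain ⟨c, hc⟩ := ih (n+1)
      refine ⟨u * c, ?_⟩
      rw [Yaux13_succ u β φ (j+1) n, Yaux13_succ u β φ j n]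
      linear_combination u * β * hc

lemma Yaux13_sol (u β α : R) (φ : ℕ → R) (hu : u * α = 1) (M : ℕ) (hM1 : 1 ≤ M)
    (hM : β ^ M = 0) (n : ℕ) :
    β * Yaux13 u β φ M (n+1) = α * Yaux13 u β φ M n + φ n := by
  obtain ⟨M', rfl⟩ : ∃ M', M = M' + 1 := ⟨M - 1, by omega⟩
  obtain ⟨c, hc⟩ := Yaux13_diff u β φ M' (n+1)
  have h1 : α * Yaux13 u β φ (M'+1) n + φ n = β * Yaux13 u β φ M' (n+1) := by
    rw [Yaux13_succ]
    linear_combination (β * Yaux13 u β φ M' (n+1) - φ n) * hu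
  have h2 : β * Yaux13 u β φ (M'+1) (n+1) = β * Yaux13 u β φ M' (n+1) := by
    linear_combination β * hc + c * hM
  rw [h2, h1]

def Zaux13 (v α : R) (φ : ℕ → R) : ℕ → R
  | 0 => 0
  | n+1 => v * (α * Zaux13 v α φ n + φ n)

lemma Zaux13_sol (v α β : R) (φ : ℕ → R) (hv : v * β = 1) (n : ℕ) :
    β * Zaux13 v α φ (n+1) = α * Zaux13 v α φ n + φ n := by
  show β * (v * (α * Zaux13 v α φ n + φ n)) = _
  linear_combination (α * Zaux13 v α φ n + φ n) * hv

end Stmt13Aux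

lemma setup13 (m : ℕ) (hm : 0 < m) (a b : ℤ) (h1 : Int.gcd a ↑(Int.gcd b ↑m) = 1) :
    ∃ g hh : ℕ, 0 < g ∧ 0 < hh ∧ g * hh = m ∧ Nat.Coprime g hh ∧
      (g:ℤ) ∣ b ^ m ∧ Int.gcd a ↑g = 1 ∧ Int.gcd b ↑hh = 1 := by
  set g : ℕ := Int.gcd (b ^ m) ↑m with hg
  have hgbm : (g:ℤ) ∣ b ^ m := (Int.gcd_dvd_left _ _)
  have hgmZ : (g:ℤ) ∣ (m:ℤ) := (Int.gcd_dvd_right _ _)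
  have hgm : g ∣ m := Int.ofNat_dvd.mp hgmZ
  have hgpos : 0 < g := by
    rcases Nat.eq_zero_or_pos g with h0 | h
    · exfalso
      have h2 := Int.gcd_eq_zero_iff.mp h0
      have : (m:ℤ) = 0 := h2.2
      omega
    · exact h
  set hh : ℕ := m / g with hhdef
  have hmul : g * hh = m := Nat.mul_div_cancel' hgm
  have hhpos : 0 < hh := by
    rcases Nat.eq_zero_or_pos hh with h0 | h
    · rw [h0, mul_zero] at hmul; omega
    · exact h
  have hcop : Nat.Coprime g hh := by
    by_contra hcon
    obtain ⟨p, hp, hpg, hph⟩ := Nat.Prime.not_coprime_iff_dvd.mp hcon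
    have hpZ : Prime (p:ℤ) := Nat.prime_iff_prime_int.mp hp
    have hpb : (p:ℤ) ∣ b := hpZ.dvd_of_dvd_pow ((Int.ofNat_dvd.mpr hpg).trans hgbm)
    set e : ℕ := m.factorization p with he
    have hem : p ^ e ∣ m := Nat.ordProj_dvd m p
    have helt : e ≤ m := le_of_lt (Nat.factorization_lt p hm.ne')
    have hpeb : ((p:ℤ)) ^ e ∣ b ^ m :=
      dvd_trans (pow_dvd_pow_of_dvd hpb e) (pow_dvd_pow b helt)
    have hpeg : p ^ e ∣ g := by
      have h3 : ((p ^ e : ℕ) : ℤ) ∣ (g : ℤ) := by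
        push_cast
        exact Int.dvd_coe_gcd hpeb (by exact_mod_cast Int.ofNat_dvd.mpr hem)
      exact_mod_cast h3
    have h4 : p ^ (e + 1) ∣ m := by
      rw [← hmul, pow_succ]
      exact mul_dvd_mul hpeg hph
    exact Nat.pow_succ_factorization_not_dvd hm.ne' hp h4
  have hag : Int.gcd a ↑g = 1 := by
    by_contra hcon
    obtain ⟨p, hp, hpd⟩ := Nat.exists_prime_and_dvd hcon
    have hpZ : Prime (p:ℤ) := Nat.prime_iff_prime_int.mp hp
    have hpa : (p:ℤ) ∣ a := (Int.ofNat_dvd.mpr hpd).trans (Int.gcd_dvd_left _ _)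
    have hpgZ : (p:ℤ) ∣ (g:ℤ) := (Int.ofNat_dvd.mpr hpd).trans (Int.gcd_dvd_right _ _)
    have hpb : (p:ℤ) ∣ b := hpZ.dvd_of_dvd_pow (hpgZ.trans hgbm)
    have hpm : (p:ℤ) ∣ (m:ℤ) := hpgZ.trans hgmZ
    have hpone : (p:ℤ) ∣ (1:ℤ) := by
      calc (p:ℤ) ∣ ↑(Int.gcd a ↑(Int.gcd b ↑m)) := Int.dvd_coe_gcd hpa (Int.dvd_coe_gcd hpb hpm)
        _ = 1 := by rw [h1]; norm_num
    have := Int.le_of_dvd one_pos hpone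
    have := hp.two_le
    omega
  have hbh : Int.gcd b ↑hh = 1 := by
    by_contra hcon
    obtain ⟨p, hp, hpd⟩ := Nat.exists_prime_and_dvd hcon
    have hpb : (p:ℤ) ∣ b := (Int.ofNat_dvd.mpr hpd).trans (Int.gcd_dvd_left _ _)
    have hph : p ∣ hh := Int.ofNat_dvd.mp ((Int.ofNat_dvd.mpr hpd).trans (Int.gcd_dvd_right _ _))
    have hpm : p ∣ m := hph.trans ⟨g, by rw [← hmul]; ring⟩
    have hpg : p ∣ g := by
      have : ((p:ℕ):ℤ) ∣ (g:ℤ) :=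
        Int.dvd_coe_gcd (dvd_trans hpb (dvd_pow_self b hm.ne')) (Int.ofNat_dvd.mpr hpm)
      exact_mod_cast this
    have : p ∣ Nat.gcd g hh := Nat.dvd_gcd hpg hph
    rw [hcop] at this
    have := Nat.le_of_dvd one_pos this
    have := hp.two_le
    omega
  exact ⟨g, hh, hgpos, hhpos, hmul, hcop, hgbm, hag, hbh⟩

lemma bez13 (a : ℤ) (k : ℕ) (h : Int.gcd a ↑k = 1) : ∃ u : ZMod k, u * (a : ZMod k) = 1 := by
  obtain ⟨p, q, hpq⟩ := Int.isCoprime_iff_gcd_eq_one.mpr h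
  refine ⟨(p : ZMod k), ?_⟩
  have := congrArg (fun z : ℤ => (z : ZMod k)) hpq
  push_cast at this
  simpa using this

lemma exists13 (m : ℕ) (hm : 0 < m) (a b : ℤ) (f : ℕ → ℤ)
    (h1 : Int.gcd a ↑(Int.gcd b ↑m) = 1) :
    ∃ x : ℕ → ℤ, ∀ n, (m:ℤ) ∣ (b * x (n+1) - (a * x n + f n)) := by
  obtain ⟨g, hh, hgpos, hhpos, hmul, hcop, hgbm, hag, hbh⟩ := setup13 m hm a b h1
  haveI : NeZero g := ⟨hgpos.ne'⟩
  haveI : NeZero hh := ⟨hhpos.ne'⟩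
  obtain ⟨u, hu⟩ := bez13 a g hag
  obtain ⟨v, hv⟩ := bez13 b hh hbh
  have hβ : ((b : ZMod g)) ^ m = 0 := by
    have h2 : ((b ^ m : ℤ) : ZMod g) = 0 := (ZMod.intCast_zmod_eq_zero_iff_dvd _ _).mpr hgbm
    push_cast at h2
    exact h2
  set φg : ℕ → ZMod g := fun n => ((f n : ℤ) : ZMod g) with hφg
  set φh : ℕ → ZMod hh := fun n => ((f n : ℤ) : ZMod hh) with hφh
  set y : ℕ → ZMod g := Yaux13 u (b : ZMod g) φg m with hy
  set z : ℕ → ZMod hh := Zaux13 v (a : ZMod hh) φh with hz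
  set x : ℕ → ℤ := fun n => ((Nat.chineseRemainder hcop (y n).val (z n).val : ℕ) : ℤ) with hx
  have hxg : ∀ n, ((x n : ℤ) : ZMod g) = y n := by
    intro n
    have h3 : ((Nat.chineseRemainder hcop (y n).val (z n).val : ℕ) : ZMod g)
        = ((y n).val : ZMod g) :=
      (ZMod.natCast_eq_natCast_iff _ _ _).mpr (Nat.chineseRemainder hcop (y n).val (z n).val).2.1
    rw [hx]
    push_cast
    rw [h3, ZMod.natCast_rightInverse (y n)]
  have hxh : ∀ n, ((x n : ℤ) : ZMod hh) = z n := by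
    intro n
    have h3 : ((Nat.chineseRemainder hcop (y n).val (z n).val : ℕ) : ZMod hh)
        = ((z n).val : ZMod hh) :=
      (ZMod.natCast_eq_natCast_iff _ _ _).mpr (Nat.chineseRemainder hcop (y n).val (z n).val).2.2
    rw [hx]
    push_cast
    rw [h3, ZMod.natCast_rightInverse (z n)]
  refine ⟨x, fun n => ?_⟩
  have hdg : (g:ℤ) ∣ (b * x (n+1) - (a * x n + f n)) := by
    rw [← ZMod.intCast_zmod_eq_zero_iff_dvd]
    push_cast
    rw [hxg, hxg]
    have := Yaux13_sol u (b : ZMod g) (a : ZMod g) φg hu m hm hβ n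
    rw [← hy] at this
    rw [this]
    ring
  have hdh : (hh:ℤ) ∣ (b * x (n+1) - (a * x n + f n)) := by
    rw [← ZMod.intCast_zmod_eq_zero_iff_dvd]
    push_cast
    rw [hxh, hxh]
    have := Zaux13_sol v (a : ZMod hh) (b : ZMod hh) φh hv n
    rw [← hz] at this
    rw [this]
    ring
  have hcopZ : IsCoprime (g:ℤ) (hh:ℤ) := by
    rw [Int.isCoprime_iff_gcd_eq_one, Int.gcd_natCast_natCast]; exact hcop
  have := hcopZ.mul_dvd hdg hdh
  rw [show ((g:ℤ) * hh) = (m:ℤ) by exact_mod_cast congrArg (Nat.cast : ℕ → ℤ) hmul] at this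
  exact this

lemma unique13 (m : ℕ) (hm : 0 < m) (a b : ℤ)
    (h1 : Int.gcd a ↑(Int.gcd b ↑m) = 1) (D : ℕ → ℤ)
    (hD : ∀ n, (m:ℤ) ∣ b * D (n+1) - a * D n) (h0 : (m:ℤ) ∣ D 0) :
    ∀ n, (m:ℤ) ∣ D n := by
  obtain ⟨g, hh, hgpos, hhpos, hmul, hcop, hgbm, hag, hbh⟩ := setup13 m hm a b h1
  obtain ⟨u, hu⟩ := bez13 a g hag
  obtain ⟨v, hv⟩ := bez13 b hh hbh
  have hgmZ : (g:ℤ) ∣ (m:ℤ) := ⟨hh, by exact_mod_cast congrArg (Nat.cast : ℕ → ℤ) hmul.symm⟩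
  have hhmZ : (hh:ℤ) ∣ (m:ℤ) := ⟨g, by push_cast [← hmul]; ring⟩
  have hβ : ((b : ZMod g)) ^ m = 0 := by
    have h2 : ((b ^ m : ℤ) : ZMod g) = 0 := (ZMod.intCast_zmod_eq_zero_iff_dvd _ _).mpr hgbm
    push_cast at h2
    exact h2
  set δ : ℕ → ZMod g := fun n => ((D n : ℤ) : ZMod g) with hδ
  have hstep : ∀ n, (b : ZMod g) * δ (n+1) = (a : ZMod g) * δ n := by
    intro n
    have h2 : ((b * D (n+1) - a * D n : ℤ) : ZMod g) = 0 :=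
      (ZMod.intCast_zmod_eq_zero_iff_dvd _ _).mpr (hgmZ.trans (hD n))
    push_cast at h2
    linear_combination h2
  have hiter : ∀ k n, δ n = (u * (b : ZMod g)) ^ k * δ (n + k) := by
    intro k
    induction k with
    | zero => intro n; simp
    | succ k ih =>
        intro n
        have h3 : δ n = u * (b : ZMod g) * δ (n+1) := by
          have := hstep n
          calc δ n = (u * (a : ZMod g)) * δ n := by rw [hu, one_mul]
            _ = u * ((a : ZMod g) * δ n) := by ring
            _ = u * ((b : ZMod g) * δ (n+1)) := by rw [← this]
            _ = u * (b : ZMod g) * δ (n+1) := by ring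
        rw [h3, ih (n+1)]
        ring_nf
  have hgD : ∀ n, (g:ℤ) ∣ D n := by
    intro n
    have h4 := hiter m n
    have h5 : (u * (b : ZMod g)) ^ m = 0 := by
      rw [mul_pow, hβ, mul_zero]
    rw [h5, zero_mul] at h4
    rw [← ZMod.intCast_zmod_eq_zero_iff_dvd]
    exact h4
  set η : ℕ → ZMod hh := fun n => ((D n : ℤ) : ZMod hh) with hη
  have hstep2 : ∀ n, η (n+1) = v * (a : ZMod hh) * η n := by
    intro n
    have h2 : ((b * D (n+1) - a * D n : ℤ) : ZMod hh) = 0 :=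
      (ZMod.intCast_zmod_eq_zero_iff_dvd _ _).mpr (hhmZ.trans (hD n))
    push_cast at h2
    calc η (n+1) = (v * (b:ZMod hh)) * η (n+1) := by rw [hv, one_mul]
      _ = v * ((b:ZMod hh) * η (n+1)) := by ring
      _ = v * ((a:ZMod hh) * η n) := by
            rw [show (b:ZMod hh) * η (n+1) = (a:ZMod hh) * η n by linear_combination h2]
      _ = v * (a : ZMod hh) * η n := by ring
  have hhD : ∀ n, (hh:ℤ) ∣ D n := by
    intro n
    induction n with
    | zero => exact hhmZ.trans h0
    | succ n ih =>
        rw [← ZMod.intCast_zmod_eq_zero_iff_dvd]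
        have : η n = 0 := (ZMod.intCast_zmod_eq_zero_iff_dvd _ _).mpr ih
        show η (n+1) = 0
        rw [hstep2 n, this, mul_zero]
  intro n
  have hcopZ : IsCoprime (g:ℤ) (hh:ℤ) := by
    rw [Int.isCoprime_iff_gcd_eq_one, Int.gcd_natCast_natCast]; exact hcop
  have := hcopZ.mul_dvd (hgD n) (hhD n)
  rwa [show ((g:ℤ) * hh) = (m:ℤ) by exact_mod_cast congrArg (Nat.cast : ℕ → ℤ) hmul] at this

theorem stmt_13 (m : ℕ) (hm : 2 ≤ m) (a b : ℤ) (f : ℕ → ℤ)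
    (d : ℕ) (hdval : d = Int.gcd a (Int.gcd b (m : ℤ))) :
    let A : ZMod m := (a : ZMod m)
    let B : ZMod m := (b : ZMod m)
    let F : ℕ → ZMod m := fun n => (f n : ZMod m)
    ({X : ℕ → ZMod m | ∀ n : ℕ, B * X (n + 1) = A * X n + F n}.Infinite ↔
      (d ≠ 1 ∧ ∀ n : ℕ, (d : ℤ) ∣ f n)) := by
  intro A B F
  haveI : NeZero m := ⟨by omega⟩
  have hmpos : 0 < m := by omega
  have hdg : (d:ℤ) ∣ ↑(Int.gcd b ↑m) := hdval ▸ (Int.gcd_dvd_right _ _)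
  have hda : (d:ℤ) ∣ a := hdval ▸ (Int.gcd_dvd_left _ _)
  have hdb : (d:ℤ) ∣ b := hdg.trans (Int.gcd_dvd_left _ _)
  have hdmZ : (d:ℤ) ∣ (m:ℤ) := hdg.trans (Int.gcd_dvd_right _ _)
  have hdm : d ∣ m := Int.ofNat_dvd.mp hdmZ
  have hdpos : 0 < d := Nat.pos_of_dvd_of_pos hdm hmpos
  have hcast : ∀ X : ℕ → ZMod m, ∀ k, (((X k).val : ℕ) : ZMod m) = X k :=
    fun X k => ZMod.natCast_rightInverse (X k)
  have hlift : ∀ X : ℕ → ZMod m,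
      (X ∈ {X : ℕ → ZMod m | ∀ n : ℕ, B * X (n + 1) = A * X n + F n}) →
      ∀ n, (m:ℤ) ∣ b * ((X (n+1)).val : ℤ) - (a * ((X n).val : ℤ) + f n) := by
    intro X hX n
    rw [← ZMod.intCast_zmod_eq_zero_iff_dvd]
    push_cast
    rw [hcast X, hcast X]
    have h := hX n
    show (b : ZMod m) * X (n+1) - ((a : ZMod m) * X n + ((f n : ℤ) : ZMod m)) = 0
    rw [show ((f n : ℤ) : ZMod m) = F n from rfl]
    rw [show (b : ZMod m) * X (n+1) = B * X (n+1) from rfl,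
        show (a : ZMod m) * X n = A * X n from rfl, h]
    ring
  constructor
  · -- Infinite → d ≠ 1 ∧ ∀ n, d ∣ f n
    intro hinf
    obtain ⟨X, hX⟩ := hinf.nonempty
    constructor
    · -- d ≠ 1
      intro hd1
      have h1 : Int.gcd a ↑(Int.gcd b ↑m) = 1 := by rw [← hdval]; exact hd1
      apply hinf
      apply Set.Finite.of_finite_image (f := fun X : ℕ → ZMod m => X 0) (Set.toFinite _)
      intro X1 hX1 X2 hX2 h0
      have h0' : X1 0 = X2 0 := h0
      set D : ℕ → ℤ := fun n => ((X1 n).val : ℤ) - ((X2 n).val : ℤ) with hDdef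
      have hD : ∀ n, (m:ℤ) ∣ b * D (n+1) - a * D n := by
        intro n
        have e1 := hlift X1 hX1 n
        have e2 := hlift X2 hX2 n
        have e3 : b * D (n+1) - a * D n =
            (b * ((X1 (n+1)).val : ℤ) - (a * ((X1 n).val : ℤ) + f n)) -
            (b * ((X2 (n+1)).val : ℤ) - (a * ((X2 n).val : ℤ) + f n)) := by
          simp only [hDdef]; ring
        rw [e3]
        exact dvd_sub e1 e2
      have h00 : (m:ℤ) ∣ D 0 := by
        have hv : D 0 = 0 := by simp only [hDdef]; rw [h0']; ring
        rw [hv]; exact dvd_zero _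
      have hDn := unique13 m hmpos a b h1 D hD h00
      funext n
      have h5 : ((D n : ℤ) : ZMod m) = 0 := (ZMod.intCast_zmod_eq_zero_iff_dvd _ _).mpr (hDn n)
      simp only [hDdef] at h5
      push_cast at h5
      rw [hcast X1, hcast X2] at h5
      exact sub_eq_zero.mp h5
    · -- d ∣ f n
      intro n
      have hE := hlift X hX n
      have h6 : (d:ℤ) ∣ b * ((X (n+1)).val : ℤ) - (a * ((X n).val : ℤ) + f n) :=
        hdmZ.trans hE
      have h7 : (d:ℤ) ∣ (b * ((X (n+1)).val : ℤ) - a * ((X n).val : ℤ)) -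
          (b * ((X (n+1)).val : ℤ) - (a * ((X n).val : ℤ) + f n)) :=
        dvd_sub (dvd_sub (hdb.mul_right _) (hda.mul_right _)) h6
      have h8 : (b * ((X (n+1)).val : ℤ) - a * ((X n).val : ℤ)) -
          (b * ((X (n+1)).val : ℤ) - (a * ((X n).val : ℤ) + f n)) = f n := by ring
      rwa [h8] at h7
  · -- converse
    rintro ⟨hd1, hdf⟩
    have hd2 : 2 ≤ d := by omega
    set m' : ℕ := m / d with hm'def
    have hm'd : d * m' = m := Nat.mul_div_cancel' hdm
    have hm'pos : 0 < m' := by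
      rcases Nat.eq_zero_or_pos m' with h0 | h
      · rw [h0, mul_zero] at hm'd; omega
      · exact h
    have hm'lt : m' < m := by nlinarith
    set a' : ℤ := a / d with ha'def
    set b' : ℤ := b / d with hb'def
    set f' : ℕ → ℤ := fun n => f n / d with hf'def
    have haa : a = (d:ℤ) * a' := (Int.mul_ediv_cancel' hda).symm
    have hbb : b = (d:ℤ) * b' := (Int.mul_ediv_cancel' hdb).symm
    have hff : ∀ n, f n = (d:ℤ) * f' n := fun n => (Int.mul_ediv_cancel' (hdf n)).symm
    have hmm : (m:ℤ) = (d:ℤ) * (m':ℤ) := by exact_mod_cast congrArg (Nat.cast : ℕ → ℤ) hm'd.symm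
    have hgcd' : Int.gcd a' ↑(Int.gcd b' ↑m') = 1 := by
      have e1 : Int.gcd b ↑m = d * Int.gcd b' (m':ℤ) := by
        rw [hbb, hmm, Int.gcd_mul_left]
        simp
      have e2 : (d : ℕ) = d * Int.gcd a' ↑(Int.gcd b' ↑m') := by
        conv_lhs => rw [hdval]
        rw [e1, haa]
        rw [show ((d * Int.gcd b' (m':ℤ) : ℕ) : ℤ) = (d:ℤ) * (Int.gcd b' (m':ℤ) : ℤ) by push_cast; ring]
        rw [Int.gcd_mul_left]
        simp
      have e3 : d * 1 = d * Int.gcd a' ↑(Int.gcd b' ↑m') := by omega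
      exact (Nat.eq_of_mul_eq_mul_left hdpos e3).symm
    obtain ⟨w, hw⟩ := exists13 m' hm'pos a' b' f' hgcd'
    have key : ∀ t : ℕ → ℤ, (∀ n, t n = 0 ∨ t n = (m':ℤ)) →
        (fun n => ((w n + t n : ℤ) : ZMod m)) ∈
          {X : ℕ → ZMod m | ∀ n : ℕ, B * X (n + 1) = A * X n + F n} := by
      intro t ht n
      have hdv : (m:ℤ) ∣ b * (w (n+1) + t (n+1)) - (a * (w n + t n) + f n) := by
        obtain ⟨s, hs⟩ := hw n
        have h2 : b * w (n+1) - (a * w n + f n) = (m:ℤ) * s := by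
          rw [hmm]
          linear_combination (d:ℤ) * hs + w (n+1) * hbb - w n * haa - hff n
        have h3 : (m:ℤ) ∣ b * t (n+1) := by
          rcases ht (n+1) with h | h
          · rw [h, mul_zero]; exact dvd_zero _
          · rw [h]
            exact ⟨b', by rw [hmm, hbb]; ring⟩
        have h4 : (m:ℤ) ∣ a * t n := by
          rcases ht n with h | h
          · rw [h, mul_zero]; exact dvd_zero _
          · rw [h]
            exact ⟨a', by rw [hmm, haa]; ring⟩
        have h5 : b * (w (n+1) + t (n+1)) - (a * (w n + t n) + f n) =
            (b * w (n+1) - (a * w n + f n)) + b * t (n+1) - a * t n := by ring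
        rw [h5]
        exact dvd_sub (dvd_add ⟨s, h2⟩ h3) h4
      have h0 : ((b * (w (n+1) + t (n+1)) - (a * (w n + t n) + f n) : ℤ) : ZMod m) = 0 :=
        (ZMod.intCast_zmod_eq_zero_iff_dvd _ _).mpr hdv
      push_cast at h0
      show (b : ZMod m) * ((w (n+1) + t (n+1) : ℤ) : ZMod m) =
        (a : ZMod m) * ((w n + t n : ℤ) : ZMod m) + ((f n : ℤ) : ZMod m)
      push_cast
      linear_combination h0
    set Φ : ℕ → (ℕ → ZMod m) :=
      fun N => fun n => ((w n + (if n < N then (m':ℤ) else 0) : ℤ) : ZMod m) with hΦ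
    have hne0 : ((m' : ℤ) : ZMod m) ≠ 0 := by
      intro h0
      have hdv := (ZMod.intCast_zmod_eq_zero_iff_dvd _ _).mp h0
      have := Int.le_of_dvd (by exact_mod_cast hm'pos) hdv
      have : m ≤ m' := by exact_mod_cast this
      omega
    have hmain : ∀ N1 N2, N1 < N2 → Φ N1 ≠ Φ N2 := by
      intro N1 N2 hlt hEq
      have h := congrFun hEq N1
      simp only [hΦ, lt_irrefl, if_false, if_neg (lt_irrefl N1), if_pos hlt] at h
      apply hne0
      push_cast at h ⊢
      linear_combination -h
    refine Set.infinite_of_injective_forall_mem (f := Φ) ?_ ?_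
    · intro N1 N2 hEq
      by_contra hne
      rcases lt_trichotomy N1 N2 with h | h | h
      · exact hmain N1 N2 h hEq
      · exact hne h
      · exact hmain N2 N1 h hEq.symm
    · intro N
      exact key (fun n => if n < N then (m':ℤ) else 0) (fun n => by by_cases h : n < N <;> simp [h])
end

section
/- There exists a sequence X : ℕ → ZMod m satisfying B * X (n+1) = A * X n + F n for all n ∈ ℕ if and only if d ∣ f n for all n ∈ ℕ. Equivalently, the equation has no solution if and only if d ∤ f n for some n ∈ ℕ. -/
/-- Auxiliary forward recursion used in the key lemma. -/
def auxZseq (u a : ℤ) (h : ℕ → ℤ) : ℕ → ℤ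
  | 0 => 0
  | n + 1 => u * (a * auxZseq u a h n - h n)

/-- Key arithmetic lemma: the recurrence `b x (n+1) ≡ a x n + f n [ZMOD m]`
has an integer solution as soon as `gcd (a, b, m) ∣ f n` for all `n`. -/
theorem aux_key : ∀ m : ℕ, 1 ≤ m → ∀ a b : ℤ, ∀ f : ℕ → ℤ,
    (∀ n, ((Int.gcd a (Int.gcd b (m : ℤ)) : ℤ)) ∣ f n) →
    ∃ x : ℕ → ℤ, ∀ n, (m : ℤ) ∣ b * x (n + 1) - a * x n - f n := by
  intro m
  induction m using Nat.strong_induction_on with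
  | _ m IH =>
    intro hm a b f hf
    rcases eq_or_lt_of_le hm with h1 | h2
    · -- m = 1
      refine ⟨fun _ => 0, fun n => ?_⟩
      rw [← h1]
      exact one_dvd _
    · -- m ≥ 2
      set p := m.minFac with hp
      have hpp : p.Prime := Nat.minFac_prime (by omega)
      have hppz : Prime (p : ℤ) := Nat.prime_iff_prime_int.mp hpp
      obtain ⟨m', hmm'⟩ := Nat.minFac_dvd m
      have hp2 : 2 ≤ p := hpp.two_le
      have hm'pos : 1 ≤ m' := by
        rcases Nat.eq_zero_or_pos m' with h | h
        · rw [h, Nat.mul_zero] at hmm'; omega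
        · exact h
      have hm'lt : m' < m := by
        calc m' < p * m' := by nlinarith
        _ = m := hmm'.symm
      have hmcast : (m : ℤ) = (p : ℤ) * (m' : ℤ) := by exact_mod_cast hmm'
      have hgcdmono : ((Int.gcd a (Int.gcd b (m' : ℤ)) : ℤ)) ∣
          ((Int.gcd a (Int.gcd b (m : ℤ)) : ℤ)) := by
        apply Int.dvd_coe_gcd (Int.gcd_dvd_left _ _)
        refine dvd_trans (Int.gcd_dvd_right _ _) ?_
        exact Int.dvd_coe_gcd (Int.gcd_dvd_left _ _)
          (dvd_trans (Int.gcd_dvd_right _ _) ⟨(p : ℤ), by rw [hmcast]; ring⟩)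
      have hd' : ∀ n, ((Int.gcd a (Int.gcd b (m' : ℤ)) : ℤ)) ∣ f n :=
        fun n => dvd_trans hgcdmono (hf n)
      by_cases hpb : (p : ℤ) ∣ b
      · by_cases hpa : (p : ℤ) ∣ a
        · -- case: p ∣ a and p ∣ b (and p ∣ m): divide everything by p
          obtain ⟨a₁, ha₁⟩ := hpa
          obtain ⟨b₁, hb₁⟩ := hpb
          have hpd : (p : ℤ) ∣ (Int.gcd a (Int.gcd b (m : ℤ)) : ℤ) := by
            apply Int.dvd_coe_gcd ⟨a₁, ha₁⟩
            exact Int.dvd_coe_gcd ⟨b₁, hb₁⟩ ⟨(m' : ℤ), hmcast⟩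
          have hpf : ∀ n, (p : ℤ) ∣ f n := fun n => dvd_trans hpd (hf n)
          choose f₁ hf₁ using hpf
          have hgcd : Int.gcd a (Int.gcd b (m : ℤ)) = p * Int.gcd a₁ (Int.gcd b₁ (m' : ℤ)) := by
            rw [ha₁, hb₁, hmcast, Int.gcd_mul_left, Int.natAbs_natCast]
            rw [Int.natCast_mul, Int.gcd_mul_left, Int.natAbs_natCast]
          have hf₁' : ∀ n, ((Int.gcd a₁ (Int.gcd b₁ (m' : ℤ)) : ℤ)) ∣ f₁ n := by
            intro n
            have h := hf n
            rw [hgcd, hf₁ n] at h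
            push_cast at h
            exact (mul_dvd_mul_iff_left (by exact_mod_cast hpp.ne_zero : (p : ℤ) ≠ 0)).mp h
          obtain ⟨x, hx⟩ := IH m' hm'lt hm'pos a₁ b₁ f₁ hf₁'
          refine ⟨x, fun n => ?_⟩
          obtain ⟨c, hc⟩ := hx n
          rw [hmcast, ha₁, hb₁, hf₁ n]
          exact ⟨c, by linear_combination (p : ℤ) * hc⟩
        · -- case: p ∣ b, p ∤ a : solve pointwise mod p after IH on m'
          obtain ⟨y, hy⟩ := IH m' hm'lt hm'pos a b f hd'
          choose h hh using hy
          obtain ⟨u, v, huv⟩ : IsCoprime ((p : ℤ)) a :=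
            (hppz.coprime_iff_not_dvd).mpr hpa
          obtain ⟨b₁, hb₁⟩ := hpb
          refine ⟨fun n => y n + (m' : ℤ) * (v * h n), fun n => ?_⟩
          rw [hmcast]
          refine ⟨u * h n + b₁ * v * h (n + 1), ?_⟩
          linear_combination hh n + ((m' : ℤ) * v * h (n + 1)) * hb₁ -
            ((m' : ℤ) * h n) * huv
      · -- case: p ∤ b : forward recursion mod p after IH on m'
        obtain ⟨y, hy⟩ := IH m' hm'lt hm'pos a b f hd'
        choose h hh using hy
        obtain ⟨u, v, huv⟩ : IsCoprime ((p : ℤ)) b :=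
          (hppz.coprime_iff_not_dvd).mpr hpb
        set z : ℕ → ℤ := auxZseq v a h with hz
        have hzrec : ∀ n, z (n + 1) = v * (a * z n - h n) := fun n => rfl
        refine ⟨fun n => y n + (m' : ℤ) * z n, fun n => ?_⟩
        rw [hmcast]
        refine ⟨-(u * (a * z n - h n)), ?_⟩
        linear_combination hh n + (b * (m' : ℤ)) * (hzrec n) +
          ((m' : ℤ) * (a * z n - h n)) * huv

theorem stmt_14 (m : ℕ) (hm : 2 ≤ m) (a b : ℤ) (f : ℕ → ℤ)
    (d : ℕ) (hdval : d = Int.gcd a (Int.gcd b (m : ℤ))) :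
    let A : ZMod m := (a : ZMod m)
    let B : ZMod m := (b : ZMod m)
    let F : ℕ → ZMod m := fun n => (f n : ZMod m)
    ((∃ X : ℕ → ZMod m, ∀ n : ℕ, B * X (n + 1) = A * X n + F n) ↔
      (∀ n : ℕ, (d : ℤ) ∣ f n)) ∧
    ((¬ ∃ X : ℕ → ZMod m, ∀ n : ℕ, B * X (n + 1) = A * X n + F n) ↔
      (∃ n : ℕ, ¬ (d : ℤ) ∣ f n)) := by
  intro A B F
  haveI : NeZero m := ⟨by omega⟩
  have hda : (d : ℤ) ∣ a := by rw [hdval]; exact Int.gcd_dvd_left _ _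
  have hdb : (d : ℤ) ∣ b := by
    rw [hdval]; exact dvd_trans (Int.gcd_dvd_right _ _) (Int.gcd_dvd_left _ _)
  have hdm : (d : ℤ) ∣ (m : ℤ) := by
    rw [hdval]; exact dvd_trans (Int.gcd_dvd_right _ _) (Int.gcd_dvd_right _ _)
  have main : (∃ X : ℕ → ZMod m, ∀ n : ℕ, B * X (n + 1) = A * X n + F n) ↔
      (∀ n : ℕ, (d : ℤ) ∣ f n) := by
    constructor
    · rintro ⟨X, hX⟩ n
      have hcast : ((b * ((X (n + 1)).val : ℤ) - a * ((X n).val : ℤ) - f n : ℤ) : ZMod m)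
          = 0 := by
        push_cast
        rw [ZMod.natCast_val, ZMod.natCast_val]
        simp only [ZMod.intCast_cast, ZMod.cast_id', id]
        rw [hX n]
        ring
      have hdvd : (m : ℤ) ∣ b * ((X (n + 1)).val : ℤ) - a * ((X n).val : ℤ) - f n :=
        (ZMod.intCast_zmod_eq_zero_iff_dvd _ m).mp hcast
      have h1 : (d : ℤ) ∣ b * ((X (n + 1)).val : ℤ) - a * ((X n).val : ℤ) - f n :=
        dvd_trans hdm hdvd
      have h2 : (d : ℤ) ∣ b * ((X (n + 1)).val : ℤ) - a * ((X n).val : ℤ) :=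
        dvd_sub (Dvd.dvd.mul_right hdb _) (Dvd.dvd.mul_right hda _)
      have := dvd_sub h2 h1
      simpa using this
    · intro hd
      obtain ⟨x, hx⟩ := aux_key m (by omega) a b f (by rw [← hdval]; exact hd)
      refine ⟨fun n => ((x n : ℤ) : ZMod m), fun n => ?_⟩
      have h2 : ((b * x (n + 1) - a * x n - f n : ℤ) : ZMod m) = 0 :=
        (ZMod.intCast_zmod_eq_zero_iff_dvd _ _).mpr (hx n)
      push_cast at h2
      show (b : ZMod m) * _ = (a : ZMod m) * _ + _
      linear_combination h2
  refine ⟨main, ?_⟩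
  rw [main, not_forall]
end

section
/- If A = (a : ZMod m) is a unit of ZMod m, then for every sequence f : ℕ → ℤ the equation B * X (n+1) = A * X n + F n (for all n ∈ ℕ) has at least one solution X : ℕ → ZMod m, and the set of all such solutions has exactly m₁ elements. -/
/-- Solution set of the recurrence `B * X (n+1) = A * X n + F n`. -/
def mySolSet {R : Type*} [CommRing R] (A B : R) (F : ℕ → R) : Set (ℕ → R) :=
  {X | ∀ n : ℕ, B * X (n + 1) = A * X n + F n}

lemma mySol_unique_of_unitB {R : Type*} [CommRing R] {A B : R} {F : ℕ → R} (hB : IsUnit B)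
    {X Y : ℕ → R} (hX : X ∈ mySolSet A B F) (hY : Y ∈ mySolSet A B F) (h0 : X 0 = Y 0) :
    X = Y := by
  funext n
  induction n with
  | zero => exact h0
  | succ n ih => exact hB.mul_left_cancel (by rw [hX n, hY n, ih])

/-- If `B` is a unit, the solution set is in bijection with `R` via `X ↦ X 0`. -/
noncomputable def mySolEquivOfUnit {R : Type*} [CommRing R] (A B : R) (F : ℕ → R)
    (hB : IsUnit B) : mySolSet A B F ≃ R where
  toFun X := X.1 0
  invFun x := ⟨fun n => Nat.rec x (fun n Xn => Ring.inverse B * (A * Xn + F n)) n, by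
    intro n
    show B * (Ring.inverse B * _) = _
    rw [← mul_assoc, Ring.mul_inverse_cancel _ hB, one_mul]⟩
  left_inv X := by
    have cancel : ∀ c : R, B * (Ring.inverse B * c) = c := fun c => by
      rw [← mul_assoc, Ring.mul_inverse_cancel _ hB, one_mul]
    apply Subtype.ext
    exact mySol_unique_of_unitB hB (fun n => cancel _) X.2 rfl
  right_inv x := rfl

lemma mySol_unique_of_nilpotent {R : Type*} [CommRing R] {A B : R} {F : ℕ → R}
    (hA : IsUnit A) {M : ℕ} (hB : B ^ M = 0) {X Y : ℕ → R}
    (hX : X ∈ mySolSet A B F) (hY : Y ∈ mySolSet A B F) : X = Y := by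
  have key : ∀ k n : ℕ, A ^ k * (X n - Y n) = B ^ k * (X (n + k) - Y (n + k)) := by
    intro k
    induction k with
    | zero => intro n; simp
    | succ k ih =>
      intro n
      have h1 : A * (X n - Y n) = B * (X (n + 1) - Y (n + 1)) := by
        have hx := hX n; have hy := hY n
        linear_combination hy - hx
      calc A ^ (k + 1) * (X n - Y n) = A ^ k * (A * (X n - Y n)) := by ring
        _ = A ^ k * (B * (X (n + 1) - Y (n + 1))) := by rw [h1]
        _ = B * (A ^ k * (X (n + 1) - Y (n + 1))) := by ring
        _ = B * (B ^ k * (X (n + 1 + k) - Y (n + 1 + k))) := by rw [ih]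
        _ = B ^ (k + 1) * (X (n + (k + 1)) - Y (n + (k + 1))) := by
            rw [show n + 1 + k = n + (k + 1) by omega]; ring
  funext n
  have h2 := key M n
  rw [hB, zero_mul] at h2
  have h3 : X n - Y n = 0 := ((hA.pow M).mul_right_eq_zero).mp h2
  exact sub_eq_zero.mp h3
 
lemma mySol_exists_of_nilpotent {R : Type*} [CommRing R] {A B : R} (F : ℕ → R)
    (hA : IsUnit A) {M : ℕ} (hB : B ^ (M + 1) = 0) :
    (fun n => -∑ i ∈ Finset.range (M + 1),
        Ring.inverse A ^ (i + 1) * B ^ i * F (n + i)) ∈ mySolSet A B F := by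
  intro n
  set A' := Ring.inverse A with hA'
  have hAA' : A * A' = 1 := Ring.mul_inverse_cancel _ hA
  have L : B * ∑ i ∈ Finset.range (M + 1), A' ^ (i + 1) * B ^ i * F (n + 1 + i)
      = ∑ i ∈ Finset.range M, A' ^ (i + 1) * B ^ (i + 1) * F (n + 1 + i) := by
    rw [Finset.mul_sum, Finset.sum_range_succ]
    have h0 : B * (A' ^ (M + 1) * B ^ M * F (n + 1 + M)) = 0 := by
      have : B * (A' ^ (M + 1) * B ^ M * F (n + 1 + M))
          = A' ^ (M + 1) * (B ^ (M + 1) * F (n + 1 + M)) := by ring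
      rw [this, hB, zero_mul, mul_zero]
    rw [h0, add_zero]
    exact Finset.sum_congr rfl fun i _ => by ring
  have Rr : A * ∑ i ∈ Finset.range (M + 1), A' ^ (i + 1) * B ^ i * F (n + i)
      = (∑ i ∈ Finset.range M, A' ^ (i + 1) * B ^ (i + 1) * F (n + 1 + i)) + F n := by
    rw [Finset.mul_sum, Finset.sum_range_succ']
    congr 1
    · refine Finset.sum_congr rfl fun i _ => ?_
      rw [show n + (i + 1) = n + 1 + i by omega]
      calc A * (A' ^ (i + 1 + 1) * B ^ (i + 1) * F (n + 1 + i))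
          = (A * A') * (A' ^ (i + 1) * B ^ (i + 1) * F (n + 1 + i)) := by ring
        _ = A' ^ (i + 1) * B ^ (i + 1) * F (n + 1 + i) := by rw [hAA', one_mul]
    · calc A * (A' ^ (0 + 1) * B ^ 0 * F (n + 0))
          = (A * A') * F n := by ring
        _ = F n := by rw [hAA', one_mul]
  show B * (-∑ i ∈ Finset.range (M + 1), A' ^ (i + 1) * B ^ i * F (n + 1 + i))
      = A * (-∑ i ∈ Finset.range (M + 1), A' ^ (i + 1) * B ^ i * F (n + i)) + F n
  rw [mul_neg, mul_neg, L, Rr]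
  ring

/-- Componentwise splitting of the solution set over a product ring. -/
def mySolEquivProd {R₁ R₂ : Type*} [CommRing R₁] [CommRing R₂] (A B : R₁ × R₂)
    (F : ℕ → R₁ × R₂) :
    mySolSet A B F ≃ mySolSet A.1 B.1 (fun n => (F n).1) × mySolSet A.2 B.2 (fun n => (F n).2) where
  toFun X := (⟨fun n => (X.1 n).1, fun n => congrArg Prod.fst (X.2 n)⟩,
              ⟨fun n => (X.1 n).2, fun n => congrArg Prod.snd (X.2 n)⟩)
  invFun p := ⟨fun n => (p.1.1 n, p.2.1 n), fun n => Prod.ext (p.1.2 n) (p.2.2 n)⟩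
  left_inv X := rfl
  right_inv p := rfl

/-- Transport of the solution set along a ring equivalence. -/
def mySolEquivCongr {R S : Type*} [CommRing R] [CommRing S] (e : R ≃+* S) (A B : R)
    (F : ℕ → R) :
    mySolSet A B F ≃ mySolSet (e A) (e B) (fun n => e (F n)) :=
  (Equiv.piCongrRight fun _ : ℕ => e.toEquiv).subtypeEquiv (by
    intro X
    constructor
    · intro h n
      show e B * e (X (n + 1)) = e A * e (X n) + e (F n)
      rw [← map_mul, ← map_mul, ← map_add, h n]
    · intro h n
      apply e.injective
      rw [map_add, map_mul, map_mul]
      exact h n)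

theorem stmt_15 (m : ℕ) (hm : 2 ≤ m) (a b : ℤ)
    (m₁ : ℕ)
    (hm₁ : m₁ = ∏ p ∈ m.primeFactors.filter (fun p : ℕ => ¬ ((p : ℤ) ∣ b)),
      p ^ (m.factorization p))
    (hA : IsUnit ((a : ZMod m))) (f : ℕ → ℤ) :
    let A : ZMod m := (a : ZMod m)
    let B : ZMod m := (b : ZMod m)
    let F : ℕ → ZMod m := fun n => (f n : ZMod m)
    let S : Set (ℕ → ZMod m) := {X | ∀ n : ℕ, B * X (n + 1) = A * X n + F n}
    S.Nonempty ∧ S.Finite ∧ S.ncard = m₁ := by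
  intro A B F S
  have hm0 : m ≠ 0 := by omega
  set m₂ : ℕ := ∏ p ∈ m.primeFactors.filter (fun p : ℕ => (p : ℤ) ∣ b),
      p ^ (m.factorization p) with hm₂
  -- m = m₂ * m₁
  have hmm : m₂ * m₁ = m := by
    rw [hm₁, hm₂, Finset.prod_filter_mul_prod_filter_not]
    have := Nat.factorization_prod_pow_eq_self hm0
    rwa [Finsupp.prod, Nat.support_factorization] at this
  -- coprimality
  have hco : Nat.Coprime m₁ m₂ := by
    rw [hm₁, hm₂, Nat.coprime_prod_left_iff]
    intro p hp
    rw [Nat.coprime_prod_right_iff]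
    intro q hq
    simp only [Finset.mem_filter, Nat.mem_primeFactors] at hp hq
    apply Nat.Coprime.pow
    rw [Nat.coprime_primes hp.1.1 hq.1.1]
    rintro rfl
    exact hp.2 hq.2
  have hm₁0 : m₁ ≠ 0 := by
    rw [hm₁]
    exact Finset.prod_ne_zero_iff.mpr fun p hp => by
      simp only [Finset.mem_filter, Nat.mem_primeFactors] at hp
      exact pow_ne_zero _ hp.1.1.ne_zero
  have hm₁dvd : m₁ ∣ m := ⟨m₂, by rw [← hmm, mul_comm]⟩
  have hm₂dvd : m₂ ∣ m := ⟨m₁, hmm.symm⟩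
  -- a ring equivalence onto the product
  have hmeq : m = m₁ * m₂ := by rw [mul_comm m₁ m₂]; exact hmm.symm
  have e : ZMod m ≃+* ZMod m₁ × ZMod m₂ := by
    rw [hmeq]; exact ZMod.chineseRemainder hco
  -- b is a unit mod m₁
  have hBunit : IsUnit ((b : ZMod m₁)) := by
    have hcop : Nat.Coprime b.natAbs m₁ := by
      rw [hm₁, Nat.coprime_prod_right_iff]
      intro p hp
      simp only [Finset.mem_filter, Nat.mem_primeFactors] at hp
      have hpb : ¬ p ∣ b.natAbs := fun h => hp.2 (Int.natCast_dvd.mpr h)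
      exact (Nat.coprime_comm.mp ((hp.1.1.coprime_iff_not_dvd).mpr hpb)).pow_right _
    have hu : IsUnit ((b.natAbs : ZMod m₁)) := (ZMod.isUnit_iff_coprime _ _).mpr hcop
    rcases Int.natAbs_eq b with h | h
    · rw [h, Int.cast_natCast]; exact hu
    · rw [h, Int.cast_neg, Int.cast_natCast]; exact hu.neg
  -- b is nilpotent mod m₂
  have hBnil : ((b : ZMod m₂)) ^ m = 0 := by
    have hdvd : (m₂ : ℤ) ∣ b ^ m := by
      have : ((m₂ : ℕ) : ℤ) = ∏ p ∈ m.primeFactors.filter (fun p : ℕ => (p : ℤ) ∣ b),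
          ((p : ℤ)) ^ (m.factorization p) := by
        rw [hm₂]; push_cast; ring
      rw [this]
      apply Finset.prod_dvd_of_coprime
      · intro p hp q hq hpq
        simp only [Finset.coe_filter, Set.mem_setOf_eq, Nat.mem_primeFactors] at hp hq
        apply IsCoprime.pow
        rw [Nat.isCoprime_iff_coprime]
        exact (Nat.coprime_primes hp.1.1 hq.1.1).mpr hpq
      · intro p hp
        simp only [Finset.mem_filter, Nat.mem_primeFactors] at hp
        calc ((p : ℤ)) ^ m.factorization p ∣ (p : ℤ) ^ m :=
              pow_dvd_pow _ (le_of_lt (Nat.factorization_lt p hm0))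
          _ ∣ b ^ m := pow_dvd_pow_of_dvd hp.2 m
    calc ((b : ZMod m₂)) ^ m = ((b ^ m : ℤ) : ZMod m₂) := by push_cast; ring
      _ = 0 := (ZMod.intCast_zmod_eq_zero_iff_dvd _ _).mpr hdvd
  -- a is a unit in the product
  have hAe : e ((a : ZMod m)) = ((a : ZMod m₁), (a : ZMod m₂)) := by
    rw [map_intCast]
    exact Prod.ext (Prod.fst_intCast a) (Prod.snd_intCast a)
  have hBe : e ((b : ZMod m)) = ((b : ZMod m₁), (b : ZMod m₂)) := by
    rw [map_intCast]
    exact Prod.ext (Prod.fst_intCast b) (Prod.snd_intCast b)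
  have hFe : ∀ n, e ((f n : ZMod m)) = ((f n : ZMod m₁), (f n : ZMod m₂)) := by
    intro n
    rw [map_intCast]
    exact Prod.ext (Prod.fst_intCast _) (Prod.snd_intCast _)
  have hA1 : IsUnit ((a : ZMod m₁)) := by
    have := (hA.map e.toRingHom).map (RingHom.fst (ZMod m₁) (ZMod m₂))
    rwa [RingEquiv.toRingHom_eq_coe, RingHom.coe_coe, hAe] at this
  have hA2 : IsUnit ((a : ZMod m₂)) := by
    have := (hA.map e.toRingHom).map (RingHom.snd (ZMod m₁) (ZMod m₂))
    rwa [RingEquiv.toRingHom_eq_coe, RingHom.coe_coe, hAe] at this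
  -- package
  have hSdef : S = mySolSet A B F := rfl
  -- the chain of equivalences
  have E1 : mySolSet A B F ≃ mySolSet (e A) (e B) (fun n => e (F n)) :=
    mySolEquivCongr e A B F
  have hset : mySolSet (e A) (e B) (fun n => e (F n))
      = mySolSet ((a : ZMod m₁), (a : ZMod m₂)) ((b : ZMod m₁), (b : ZMod m₂))
        (fun n => ((f n : ZMod m₁), (f n : ZMod m₂))) := by
    show mySolSet (e ((a : ZMod m))) (e ((b : ZMod m))) (fun n => e ((f n : ZMod m))) = _
    rw [hAe, hBe, show (fun n => e ((f n : ZMod m)))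
      = fun n => ((f n : ZMod m₁), (f n : ZMod m₂)) from funext hFe]
  have E2 := mySolEquivProd ((a : ZMod m₁), (a : ZMod m₂)) ((b : ZMod m₁), (b : ZMod m₂))
    (fun n => ((f n : ZMod m₁), (f n : ZMod m₂)))
  have E3 : mySolSet (a : ZMod m₁) (b : ZMod m₁) (fun n => (f n : ZMod m₁)) ≃ ZMod m₁ :=
    mySolEquivOfUnit _ _ _ hBunit
  -- the second factor is a singleton
  obtain ⟨M, hM⟩ : ∃ M : ℕ, m = M + 1 := ⟨m - 1, by omega⟩
  have hBnil' : ((b : ZMod m₂)) ^ (M + 1) = 0 := by rw [← hM]; exact hBnil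
  set X₀ : ℕ → ZMod m₂ := fun n => -∑ i ∈ Finset.range (M + 1),
      Ring.inverse ((a : ZMod m₂)) ^ (i + 1) * ((b : ZMod m₂)) ^ i * ((f (n + i) : ZMod m₂))
    with hX₀
  have hX₀mem : X₀ ∈ mySolSet (a : ZMod m₂) (b : ZMod m₂) (fun n => (f n : ZMod m₂)) :=
    mySol_exists_of_nilpotent _ hA2 hBnil'
  have hS₂ : mySolSet (a : ZMod m₂) (b : ZMod m₂) (fun n => (f n : ZMod m₂)) = {X₀} := by
    ext Y
    simp only [Set.mem_singleton_iff]
    constructor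
    · intro hY
      exact mySol_unique_of_nilpotent hA2 hBnil' hY hX₀mem
    · rintro rfl; exact hX₀mem
  -- combined equivalence
  have E4 : mySolSet (a : ZMod m₂) (b : ZMod m₂) (fun n => (f n : ZMod m₂)) ≃ PUnit.{1} := by
    rw [hS₂]; exact (Equiv.Set.singleton X₀ : _ ≃ PUnit.{1})
  have E : (S : Set (ℕ → ZMod m)) ≃ ZMod m₁ × PUnit.{1} := by
    rw [hSdef]
    exact ((E1.trans (Equiv.setCongr hset)).trans E2).trans (Equiv.prodCongr E3 E4)
  haveI : NeZero m₁ := ⟨hm₁0⟩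
  haveI : Finite ↥S := Finite.of_equiv _ E.symm
  have hfin : S.Finite := Set.finite_coe_iff.mp inferInstance
  have hcard : S.ncard = m₁ := by
    rw [← Nat.card_coe_set_eq, Nat.card_congr E, Nat.card_prod, Nat.card_zmod]
    simp
  refine ⟨?_, hfin, hcard⟩
  rw [hSdef]
  have : Nonempty ↥(mySolSet A B F) := Nonempty.intro (E.symm ⟨0, PUnit.unit⟩)
  exact Set.nonempty_coe_sort.mp this
end

section
/- There is exactly one sequence X : ℕ → ZMod m satisfying B * X (n+1) = A * X n + F n for all n ∈ ℕ if and only if A = (a : ZMod m) is a unit of ZMod m and B = (b : ZMod m) is nilpotent; equivalently, if and only if d = 1 and m₁ = 1. -/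
private lemma unit_iff (m : ℕ) (a : ℤ) [NeZero m] : IsUnit ((a : ZMod m)) ↔ Int.gcd a m = 1 := by
  have hg : Int.gcd a (m:ℤ) = a.natAbs.gcd m := by simp [Int.gcd]
  have hiff := ZMod.isUnit_iff_coprime a.natAbs m
  unfold Nat.Coprime at hiff
  rw [hg, ← hiff]
  rcases Int.natAbs_eq a with h | h
  · constructor
    · intro hu; rwa [h, Int.cast_natCast] at hu
    · intro hu; rw [h, Int.cast_natCast]; exact hu
  · constructor
    · intro hu; rw [h, Int.cast_neg, Int.cast_natCast, IsUnit.neg_iff] at hu; exact hu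
    · intro hu; rw [h, Int.cast_neg, Int.cast_natCast, IsUnit.neg_iff]; exact hu

private lemma nat_dvd_pow_self (m c : ℕ) (hm : m ≠ 0) (h : ∀ p ∈ m.primeFactors, p ∣ c) :
    m ∣ c ^ m := by
  rcases eq_or_ne c 0 with rfl | hc
  · simp [zero_pow hm]
  · rw [← Nat.factorization_le_iff_dvd hm (pow_ne_zero _ hc)]
    intro p
    rw [Nat.factorization_pow, Finsupp.smul_apply, smul_eq_mul]
    by_cases hp : p ∈ m.primeFactors
    · have hpp := Nat.prime_of_mem_primeFactors hp
      have h1 : 1 ≤ c.factorization p := hpp.factorization_pos_of_dvd hc (h p hp)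
      have h2 : m.factorization p < m := Nat.factorization_lt p hm
      nlinarith
    · have h0 : m.factorization p = 0 := by
        rw [Nat.factorization_eq_zero_iff]
        simp only [Nat.mem_primeFactors, not_and, not_and_or] at hp ⊢
        tauto
      omega

private lemma nil_iff (m : ℕ) [NeZero m] (b : ℤ) :
    IsNilpotent ((b : ZMod m)) ↔ ∀ p ∈ m.primeFactors, (p : ℤ) ∣ b := by
  constructor
  · rintro ⟨k, hk⟩ p hp
    have hmd : (m : ℤ) ∣ b ^ k := by
      rw [← ZMod.intCast_zmod_eq_zero_iff_dvd]
      push_cast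
      exact hk
    have hpp := Nat.prime_of_mem_primeFactors hp
    have hpi : Prime (p : ℤ) := Nat.prime_iff_prime_int.mp hpp
    exact hpi.dvd_of_dvd_pow (dvd_trans (Int.natCast_dvd_natCast.mpr
      (Nat.dvd_of_mem_primeFactors hp)) hmd)
  · intro h
    refine ⟨m, ?_⟩
    have h0 : ((b ^ m : ℤ) : ZMod m) = 0 := by
      rw [ZMod.intCast_zmod_eq_zero_iff_dvd, Int.natCast_dvd, Int.natAbs_pow]
      exact nat_dvd_pow_self m b.natAbs (NeZero.ne m) (fun p hp => by
        rw [← Int.natCast_dvd]; exact h p hp)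
    push_cast at h0
    exact h0

private lemma hom_add_zero {R : Type*} [CommRing R] {A B : R} {F : ℕ → R}
    (h : ∃! X : ℕ → R, ∀ n : ℕ, B * X (n + 1) = A * X n + F n)
    (Z : ℕ → R) (hZ : ∀ n : ℕ, B * Z (n + 1) = A * Z n) : Z = 0 := by
  obtain ⟨X, hX, hu⟩ := h
  have h1 : (fun n => X n + Z n) = X := hu _ (fun n => by
    rw [mul_add, hX n, mul_add, hZ n]; ring)
  funext n
  have := congrFun h1 n
  simp only [Pi.zero_apply]
  linear_combination this

private lemma exu_of_unit_nil {R : Type*} [CommRing R] (A B : R) (F : ℕ → R)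
    (hA : IsUnit A) (hB : IsNilpotent B) :
    ∃! X : ℕ → R, ∀ n : ℕ, B * X (n + 1) = A * X n + F n := by
  obtain ⟨u, hu⟩ := hA
  obtain ⟨k, hk0⟩ := hB
  have hk : B ^ (k + 1) = 0 := by rw [pow_succ, hk0, zero_mul]
  set v : R := ((u⁻¹ : Rˣ) : R) with hv
  have hAv : A * v = 1 := by rw [← hu, hv]; exact_mod_cast u.mul_inv
  -- the candidate solution
  set X : ℕ → R := fun n => -∑ i ∈ Finset.range (k + 1), v ^ (i + 1) * B ^ i * F (n + i)
    with hX
  have hXsol : ∀ n : ℕ, B * X (n + 1) = A * X n + F n := by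
    intro n
    rw [hX]
    simp only [mul_neg, Finset.mul_sum]
    have hL : ∀ i ∈ Finset.range (k + 1),
        B * (v ^ (i + 1) * B ^ i * F (n + 1 + i)) = v ^ (i + 1) * B ^ (i + 1) * F (n + 1 + i) :=
      fun i _ => by rw [pow_succ]; ring
    have hR : ∀ i ∈ Finset.range (k + 1),
        A * (v ^ (i + 1) * B ^ i * F (n + i)) = v ^ i * B ^ i * F (n + i) := fun i _ => by
      rw [pow_succ]
      calc A * (v ^ i * v * B ^ i * F (n + i)) = (A * v) * (v ^ i * B ^ i * F (n + i)) := by ring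
        _ = v ^ i * B ^ i * F (n + i) := by rw [hAv, one_mul]
    rw [Finset.sum_congr rfl hL, Finset.sum_congr rfl hR]
    rw [Finset.sum_range_succ _ k, Finset.sum_range_succ' (fun i => v ^ i * B ^ i * F (n + i)) k]
    simp only [pow_succ, hk]
    have harg : ∀ i, n + (i + 1) = n + 1 + i := fun i => by omega
    have : (∑ i ∈ Finset.range k, v ^ (i + 1) * B ^ (i + 1) * F (n + (i + 1)))
        = ∑ i ∈ Finset.range k, v ^ (i + 1) * B ^ (i + 1) * F (n + 1 + i) :=
      Finset.sum_congr rfl (fun i _ => by rw [harg i])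
    simp only [pow_succ] at this
    rw [this]
    simp
  refine ⟨X, hXsol, ?_⟩
  intro Y hY
  have key : ∀ j n : ℕ, Y n - X n = v ^ j * B ^ j * (Y (n + j) - X (n + j)) := by
    intro j
    induction j with
    | zero => intro n; simp
    | succ j ih =>
      intro n
      have step : Y (n + j) - X (n + j) = v * B * (Y (n + j + 1) - X (n + j + 1)) := by
        have e1 : B * Y (n + j + 1) = A * Y (n + j) + F (n + j) := hY (n + j)
        have e2 : B * X (n + j + 1) = A * X (n + j) + F (n + j) := hXsol (n + j)
        calc Y (n + j) - X (n + j) = (A * v) * (Y (n + j) - X (n + j)) := by rw [hAv]; ring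
          _ = v * (A * Y (n + j) + F (n + j) - (A * X (n + j) + F (n + j))) := by ring
          _ = v * (B * Y (n + j + 1) - B * X (n + j + 1)) := by rw [e1, e2]
          _ = v * B * (Y (n + j + 1) - X (n + j + 1)) := by ring
      rw [ih n, step]
      have : n + j + 1 = n + (j + 1) := by omega
      rw [this, pow_succ, pow_succ]
      ring
  funext n
  have := key (k + 1) n
  rw [hk] at this
  have h0 : Y n - X n = 0 := by simpa using this
  exact sub_eq_zero.mp h0


theorem stmt_16 (m : ℕ) (hm : 2 ≤ m) (a b : ℤ) (f : ℕ → ℤ)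
    (d : ℕ) (hdval : d = Int.gcd a (Int.gcd b (m : ℤ)))
    (m₁ : ℕ)
    (hm₁ : m₁ = ∏ p ∈ m.primeFactors.filter (fun p : ℕ => ¬ ((p : ℤ) ∣ b)),
      p ^ (m.factorization p)) :
    let A : ZMod m := (a : ZMod m)
    let B : ZMod m := (b : ZMod m)
    let F : ℕ → ZMod m := fun n => (f n : ZMod m)
    ((∃! X : ℕ → ZMod m, ∀ n : ℕ, B * X (n + 1) = A * X n + F n) ↔
      (IsUnit A ∧ IsNilpotent B)) ∧
    ((∃! X : ℕ → ZMod m, ∀ n : ℕ, B * X (n + 1) = A * X n + F n) ↔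
      (d = 1 ∧ m₁ = 1)) := by
  haveI : NeZero m := ⟨by omega⟩
  intro A B F
  have hAB : (∃! X : ℕ → ZMod m, ∀ n : ℕ, B * X (n + 1) = A * X n + F n) ↔
      (IsUnit A ∧ IsNilpotent B) := by
    constructor
    · intro h
      constructor
      · -- IsUnit A
        by_contra hA
        have hA' : ¬ Int.gcd a m = 1 := fun hg => hA ((unit_iff m a).mpr hg)
        obtain ⟨p, hpp, hpg⟩ := Nat.exists_prime_and_dvd hA'
        have hpa : (p : ℤ) ∣ a :=
          dvd_trans (Int.natCast_dvd_natCast.mpr hpg) (Int.gcd_dvd_left _ _)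
        have hpm : p ∣ m := by
          have : (p : ℤ) ∣ (m : ℤ) :=
            dvd_trans (Int.natCast_dvd_natCast.mpr hpg) (Int.gcd_dvd_right _ _)
          exact_mod_cast this
        set Z : ℕ → ZMod m := fun n => if n = 0 then ((m / p : ℕ) : ZMod m) else 0 with hZdef
        have hZ : ∀ n : ℕ, B * Z (n + 1) = A * Z n := by
          intro n
          match n with
          | 0 =>
            have hz1 : Z 1 = 0 := by simp [hZdef]
            have hz0 : Z 0 = ((m / p : ℕ) : ZMod m) := by simp [hZdef]
            rw [hz1, hz0, mul_zero]
            have hcast : ((a * ((m / p : ℕ) : ℤ) : ℤ) : ZMod m) = A * ((m / p : ℕ) : ZMod m) := by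
              rw [Int.cast_mul, Int.cast_natCast]
            rw [← hcast]
            symm
            rw [ZMod.intCast_zmod_eq_zero_iff_dvd]
            obtain ⟨a', ha'⟩ := hpa
            refine ⟨a', ?_⟩
            have hmp : ((m / p : ℕ) : ℤ) * (p : ℤ) = (m : ℤ) := by
              exact_mod_cast congrArg (Nat.cast : ℕ → ℤ) (Nat.div_mul_cancel hpm)
            linear_combination ((m / p : ℕ) : ℤ) * ha' + a' * hmp
          | Nat.succ k =>
            have hz1 : Z (k + 1 + 1) = 0 := by simp [hZdef]
            have hz2 : Z (k + 1) = 0 := by simp [hZdef]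
            rw [hz1, hz2, mul_zero, mul_zero]
        have hz := hom_add_zero h Z hZ
        have hz0 : ((m / p : ℕ) : ZMod m) = 0 := by
          have := congrFun hz 0
          simpa [hZdef] using this
        rw [ZMod.natCast_eq_zero_iff] at hz0
        have h1 : 0 < m / p := Nat.div_pos (Nat.le_of_dvd (by omega) hpm) hpp.pos
        have h2 : m / p < m := Nat.div_lt_self (by omega) hpp.one_lt
        exact absurd (Nat.le_of_dvd h1 hz0) (by omega)
      · -- IsNilpotent B
        refine (nil_iff m b).mpr ?_
        intro p hp
        by_contra hpb
        have hpp := Nat.prime_of_mem_primeFactors hp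
        have hpm := Nat.dvd_of_mem_primeFactors hp
        set e := m.factorization p with he'
        have he : 0 < e := hpp.factorization_pos_of_dvd (by omega) hpm
        set q := p ^ e with hq'
        have hq : q ∣ m := Nat.ordProj_dvd m p
        set r := m / q with hr
        have hqr : q * r = m := Nat.mul_div_cancel' hq
        have hcopn : p.Coprime b.natAbs :=
          (Nat.Prime.coprime_iff_not_dvd hpp).mpr (fun hd => hpb (Int.natCast_dvd.mpr hd))
        have hc1 : IsCoprime ((p : ℤ)) b := by
          rw [Int.isCoprime_iff_gcd_eq_one]
          simpa [Int.gcd] using hcopn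
        have hcop : IsCoprime ((q : ℕ) : ℤ) b := by
          have : IsCoprime ((p : ℤ) ^ e) b := hc1.pow_left
          have hcast : ((q : ℕ) : ℤ) = (p : ℤ) ^ e := by
            rw [hq']; push_cast; ring
          rwa [hcast]
        obtain ⟨s, t, hst⟩ := hcop
        have hqd : ((q : ℤ)) ∣ t * b - 1 := ⟨-s, by linear_combination hst⟩
        obtain ⟨w, hw⟩ := hqd
        set Z : ℕ → ZMod m := fun n => ((r * (t * a) ^ n : ℤ) : ZMod m) with hZdef
        have hZ : ∀ n : ℕ, B * Z (n + 1) = A * Z n := by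
          intro n
          have hsub : B * Z (n + 1) - A * Z n =
              ((b * ((r : ℤ) * (t * a) ^ (n + 1)) - a * ((r : ℤ) * (t * a) ^ n) : ℤ) : ZMod m) := by
            simp only [hZdef]
            push_cast
            ring
          have hdvd : (m : ℤ) ∣ (b * ((r : ℤ) * (t * a) ^ (n + 1)) - a * ((r : ℤ) * (t * a) ^ n)) := by
            refine ⟨w * (a * (t * a) ^ n), ?_⟩
            have hqr' : ((q : ℤ)) * (r : ℤ) = (m : ℤ) := by exact_mod_cast hqr
            linear_combination ((r : ℤ) * (t * a) ^ n * a) * hw + (w * a * (t * a) ^ n) * hqr'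
          have h0 : B * Z (n + 1) - A * Z n = 0 := by
            rw [hsub, ZMod.intCast_zmod_eq_zero_iff_dvd]
            exact hdvd
          linear_combination h0
        have hz := hom_add_zero h Z hZ
        have hz0 : ((r : ℕ) : ZMod m) = 0 := by
          have := congrFun hz 0
          simpa [hZdef] using this
        rw [ZMod.natCast_eq_zero_iff] at hz0
        have hq1 : 1 < q := one_lt_pow' hpp.one_lt he.ne'
        have h1 : 0 < r := Nat.div_pos (Nat.le_of_dvd (by omega) hq) (by omega)
        have h2 : r < m := Nat.div_lt_self (by omega) hq1
        exact absurd (Nat.le_of_dvd h1 hz0) (by omega)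
    · rintro ⟨h1, h2⟩
      exact exu_of_unit_nil A B F h1 h2
  have keym₁ : m₁ = 1 ↔ ∀ p ∈ m.primeFactors, (p : ℤ) ∣ b := by
    rw [hm₁]
    constructor
    · intro h1 p hp
      by_contra hpb
      have hmem : p ∈ m.primeFactors.filter (fun p : ℕ => ¬ ((p : ℤ) ∣ b)) :=
        Finset.mem_filter.mpr ⟨hp, hpb⟩
      have hd : p ^ m.factorization p ∣ 1 := h1 ▸ Finset.dvd_prod_of_mem _ hmem
      have hpe := Nat.dvd_one.mp hd
      have hpp := Nat.prime_of_mem_primeFactors hp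
      have he : 0 < m.factorization p :=
        hpp.factorization_pos_of_dvd (by omega) (Nat.dvd_of_mem_primeFactors hp)
      rw [pow_eq_one_iff, or_iff_left he.ne'] at hpe
      exact hpp.ne_one hpe
    · intro h1
      have : m.primeFactors.filter (fun p : ℕ => ¬ ((p : ℤ) ∣ b)) = ∅ :=
        Finset.filter_eq_empty_iff.mpr (fun {p} hp => not_not_intro (h1 p hp))
      rw [this, Finset.prod_empty]
  refine ⟨hAB, hAB.trans ?_⟩
  constructor
  · rintro ⟨hu, hn⟩
    have hg : Int.gcd a m = 1 := (unit_iff m a).mp hu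
    have hP : ∀ p ∈ m.primeFactors, (p : ℤ) ∣ b := (nil_iff m b).mp hn
    refine ⟨?_, keym₁.mpr hP⟩
    rw [hdval]
    have hco : IsCoprime a (m : ℤ) := Int.isCoprime_iff_gcd_eq_one.mpr hg
    have hco2 : IsCoprime a ((Int.gcd b m : ℕ) : ℤ) :=
      hco.of_isCoprime_of_dvd_right (Int.gcd_dvd_right _ _)
    exact Int.isCoprime_iff_gcd_eq_one.mp hco2
  · rintro ⟨hd, hm1⟩
    have hP := keym₁.mp hm1
    refine ⟨(unit_iff m a).mpr ?_, (nil_iff m b).mpr hP⟩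
    by_contra hg
    obtain ⟨p, hpp, hpd⟩ := Nat.exists_prime_and_dvd hg
    have hpa : (p : ℤ) ∣ a := dvd_trans (Int.natCast_dvd_natCast.mpr hpd) (Int.gcd_dvd_left _ _)
    have hpm : p ∣ m := by
      have : (p : ℤ) ∣ (m : ℤ) := dvd_trans (Int.natCast_dvd_natCast.mpr hpd) (Int.gcd_dvd_right _ _)
      exact_mod_cast this
    have hpb : (p : ℤ) ∣ b := hP p (Nat.mem_primeFactors.mpr ⟨hpp, hpm, by omega⟩)
    have h1 : (p : ℤ) ∣ ((Int.gcd b m : ℕ) : ℤ) := Int.dvd_coe_gcd hpb (by exact_mod_cast hpm)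
    have h2 : (p : ℤ) ∣ ((Int.gcd a ((Int.gcd b m : ℕ) : ℤ) : ℕ) : ℤ) := Int.dvd_coe_gcd hpa h1
    rw [← hdval, hd] at h2
    have : p ∣ 1 := by exact_mod_cast h2
    exact hpp.ne_one (Nat.dvd_one.mp this)
end
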